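/- arXiv:2402.11516 — 5 statements merged into one kernel-verified Lean document; each statement's English description precedes it below -/
import Mathlib

section
/- Suppose (u, θ) ∈ C^∞([0,T]×ℝ²) solves the system ∂_t θ + u·∇θ + (1 + (γ−1)θ) ∇·u = 0, ∂_t u + (μ/(1+t)) u + u·∇u + ∇θ = 0 (with γ > 1 and μ > 0), and that 1 + (γ−1)θ(t,x) > 0 for all (t,x) ∈ [0,T]×ℝ². Then θ satisfies the damped wave equation ∂_t²θ − Δθ + (μ/(1+t)) ∂_t θ = F_θ, where F_θ = −(μ/(1+t)) u·∇θ − Σ_{i,j=1}^{2} u_i (∂_{x_i}u_j)(∂_{x_j}θ) − (∂_t u)·∇θ + (1 + (γ−1)θ)[ Σ_{i,j=1}^{2} (∂_{x_i}u_j)(∂_{x_j}u_i) + (γ−1)|∇·u|² ] + (γ−1) θ Δθ − 2 u·∇∂_t θ − Σ_{i,j=1}^{2} u_i u_j ∂_{x_i}∂_{x_j}θ. -/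
noncomputable section
open Real Set MeasureTheory

/-- Time derivative `∂ₜ` of a function of `(t, x₁, x₂)`. -/
def Dt (f : ℝ → ℝ → ℝ → ℝ) : ℝ → ℝ → ℝ → ℝ := fun t x y => deriv (fun s => f s x y) t

/-- Spatial derivative `∂_{x₁}`. -/
def Dx (f : ℝ → ℝ → ℝ → ℝ) : ℝ → ℝ → ℝ → ℝ := fun t x y => deriv (fun a => f t a y) x

/-- Spatial derivative `∂_{x₂}`. -/
def Dy (f : ℝ → ℝ → ℝ → ℝ) : ℝ → ℝ → ℝ → ℝ := fun t x y => deriv (fun b => f t x b) y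

/-- `f` is a smooth (`C^∞`) function on `ℝ × ℝ²`. -/
def Smooth3 (f : ℝ → ℝ → ℝ → ℝ) : Prop :=
  ContDiff ℝ (⊤ : ℕ∞) fun p : ℝ × ℝ × ℝ => f p.1 p.2.1 p.2.2

/-- Spatial derivative `∂_{x₁}` of a function on `ℝ²`. -/
def D1 (g : ℝ → ℝ → ℝ) : ℝ → ℝ → ℝ := fun x y => deriv (fun a => g a y) x

/-- Spatial derivative `∂_{x₂}` of a function on `ℝ²`. -/
def D2 (g : ℝ → ℝ → ℝ) : ℝ → ℝ → ℝ := fun x y => deriv (fun b => g x b) y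

/-- `g` is a smooth (`C^∞`) function on `ℝ²`. -/
def Smooth2 (g : ℝ → ℝ → ℝ) : Prop :=
  ContDiff ℝ (⊤ : ℕ∞) fun p : ℝ × ℝ => g p.1 p.2

namespace DampedWaveAux

variable {f g : ℝ → ℝ → ℝ → ℝ}

/-- Uncurried version of a function of three real variables. -/
def unc (f : ℝ → ℝ → ℝ → ℝ) : ℝ × ℝ × ℝ → ℝ := fun p => f p.1 p.2.1 p.2.2

lemma key_t (hf : Smooth3 f) (t x y : ℝ) :
    HasDerivAt (fun s => f s x y) (fderiv ℝ (unc f) (t, x, y) (1, 0, 0)) t := by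
  have h1 : HasDerivAt (fun s : ℝ => ((s, x, y) : ℝ × ℝ × ℝ)) (1, 0, 0) t :=
    (hasDerivAt_id t).prodMk ((hasDerivAt_const t x).prodMk (hasDerivAt_const t y))
  exact ((hf.differentiable (by simp) (t, x, y)).hasFDerivAt.comp_hasDerivAt t h1)

lemma key_x (hf : Smooth3 f) (t x y : ℝ) :
    HasDerivAt (fun a => f t a y) (fderiv ℝ (unc f) (t, x, y) (0, 1, 0)) x := by
  have h1 : HasDerivAt (fun a : ℝ => ((t, a, y) : ℝ × ℝ × ℝ)) (0, 1, 0) x :=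
    (hasDerivAt_const x t).prodMk ((hasDerivAt_id x).prodMk (hasDerivAt_const x y))
  exact ((hf.differentiable (by simp) (t, x, y)).hasFDerivAt.comp_hasDerivAt x h1)

lemma key_y (hf : Smooth3 f) (t x y : ℝ) :
    HasDerivAt (fun b => f t x b) (fderiv ℝ (unc f) (t, x, y) (0, 0, 1)) y := by
  have h1 : HasDerivAt (fun b : ℝ => ((t, x, b) : ℝ × ℝ × ℝ)) (0, 0, 1) y :=
    (hasDerivAt_const y t).prodMk ((hasDerivAt_const y x).prodMk (hasDerivAt_id y))
  exact ((hf.differentiable (by simp) (t, x, y)).hasFDerivAt.comp_hasDerivAt y h1)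

lemma Dt_eq (hf : Smooth3 f) (t x y : ℝ) :
    Dt f t x y = fderiv ℝ (unc f) (t, x, y) (1, 0, 0) := (key_t hf t x y).deriv
lemma Dx_eq (hf : Smooth3 f) (t x y : ℝ) :
    Dx f t x y = fderiv ℝ (unc f) (t, x, y) (0, 1, 0) := (key_x hf t x y).deriv
lemma Dy_eq (hf : Smooth3 f) (t x y : ℝ) :
    Dy f t x y = fderiv ℝ (unc f) (t, x, y) (0, 0, 1) := (key_y hf t x y).deriv

lemma smooth_fderiv_apply (hf : Smooth3 f) (v : ℝ × ℝ × ℝ) :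
    ContDiff ℝ (⊤ : ℕ∞) (fun p : ℝ × ℝ × ℝ => fderiv ℝ (unc f) p v) := by
  exact (ContinuousLinearMap.apply ℝ ℝ v).contDiff.comp (hf.fderiv_right (by exact_mod_cast le_top))

lemma smooth3_Dt (hf : Smooth3 f) : Smooth3 (Dt f) := by
  have h : (fun p : ℝ × ℝ × ℝ => Dt f p.1 p.2.1 p.2.2)
      = fun p : ℝ × ℝ × ℝ => fderiv ℝ (unc f) p (1, 0, 0) :=
    funext fun p => Dt_eq hf p.1 p.2.1 p.2.2
  unfold Smooth3; rw [h]; exact smooth_fderiv_apply hf _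

lemma smooth3_Dx (hf : Smooth3 f) : Smooth3 (Dx f) := by
  have h : (fun p : ℝ × ℝ × ℝ => Dx f p.1 p.2.1 p.2.2)
      = fun p : ℝ × ℝ × ℝ => fderiv ℝ (unc f) p (0, 1, 0) :=
    funext fun p => Dx_eq hf p.1 p.2.1 p.2.2
  unfold Smooth3; rw [h]; exact smooth_fderiv_apply hf _

lemma smooth3_Dy (hf : Smooth3 f) : Smooth3 (Dy f) := by
  have h : (fun p : ℝ × ℝ × ℝ => Dy f p.1 p.2.1 p.2.2)
      = fun p : ℝ × ℝ × ℝ => fderiv ℝ (unc f) p (0, 0, 1) :=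
    funext fun p => Dy_eq hf p.1 p.2.1 p.2.2
  unfold Smooth3; rw [h]; exact smooth_fderiv_apply hf _

lemma swap (hf : Smooth3 f) (v w : ℝ × ℝ × ℝ) (p : ℝ × ℝ × ℝ) :
    fderiv ℝ (fun q => fderiv ℝ (unc f) q v) p w
      = fderiv ℝ (fun q => fderiv ℝ (unc f) q w) p v := by
  have hΦ : DifferentiableAt ℝ (fderiv ℝ (unc f)) p :=
    ((hf.fderiv_right (m := (⊤ : ℕ∞)) (by exact_mod_cast le_top)).differentiable
      (by simp)) p
  have h1 : ∀ u : ℝ × ℝ × ℝ, fderiv ℝ (fun q => fderiv ℝ (unc f) q u) p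
      = (ContinuousLinearMap.apply ℝ ℝ u).comp (fderiv ℝ (fderiv ℝ (unc f)) p) := by
    intro u
    exact ((ContinuousLinearMap.apply ℝ ℝ u).hasFDerivAt.comp p hΦ.hasFDerivAt).fderiv
  rw [h1 v, h1 w]
  simp only [ContinuousLinearMap.coe_comp', Function.comp_apply, ContinuousLinearMap.apply_apply]
  exact (hf.contDiffAt.isSymmSndFDerivAt (by
      rw [minSmoothness_of_isRCLikeNormedField, show (2 : WithTop ℕ∞) = ((2 : ℕ∞) : WithTop ℕ∞) by rfl]
      exact WithTop.coe_le_coe.mpr le_top)) w v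

lemma unc_Dt (hf : Smooth3 f) : unc (Dt f) = fun p => fderiv ℝ (unc f) p (1, 0, 0) :=
  funext fun p => Dt_eq hf p.1 p.2.1 p.2.2
lemma unc_Dx (hf : Smooth3 f) : unc (Dx f) = fun p => fderiv ℝ (unc f) p (0, 1, 0) :=
  funext fun p => Dx_eq hf p.1 p.2.1 p.2.2
lemma unc_Dy (hf : Smooth3 f) : unc (Dy f) = fun p => fderiv ℝ (unc f) p (0, 0, 1) :=
  funext fun p => Dy_eq hf p.1 p.2.1 p.2.2

lemma clairaut_tx (hf : Smooth3 f) (t x y : ℝ) : Dx (Dt f) t x y = Dt (Dx f) t x y := by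
  rw [Dx_eq (smooth3_Dt hf), Dt_eq (smooth3_Dx hf), unc_Dt hf, unc_Dx hf]
  exact swap hf _ _ _

lemma clairaut_ty (hf : Smooth3 f) (t x y : ℝ) : Dy (Dt f) t x y = Dt (Dy f) t x y := by
  rw [Dy_eq (smooth3_Dt hf), Dt_eq (smooth3_Dy hf), unc_Dt hf, unc_Dy hf]
  exact swap hf _ _ _

lemma clairaut_xy (hf : Smooth3 f) (t x y : ℝ) : Dy (Dx f) t x y = Dx (Dy f) t x y := by
  rw [Dy_eq (smooth3_Dx hf), Dx_eq (smooth3_Dy hf), unc_Dx hf, unc_Dy hf]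
  exact swap hf _ _ _

lemma hasDerivAt_t (hf : Smooth3 f) (t x y : ℝ) :
    HasDerivAt (fun s => f s x y) (Dt f t x y) t := by
  rw [Dt_eq hf]; exact key_t hf t x y
lemma hasDerivAt_x (hf : Smooth3 f) (t x y : ℝ) :
    HasDerivAt (fun a => f t a y) (Dx f t x y) x := by
  rw [Dx_eq hf]; exact key_x hf t x y
lemma hasDerivAt_y (hf : Smooth3 f) (t x y : ℝ) :
    HasDerivAt (fun b => f t x b) (Dy f t x y) y := by
  rw [Dy_eq hf]; exact key_y hf t x y

lemma cont_slice_t (hf : Smooth3 f) (x y : ℝ) : Continuous (fun s => f s x y) := by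
  have h : (fun s => f s x y) = (unc f) ∘ (fun s : ℝ => (s, x, y)) := rfl
  rw [h]
  exact hf.continuous.comp (by fun_prop)

lemma smooth3_add (hf : Smooth3 f) (hg : Smooth3 g) :
    Smooth3 (fun t x y => f t x y + g t x y) := hf.add hg
lemma smooth3_mul (hf : Smooth3 f) (hg : Smooth3 g) :
    Smooth3 (fun t x y => f t x y * g t x y) := hf.mul hg
lemma smooth3_const (c : ℝ) : Smooth3 (fun _ _ _ => c) := contDiff_const

lemma deriv_eqOn_Icc {T : ℝ} (hT : 0 < T) {g h : ℝ → ℝ}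
    (hgh : Set.EqOn g h (Icc 0 T)) (hg : Continuous (deriv g)) (hh : Continuous (deriv h)) :
    Set.EqOn (deriv g) (deriv h) (Icc 0 T) := by
  have h1 : Set.EqOn (deriv g) (deriv h) (Ioo 0 T) := by
    intro s hs
    have he : g =ᶠ[nhds s] h :=
      Filter.eventuallyEq_of_mem (isOpen_Ioo.mem_nhds hs) fun a ha => hgh (Ioo_subset_Icc_self ha)
    exact he.deriv_eq
  have h2 := h1.closure hg hh
  rwa [closure_Ioo hT.ne] at h2

/-- The left-hand side of the continuity equation, as a function. -/
def bigE (γ : ℝ) (θ u₁ u₂ : ℝ → ℝ → ℝ → ℝ) : ℝ → ℝ → ℝ → ℝ := fun t x y =>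
  Dt θ t x y + u₁ t x y * Dx θ t x y + u₂ t x y * Dy θ t x y
    + (1 + (γ - 1) * θ t x y) * (Dx u₁ t x y + Dy u₂ t x y)

lemma bigE_smooth {γ : ℝ} {θ u₁ u₂ : ℝ → ℝ → ℝ → ℝ}
    (hθ : Smooth3 θ) (hu₁ : Smooth3 u₁) (hu₂ : Smooth3 u₂) :
    Smooth3 (bigE γ θ u₁ u₂) :=
  smooth3_add (smooth3_add (smooth3_add (smooth3_Dt hθ)
      (smooth3_mul hu₁ (smooth3_Dx hθ))) (smooth3_mul hu₂ (smooth3_Dy hθ)))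
    (smooth3_mul (smooth3_add (smooth3_const 1) (smooth3_mul (smooth3_const (γ - 1)) hθ))
      (smooth3_add (smooth3_Dx hu₁) (smooth3_Dy hu₂)))

end DampedWaveAux

open DampedWaveAux

/-- a smooth solution `(u, θ)` of the damped system with
`1 + (γ-1)θ > 0` satisfies the damped wave equation `∂ₜ²θ - Δθ + (μ/(1+t))∂ₜθ = F_θ`. -/
theorem damped_wave_equation_for_theta
    (μ γ T : ℝ) (hμ : 0 < μ) (hγ : 1 < γ) (hT : 0 < T)
    (θ u₁ u₂ : ℝ → ℝ → ℝ → ℝ)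
    (hθ : Smooth3 θ) (hu₁ : Smooth3 u₁) (hu₂ : Smooth3 u₂)
    (heq : ∀ t ∈ Icc (0 : ℝ) T, ∀ x y : ℝ,
      Dt θ t x y + u₁ t x y * Dx θ t x y + u₂ t x y * Dy θ t x y
        + (1 + (γ - 1) * θ t x y) * (Dx u₁ t x y + Dy u₂ t x y) = 0 ∧
      Dt u₁ t x y + μ / (1 + t) * u₁ t x y
        + u₁ t x y * Dx u₁ t x y + u₂ t x y * Dy u₁ t x y + Dx θ t x y = 0 ∧
      Dt u₂ t x y + μ / (1 + t) * u₂ t x y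
        + u₁ t x y * Dx u₂ t x y + u₂ t x y * Dy u₂ t x y + Dy θ t x y = 0)
    (hpos : ∀ t ∈ Icc (0 : ℝ) T, ∀ x y : ℝ, 0 < 1 + (γ - 1) * θ t x y) :
    ∀ t ∈ Icc (0 : ℝ) T, ∀ x y : ℝ,
      Dt (Dt θ) t x y - (Dx (Dx θ) t x y + Dy (Dy θ) t x y)
        + μ / (1 + t) * Dt θ t x y =
        -(μ / (1 + t)) * (u₁ t x y * Dx θ t x y + u₂ t x y * Dy θ t x y)
        - (u₁ t x y * Dx u₁ t x y * Dx θ t x y + u₁ t x y * Dx u₂ t x y * Dy θ t x y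
           + u₂ t x y * Dy u₁ t x y * Dx θ t x y + u₂ t x y * Dy u₂ t x y * Dy θ t x y)
        - (Dt u₁ t x y * Dx θ t x y + Dt u₂ t x y * Dy θ t x y)
        + (1 + (γ - 1) * θ t x y) *
            ((Dx u₁ t x y * Dx u₁ t x y + Dx u₂ t x y * Dy u₁ t x y
              + Dy u₁ t x y * Dx u₂ t x y + Dy u₂ t x y * Dy u₂ t x y)
             + (γ - 1) * (Dx u₁ t x y + Dy u₂ t x y) ^ 2)
        + (γ - 1) * θ t x y * (Dx (Dx θ) t x y + Dy (Dy θ) t x y)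
        - 2 * (u₁ t x y * Dx (Dt θ) t x y + u₂ t x y * Dy (Dt θ) t x y)
        - (u₁ t x y * u₁ t x y * Dx (Dx θ) t x y
           + u₁ t x y * u₂ t x y * Dy (Dx θ) t x y
           + u₂ t x y * u₁ t x y * Dx (Dy θ) t x y
           + u₂ t x y * u₂ t x y * Dy (Dy θ) t x y) := by
  intro t ht x y
  -- the continuity equation at the point
  have h0 := (heq t ht x y).1
  -- x-derivative of the continuity equation
  have Hx : HasDerivAt
      (fun a => Dt θ t a y + u₁ t a y * Dx θ t a y + u₂ t a y * Dy θ t a y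
        + (1 + (γ - 1) * θ t a y) * (Dx u₁ t a y + Dy u₂ t a y))
      (Dx (Dt θ) t x y
        + (Dx u₁ t x y * Dx θ t x y + u₁ t x y * Dx (Dx θ) t x y)
        + (Dx u₂ t x y * Dy θ t x y + u₂ t x y * Dx (Dy θ) t x y)
        + ((γ - 1) * Dx θ t x y * (Dx u₁ t x y + Dy u₂ t x y)
          + (1 + (γ - 1) * θ t x y) * (Dx (Dx u₁) t x y + Dx (Dy u₂) t x y))) x :=
    (((hasDerivAt_x (smooth3_Dt hθ) t x y).add
        ((hasDerivAt_x hu₁ t x y).mul (hasDerivAt_x (smooth3_Dx hθ) t x y))).add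
      ((hasDerivAt_x hu₂ t x y).mul (hasDerivAt_x (smooth3_Dy hθ) t x y))).add
      ((((hasDerivAt_x hθ t x y).const_mul (γ - 1)).const_add 1).mul
        ((hasDerivAt_x (smooth3_Dx hu₁) t x y).add (hasDerivAt_x (smooth3_Dy hu₂) t x y)))
  have hfx : (fun a => Dt θ t a y + u₁ t a y * Dx θ t a y + u₂ t a y * Dy θ t a y
      + (1 + (γ - 1) * θ t a y) * (Dx u₁ t a y + Dy u₂ t a y)) = fun _ : ℝ => (0 : ℝ) :=
    funext fun a => (heq t ht a y).1
  rw [hfx] at Hx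
  have hdx0 := Hx.unique (hasDerivAt_const x 0)
  -- y-derivative of the continuity equation
  have Hy : HasDerivAt
      (fun b => Dt θ t x b + u₁ t x b * Dx θ t x b + u₂ t x b * Dy θ t x b
        + (1 + (γ - 1) * θ t x b) * (Dx u₁ t x b + Dy u₂ t x b))
      (Dy (Dt θ) t x y
        + (Dy u₁ t x y * Dx θ t x y + u₁ t x y * Dy (Dx θ) t x y)
        + (Dy u₂ t x y * Dy θ t x y + u₂ t x y * Dy (Dy θ) t x y)
        + ((γ - 1) * Dy θ t x y * (Dx u₁ t x y + Dy u₂ t x y)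
          + (1 + (γ - 1) * θ t x y) * (Dy (Dx u₁) t x y + Dy (Dy u₂) t x y))) y :=
    (((hasDerivAt_y (smooth3_Dt hθ) t x y).add
        ((hasDerivAt_y hu₁ t x y).mul (hasDerivAt_y (smooth3_Dx hθ) t x y))).add
      ((hasDerivAt_y hu₂ t x y).mul (hasDerivAt_y (smooth3_Dy hθ) t x y))).add
      ((((hasDerivAt_y hθ t x y).const_mul (γ - 1)).const_add 1).mul
        ((hasDerivAt_y (smooth3_Dx hu₁) t x y).add (hasDerivAt_y (smooth3_Dy hu₂) t x y)))
  have hfy : (fun b => Dt θ t x b + u₁ t x b * Dx θ t x b + u₂ t x b * Dy θ t x b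
      + (1 + (γ - 1) * θ t x b) * (Dx u₁ t x b + Dy u₂ t x b)) = fun _ : ℝ => (0 : ℝ) :=
    funext fun b => (heq t ht x b).1
  rw [hfy] at Hy
  have hdy0 := Hy.unique (hasDerivAt_const y 0)
  -- x-derivative of the first momentum equation
  have Hx1 : HasDerivAt
      (fun a => Dt u₁ t a y + μ / (1 + t) * u₁ t a y
        + u₁ t a y * Dx u₁ t a y + u₂ t a y * Dy u₁ t a y + Dx θ t a y)
      (Dx (Dt u₁) t x y + μ / (1 + t) * Dx u₁ t x y
        + (Dx u₁ t x y * Dx u₁ t x y + u₁ t x y * Dx (Dx u₁) t x y)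
        + (Dx u₂ t x y * Dy u₁ t x y + u₂ t x y * Dx (Dy u₁) t x y)
        + Dx (Dx θ) t x y) x :=
    (((((hasDerivAt_x (smooth3_Dt hu₁) t x y).add
        ((hasDerivAt_x hu₁ t x y).const_mul (μ / (1 + t)))).add
      ((hasDerivAt_x hu₁ t x y).mul (hasDerivAt_x (smooth3_Dx hu₁) t x y))).add
      ((hasDerivAt_x hu₂ t x y).mul (hasDerivAt_x (smooth3_Dy hu₁) t x y))).add
      (hasDerivAt_x (smooth3_Dx hθ) t x y))
  have hfx1 : (fun a => Dt u₁ t a y + μ / (1 + t) * u₁ t a y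
      + u₁ t a y * Dx u₁ t a y + u₂ t a y * Dy u₁ t a y + Dx θ t a y) = fun _ : ℝ => (0 : ℝ) :=
    funext fun a => (heq t ht a y).2.1
  rw [hfx1] at Hx1
  have hdx1 := Hx1.unique (hasDerivAt_const x 0)
  -- y-derivative of the second momentum equation
  have Hy2 : HasDerivAt
      (fun b => Dt u₂ t x b + μ / (1 + t) * u₂ t x b
        + u₁ t x b * Dx u₂ t x b + u₂ t x b * Dy u₂ t x b + Dy θ t x b)
      (Dy (Dt u₂) t x y + μ / (1 + t) * Dy u₂ t x y
        + (Dy u₁ t x y * Dx u₂ t x y + u₁ t x y * Dy (Dx u₂) t x y)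
        + (Dy u₂ t x y * Dy u₂ t x y + u₂ t x y * Dy (Dy u₂) t x y)
        + Dy (Dy θ) t x y) y :=
    (((((hasDerivAt_y (smooth3_Dt hu₂) t x y).add
        ((hasDerivAt_y hu₂ t x y).const_mul (μ / (1 + t)))).add
      ((hasDerivAt_y hu₁ t x y).mul (hasDerivAt_y (smooth3_Dx hu₂) t x y))).add
      ((hasDerivAt_y hu₂ t x y).mul (hasDerivAt_y (smooth3_Dy hu₂) t x y))).add
      (hasDerivAt_y (smooth3_Dy hθ) t x y))
  have hfy2 : (fun b => Dt u₂ t x b + μ / (1 + t) * u₂ t x b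
      + u₁ t x b * Dx u₂ t x b + u₂ t x b * Dy u₂ t x b + Dy θ t x b) = fun _ : ℝ => (0 : ℝ) :=
    funext fun b => (heq t ht x b).2.2
  rw [hfy2] at Hy2
  have hdy2 := Hy2.unique (hasDerivAt_const y 0)
  -- time derivative of the continuity equation (using the Icc argument)
  have hsm : Smooth3 (bigE γ θ u₁ u₂) := bigE_smooth hθ hu₁ hu₂
  have hz : Dt (bigE γ θ u₁ u₂) t x y = 0 := by
    have hEq : Set.EqOn (fun s => bigE γ θ u₁ u₂ s x y) (fun _ : ℝ => (0 : ℝ)) (Icc 0 T) :=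
      fun s hs => (heq s hs x y).1
    have hcg : Continuous (deriv (fun s => bigE γ θ u₁ u₂ s x y)) :=
      cont_slice_t (smooth3_Dt hsm) x y
    have hch : Continuous (deriv (fun _ : ℝ => (0 : ℝ))) := by
      rw [deriv_const']; exact continuous_const
    have h2 := deriv_eqOn_Icc hT hEq hcg hch ht
    simpa [Dt] using h2
  have Ht : HasDerivAt
      (fun s => bigE γ θ u₁ u₂ s x y)
      (Dt (Dt θ) t x y
        + (Dt u₁ t x y * Dx θ t x y + u₁ t x y * Dt (Dx θ) t x y)
        + (Dt u₂ t x y * Dy θ t x y + u₂ t x y * Dt (Dy θ) t x y)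
        + ((γ - 1) * Dt θ t x y * (Dx u₁ t x y + Dy u₂ t x y)
          + (1 + (γ - 1) * θ t x y) * (Dt (Dx u₁) t x y + Dt (Dy u₂) t x y))) t :=
    (((hasDerivAt_t (smooth3_Dt hθ) t x y).add
        ((hasDerivAt_t hu₁ t x y).mul (hasDerivAt_t (smooth3_Dx hθ) t x y))).add
      ((hasDerivAt_t hu₂ t x y).mul (hasDerivAt_t (smooth3_Dy hθ) t x y))).add
      ((((hasDerivAt_t hθ t x y).const_mul (γ - 1)).const_add 1).mul
        ((hasDerivAt_t (smooth3_Dx hu₁) t x y).add (hasDerivAt_t (smooth3_Dy hu₂) t x y)))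
  have hdt0 : Dt (Dt θ) t x y
      + (Dt u₁ t x y * Dx θ t x y + u₁ t x y * Dt (Dx θ) t x y)
      + (Dt u₂ t x y * Dy θ t x y + u₂ t x y * Dt (Dy θ) t x y)
      + ((γ - 1) * Dt θ t x y * (Dx u₁ t x y + Dy u₂ t x y)
        + (1 + (γ - 1) * θ t x y) * (Dt (Dx u₁) t x y + Dt (Dy u₂) t x y)) = 0 := by
    rw [← Ht.deriv]; exact hz
  -- interchange the order of derivatives (Clairaut)
  rw [← clairaut_tx hθ t x y, ← clairaut_ty hθ t x y, ← clairaut_tx hu₁ t x y,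
    ← clairaut_ty hu₂ t x y] at hdt0
  rw [← clairaut_xy hu₁ t x y] at hdx1
  rw [clairaut_xy hu₂ t x y] at hdy2
  -- conclude by the algebraic combination of all the differentiated equations
  linear_combination hdt0 + u₁ t x y * hdx0 + u₂ t x y * hdy0
    - (1 + (γ - 1) * θ t x y) * hdx1 - (1 + (γ - 1) * θ t x y) * hdy2
    + (μ / (1 + t) - (γ - 1) * (Dx u₁ t x y + Dy u₂ t x y)) * h0
end
end

section
/- Suppose (u, θ) ∈ C^∞([0,T]×ℝ²) solves the system ∂_t θ + u·∇θ + (1 + (γ−1)θ) ∇·u = 0, ∂_t u + (μ/(1+t)) u + u·∇u + ∇θ = 0 (with γ > 1 and μ > 0), and that curl u := ∂_{x₁}u₂ − ∂_{x₂}u₁ ≡ 0 on [0,T]×ℝ². Then each component u_i (i = 1,2) satisfies the damped wave equation ∂_t²u_i − Δu_i + ∂_t( (μ/(1+t)) u_i ) = −Σ_j (∂_t u_j)(∂_{x_j}u_i) + Σ_j (∂_{x_i}u_j)(∂_{x_j}θ) + (γ−1)(∂_{x_i}θ)(Σ_j ∂_{x_j}u_j) − Σ_j u_j ∂_{x_j}∂_t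 u_i + Σ_j u_j ∂_{x_i}∂_{x_j}θ + (γ−1) θ Δu_i, where all sums range over j ∈ {1,2}. -/
noncomputable section
open Real Set MeasureTheory

/-- The spatial derivative `∂_{x_j}`, `j ∈ {1,2}`, as an operator indexed by `Fin 2`. -/
def Dv : Fin 2 → (ℝ → ℝ → ℝ → ℝ) → (ℝ → ℝ → ℝ → ℝ)
  | 0 => Dx
  | 1 => Dy

namespace Aux
def unc (f : ℝ → ℝ → ℝ → ℝ) : ℝ × ℝ × ℝ → ℝ := fun p => f p.1 p.2.1 p.2.2

lemma sdiff {f} (hf : Smooth3 f) : Differentiable ℝ (unc f) :=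
  hf.differentiable (by simp)

lemma sectT {f} (hf : Smooth3 f) (x y : ℝ) : Differentiable ℝ (fun s => f s x y) := by
  have : (fun s => f s x y) = unc f ∘ (fun s : ℝ => (s, x, y)) := rfl
  rw [this]
  exact (sdiff hf).comp (differentiable_id.prodMk (differentiable_const _))

lemma sectX {f} (hf : Smooth3 f) (t y : ℝ) : Differentiable ℝ (fun a => f t a y) := by
  have : (fun a => f t a y) = unc f ∘ (fun a : ℝ => (t, a, y)) := rfl
  rw [this]
  exact (sdiff hf).comp ((differentiable_const _).prodMk (differentiable_id.prodMk (differentiable_const _)))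

lemma sectY {f} (hf : Smooth3 f) (t x : ℝ) : Differentiable ℝ (fun b => f t x b) := by
  have : (fun b => f t x b) = unc f ∘ (fun b : ℝ => (t, x, b)) := rfl
  rw [this]
  exact (sdiff hf).comp ((differentiable_const _).prodMk ((differentiable_const _).prodMk differentiable_id))

lemma hasDT {f} (hf : Smooth3 f) (t x y : ℝ) :
    HasDerivAt (fun s => f s x y) (Dt f t x y) t := (sectT hf x y t).hasDerivAt

lemma hasDX {f} (hf : Smooth3 f) (t x y : ℝ) :
    HasDerivAt (fun a => f t a y) (Dx f t x y) x := (sectX hf t y x).hasDerivAt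

lemma hasDY {f} (hf : Smooth3 f) (t x y : ℝ) :
    HasDerivAt (fun b => f t x b) (Dy f t x y) y := (sectY hf t x y).hasDerivAt

def e0 : ℝ × ℝ × ℝ := (1, 0, 0)
def e1 : ℝ × ℝ × ℝ := (0, 1, 0)
def e2 : ℝ × ℝ × ℝ := (0, 0, 1)

lemma Dt_eq {f} (hf : Smooth3 f) (t x y : ℝ) :
    Dt f t x y = fderiv ℝ (unc f) (t, x, y) e0 := by
  have hL : HasDerivAt (fun s : ℝ => ((s, x, y) : ℝ × ℝ × ℝ)) e0 t :=
    (hasDerivAt_id t).prodMk (hasDerivAt_const t (x, y))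
  have := (((sdiff hf) (t, x, y)).hasFDerivAt).comp_hasDerivAt t hL
  exact this.deriv

lemma Dx_eq {f} (hf : Smooth3 f) (t x y : ℝ) :
    Dx f t x y = fderiv ℝ (unc f) (t, x, y) e1 := by
  have hL : HasDerivAt (fun a : ℝ => ((t, a, y) : ℝ × ℝ × ℝ)) e1 x :=
    (hasDerivAt_const x t).prodMk ((hasDerivAt_id x).prodMk (hasDerivAt_const x y))
  have := (((sdiff hf) (t, x, y)).hasFDerivAt).comp_hasDerivAt x hL
  exact this.deriv

lemma Dy_eq {f} (hf : Smooth3 f) (t x y : ℝ) :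
    Dy f t x y = fderiv ℝ (unc f) (t, x, y) e2 := by
  have hL : HasDerivAt (fun b : ℝ => ((t, x, b) : ℝ × ℝ × ℝ)) e2 y :=
    (hasDerivAt_const y t).prodMk ((hasDerivAt_const y x).prodMk (hasDerivAt_id y))
  have := (((sdiff hf) (t, x, y)).hasFDerivAt).comp_hasDerivAt y hL
  exact this.deriv

lemma smooth_pd {f} (hf : Smooth3 f) (v : ℝ × ℝ × ℝ) :
    ContDiff ℝ (⊤ : ℕ∞) (fun p : ℝ × ℝ × ℝ => fderiv ℝ (unc f) p v) :=
  (hf.fderiv_right (by exact_mod_cast le_top)).clm_apply contDiff_const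

lemma unc_Dt {f} (hf : Smooth3 f) :
    unc (Dt f) = fun p => fderiv ℝ (unc f) p e0 :=
  funext fun p => Dt_eq hf p.1 p.2.1 p.2.2

lemma unc_Dx {f} (hf : Smooth3 f) :
    unc (Dx f) = fun p => fderiv ℝ (unc f) p e1 :=
  funext fun p => Dx_eq hf p.1 p.2.1 p.2.2

lemma unc_Dy {f} (hf : Smooth3 f) :
    unc (Dy f) = fun p => fderiv ℝ (unc f) p e2 :=
  funext fun p => Dy_eq hf p.1 p.2.1 p.2.2

lemma smooth_Dt {f} (hf : Smooth3 f) : Smooth3 (Dt f) := by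
  show ContDiff ℝ (⊤ : ℕ∞) (unc (Dt f)); rw [unc_Dt hf]; exact smooth_pd hf e0

lemma smooth_Dx {f} (hf : Smooth3 f) : Smooth3 (Dx f) := by
  show ContDiff ℝ (⊤ : ℕ∞) (unc (Dx f)); rw [unc_Dx hf]; exact smooth_pd hf e1

lemma smooth_Dy {f} (hf : Smooth3 f) : Smooth3 (Dy f) := by
  show ContDiff ℝ (⊤ : ℕ∞) (unc (Dy f)); rw [unc_Dy hf]; exact smooth_pd hf e2

lemma pd_comm {f} (hf : Smooth3 f) (v w : ℝ × ℝ × ℝ) (p : ℝ × ℝ × ℝ) :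
    fderiv ℝ (fun q => fderiv ℝ (unc f) q v) p w
      = fderiv ℝ (fun q => fderiv ℝ (unc f) q w) p v := by
  have hF' : Differentiable ℝ (fderiv ℝ (unc f)) :=
    (hf.fderiv_right (m := (⊤:ℕ∞)) (by exact_mod_cast le_top)).differentiable (by simp)
  have hsym := second_derivative_symmetric (f := unc f)
    (fun q => ((sdiff hf) q).hasFDerivAt) (hF' p).hasFDerivAt v w
  have h1 : fderiv ℝ (fun q => fderiv ℝ (unc f) q v) p
      = (fderiv ℝ (fderiv ℝ (unc f)) p).flip v := by
    have := fderiv_clm_apply (hF' p) (differentiableAt_const v)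
    simpa using this
  have h2 : fderiv ℝ (fun q => fderiv ℝ (unc f) q w) p
      = (fderiv ℝ (fderiv ℝ (unc f)) p).flip w := by
    have := fderiv_clm_apply (hF' p) (differentiableAt_const w)
    simpa using this
  rw [h1, h2]
  simpa using hsym.symm

lemma DtDx_comm {f} (hf : Smooth3 f) (t x y : ℝ) :
    Dt (Dx f) t x y = Dx (Dt f) t x y := by
  rw [Dt_eq (smooth_Dx hf), Dx_eq (smooth_Dt hf), unc_Dx hf, unc_Dt hf]
  exact pd_comm hf e1 e0 (t, x, y)

lemma DtDy_comm {f} (hf : Smooth3 f) (t x y : ℝ) :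
    Dt (Dy f) t x y = Dy (Dt f) t x y := by
  rw [Dt_eq (smooth_Dy hf), Dy_eq (smooth_Dt hf), unc_Dy hf, unc_Dt hf]
  exact pd_comm hf e2 e0 (t, x, y)

lemma DxDy_comm {f} (hf : Smooth3 f) (t x y : ℝ) :
    Dx (Dy f) t x y = Dy (Dx f) t x y := by
  rw [Dx_eq (smooth_Dy hf), Dy_eq (smooth_Dx hf), unc_Dy hf, unc_Dx hf]
  exact pd_comm hf e2 e1 (t, x, y)

lemma deriv_zero_on_Icc {g : ℝ → ℝ} {T t : ℝ} (hT : 0 < T)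
    (hg : DifferentiableAt ℝ g t) (ht : t ∈ Icc (0:ℝ) T)
    (h0 : ∀ s ∈ Icc (0:ℝ) T, g s = 0) : deriv g t = 0 := by
  have hu : UniqueDiffWithinAt ℝ (Icc (0:ℝ) T) t := (uniqueDiffOn_Icc hT) t ht
  rw [← hg.derivWithin hu]
  have hcg : derivWithin g (Icc (0:ℝ) T) t = derivWithin (fun _ => (0:ℝ)) (Icc (0:ℝ) T) t :=
    derivWithin_congr (fun s hs => h0 s hs) (h0 t ht)
  rw [hcg]
  exact congrFun (derivWithin_const (Icc (0:ℝ) T) (0:ℝ)) t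
end Aux

open Aux

/-- if `(u, θ)` solves the damped system and `curl u ≡ 0` on `[0,T]×ℝ²`,
then each velocity component satisfies the damped wave equation
`∂ₜ²uᵢ - Δuᵢ + ∂ₜ((μ/(1+t))uᵢ) = F_{uᵢ}`. -/
theorem damped_wave_equation_for_velocity
    (μ γ T : ℝ) (hμ : 0 < μ) (hγ : 1 < γ) (hT : 0 < T)
    (θ : ℝ → ℝ → ℝ → ℝ) (u : Fin 2 → (ℝ → ℝ → ℝ → ℝ))
    (hθ : Smooth3 θ) (hu : ∀ i, Smooth3 (u i))
    (heq1 : ∀ t ∈ Icc (0 : ℝ) T, ∀ x y : ℝ,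
      Dt θ t x y + (∑ j : Fin 2, u j t x y * Dv j θ t x y)
        + (1 + (γ - 1) * θ t x y) * (∑ j : Fin 2, Dv j (u j) t x y) = 0)
    (heq2 : ∀ i : Fin 2, ∀ t ∈ Icc (0 : ℝ) T, ∀ x y : ℝ,
      Dt (u i) t x y + μ / (1 + t) * u i t x y
        + (∑ j : Fin 2, u j t x y * Dv j (u i) t x y) + Dv i θ t x y = 0)
    (hcurl : ∀ t ∈ Icc (0 : ℝ) T, ∀ x y : ℝ, Dx (u 1) t x y - Dy (u 0) t x y = 0) :
    ∀ i : Fin 2, ∀ t ∈ Icc (0 : ℝ) T, ∀ x y : ℝ,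
      Dt (Dt (u i)) t x y - (Dx (Dx (u i)) t x y + Dy (Dy (u i)) t x y)
        + Dt (fun t x y => μ / (1 + t) * u i t x y) t x y =
        -(∑ j : Fin 2, Dt (u j) t x y * Dv j (u i) t x y)
        + (∑ j : Fin 2, Dv i (u j) t x y * Dv j θ t x y)
        + (γ - 1) * Dv i θ t x y * (∑ j : Fin 2, Dv j (u j) t x y)
        - (∑ j : Fin 2, u j t x y * Dv j (Dt (u i)) t x y)
        + (∑ j : Fin 2, u j t x y * Dv i (Dv j θ) t x y)
        + (γ - 1) * θ t x y * (Dx (Dx (u i)) t x y + Dy (Dy (u i)) t x y) := by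
  have hD0 : Dv 0 = Dx := rfl
  have hD1 : Dv 1 = Dy := rfl
  simp only [Fin.sum_univ_two, hD0, hD1] at heq1 heq2 ⊢
  intro i t ht x y
  have hu0 := hu 0
  have hu1 := hu 1
  have h1t : (1 : ℝ) + t ≠ 0 := by have := ht.1; intro h; linarith
  -- time derivative of the momentum equation for component i
  have hE1 : ∀ i : Fin 2, Dt (Dt (u i)) t x y
      + Dt (fun t x y => μ / (1 + t) * u i t x y) t x y
      + ((Dt (u 0) t x y * Dx (u i) t x y + u 0 t x y * Dt (Dx (u i)) t x y)
        + (Dt (u 1) t x y * Dy (u i) t x y + u 1 t x y * Dt (Dy (u i)) t x y))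
      + Dt (Dv i θ) t x y = 0 := by
    intro i
    have hui := hu i
    have hμt : HasDerivAt (fun s => μ / (1 + s) * u i s x y)
        (Dt (fun t x y => μ / (1 + t) * u i t x y) t x y) t := by
      have hdiv : DifferentiableAt ℝ (fun s : ℝ => μ / (1 + s)) t :=
        (differentiableAt_const μ).div ((differentiableAt_const 1).add differentiableAt_id) h1t
      exact (hdiv.mul ((sectT hui x y) t)).hasDerivAt
    have hDvθ : HasDerivAt (fun s => Dv i θ s x y) (Dt (Dv i θ) t x y) t := by
      fin_cases i
      · exact hasDT (smooth_Dx hθ) t x y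
      · exact hasDT (smooth_Dy hθ) t x y
    have hk : HasDerivAt (fun s => Dt (u i) s x y + μ / (1 + s) * u i s x y
        + (u 0 s x y * Dx (u i) s x y + u 1 s x y * Dy (u i) s x y) + Dv i θ s x y)
        (Dt (Dt (u i)) t x y
          + Dt (fun t x y => μ / (1 + t) * u i t x y) t x y
          + ((Dt (u 0) t x y * Dx (u i) t x y + u 0 t x y * Dt (Dx (u i)) t x y)
            + (Dt (u 1) t x y * Dy (u i) t x y + u 1 t x y * Dt (Dy (u i)) t x y))
          + Dt (Dv i θ) t x y) t :=
      (((hasDT (smooth_Dt hui) t x y).add hμt).add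
        (((hasDT hu0 t x y).mul (hasDT (smooth_Dx hui) t x y)).add
          ((hasDT hu1 t x y).mul (hasDT (smooth_Dy hui) t x y)))).add hDvθ
    rw [← hk.deriv]
    refine deriv_zero_on_Icc hT hk.differentiableAt ht ?_
    intro s hs
    have h := heq2 i s hs x y
    fin_cases i <;> simpa [hD0, hD1] using h
  -- now split on i
  fin_cases i
  · -- i = 0 : spatial derivative of mass equation in x
    simp only [Fin.mk_zero, Fin.mk_one, hD0, hD1]
    have hk2 : HasDerivAt (fun a => Dt θ t a y
          + (u 0 t a y * Dx θ t a y + u 1 t a y * Dy θ t a y)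
          + (1 + (γ - 1) * θ t a y) * (Dx (u 0) t a y + Dy (u 1) t a y))
        (Dx (Dt θ) t x y
          + ((Dx (u 0) t x y * Dx θ t x y + u 0 t x y * Dx (Dx θ) t x y)
            + (Dx (u 1) t x y * Dy θ t x y + u 1 t x y * Dx (Dy θ) t x y))
          + ((0 + (0 * θ t x y + (γ - 1) * Dx θ t x y)) * (Dx (u 0) t x y + Dy (u 1) t x y)
            + (1 + (γ - 1) * θ t x y) * (Dx (Dx (u 0)) t x y + Dx (Dy (u 1)) t x y))) x :=
      (((hasDX (smooth_Dt hθ) t x y).add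
        (((hasDX hu0 t x y).mul (hasDX (smooth_Dx hθ) t x y)).add
          ((hasDX hu1 t x y).mul (hasDX (smooth_Dy hθ) t x y)))).add
        (((hasDerivAt_const x (1:ℝ)).add
            ((hasDerivAt_const x (γ - 1)).mul (hasDX hθ t x y))).mul
          ((hasDX (smooth_Dx hu0) t x y).add (hasDX (smooth_Dy hu1) t x y))))
    have hz2 : Dx (Dt θ) t x y
          + ((Dx (u 0) t x y * Dx θ t x y + u 0 t x y * Dx (Dx θ) t x y)
            + (Dx (u 1) t x y * Dy θ t x y + u 1 t x y * Dx (Dy θ) t x y))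
          + ((0 + (0 * θ t x y + (γ - 1) * Dx θ t x y)) * (Dx (u 0) t x y + Dy (u 1) t x y)
            + (1 + (γ - 1) * θ t x y) * (Dx (Dx (u 0)) t x y + Dx (Dy (u 1)) t x y)) = 0 := by
      rw [← hk2.deriv]
      have hfun : (fun a => Dt θ t a y
          + (u 0 t a y * Dx θ t a y + u 1 t a y * Dy θ t a y)
          + (1 + (γ - 1) * θ t a y) * (Dx (u 0) t a y + Dy (u 1) t a y))
          = fun _ => (0:ℝ) := funext fun a => heq1 t ht a y
      rw [hfun]
      exact deriv_const x 0
    -- derivative of curl condition in y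
    have hk3 : HasDerivAt (fun b => Dx (u 1) t x b - Dy (u 0) t x b)
        (Dy (Dx (u 1)) t x y - Dy (Dy (u 0)) t x y) y :=
      (hasDY (smooth_Dx hu1) t x y).sub (hasDY (smooth_Dy hu0) t x y)
    have hz3 : Dy (Dx (u 1)) t x y - Dy (Dy (u 0)) t x y = 0 := by
      rw [← hk3.deriv]
      have hfun : (fun b => Dx (u 1) t x b - Dy (u 0) t x b) = fun _ => (0:ℝ) :=
        funext fun b => hcurl t ht x b
      rw [hfun]
      exact deriv_const y 0
    rw [← DxDy_comm hu1 t x y] at hz3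
    have hz1 := hE1 0
    simp only [hD0] at hz1
    rw [DtDx_comm hu0 t x y, DtDy_comm hu0 t x y, DtDx_comm hθ t x y] at hz1
    linear_combination hz1 - hz2 + (1 + (γ - 1) * θ t x y) * hz3
  · -- i = 1 : spatial derivative of mass equation in y
    simp only [Fin.mk_zero, Fin.mk_one, hD0, hD1]
    have hk2 : HasDerivAt (fun b => Dt θ t x b
          + (u 0 t x b * Dx θ t x b + u 1 t x b * Dy θ t x b)
          + (1 + (γ - 1) * θ t x b) * (Dx (u 0) t x b + Dy (u 1) t x b))
        (Dy (Dt θ) t x y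
          + ((Dy (u 0) t x y * Dx θ t x y + u 0 t x y * Dy (Dx θ) t x y)
            + (Dy (u 1) t x y * Dy θ t x y + u 1 t x y * Dy (Dy θ) t x y))
          + ((0 + (0 * θ t x y + (γ - 1) * Dy θ t x y)) * (Dx (u 0) t x y + Dy (u 1) t x y)
            + (1 + (γ - 1) * θ t x y) * (Dy (Dx (u 0)) t x y + Dy (Dy (u 1)) t x y))) y :=
      (((hasDY (smooth_Dt hθ) t x y).add
        (((hasDY hu0 t x y).mul (hasDY (smooth_Dx hθ) t x y)).add
          ((hasDY hu1 t x y).mul (hasDY (smooth_Dy hθ) t x y)))).add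
        (((hasDerivAt_const y (1:ℝ)).add
            ((hasDerivAt_const y (γ - 1)).mul (hasDY hθ t x y))).mul
          ((hasDY (smooth_Dx hu0) t x y).add (hasDY (smooth_Dy hu1) t x y))))
    have hz2 : Dy (Dt θ) t x y
          + ((Dy (u 0) t x y * Dx θ t x y + u 0 t x y * Dy (Dx θ) t x y)
            + (Dy (u 1) t x y * Dy θ t x y + u 1 t x y * Dy (Dy θ) t x y))
          + ((0 + (0 * θ t x y + (γ - 1) * Dy θ t x y)) * (Dx (u 0) t x y + Dy (u 1) t x y)
            + (1 + (γ - 1) * θ t x y) * (Dy (Dx (u 0)) t x y + Dy (Dy (u 1)) t x y)) = 0 := by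
      rw [← hk2.deriv]
      have hfun : (fun b => Dt θ t x b
          + (u 0 t x b * Dx θ t x b + u 1 t x b * Dy θ t x b)
          + (1 + (γ - 1) * θ t x b) * (Dx (u 0) t x b + Dy (u 1) t x b))
          = fun _ => (0:ℝ) := funext fun b => heq1 t ht x b
      rw [hfun]
      exact deriv_const y 0
    -- derivative of curl condition in x
    have hk3 : HasDerivAt (fun a => Dx (u 1) t a y - Dy (u 0) t a y)
        (Dx (Dx (u 1)) t x y - Dx (Dy (u 0)) t x y) x :=
      (hasDX (smooth_Dx hu1) t x y).sub (hasDX (smooth_Dy hu0) t x y)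
    have hz3 : Dx (Dx (u 1)) t x y - Dx (Dy (u 0)) t x y = 0 := by
      rw [← hk3.deriv]
      have hfun : (fun a => Dx (u 1) t a y - Dy (u 0) t a y) = fun _ => (0:ℝ) :=
        funext fun a => hcurl t ht a y
      rw [hfun]
      exact deriv_const x 0
    rw [← DxDy_comm hu0 t x y] at hz2
    have hz1 := hE1 1
    simp only [hD1] at hz1
    rw [DtDx_comm hu1 t x y, DtDy_comm hu1 t x y, DtDy_comm hθ t x y] at hz1
    linear_combination hz1 - hz2 - (1 + (γ - 1) * θ t x y) * hz3
end
end

section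
/- Let S = t∂_t + x₁∂_{x₁} + x₂∂_{x₂}, Ẑ₃ = S+1, Z₃ = S−1, and □ = ∂_t² − ∂_{x₁}² − ∂_{x₂}². Then for every integer k ≥ 1 and every smooth f : ℝ×ℝ² → ℝ (with t > −1): (i) Ẑ₃^k( (1+t)^{−1} ∂_t f ) − (1+t)^{−1} ∂_t Z₃^k f = Σ_{j=0}^{k−1} Ẑ₃^{k−1−j}( (1+t)^{−2} ∂_t Z₃^{j} f ); (ii) Ẑ₃^k( (1+t)^{−2} f ) − (1+t)^{−2} Z₃^k f = Σ_{j=0}^{k−1} Ẑ₃^{k−1−j}( 2(1+t)^{−3} Z₃^{j} f ); moreover (iii) for every multi-index α ∈ ℕ⁵, Ẑ^α(□f) − □(Z^α f) = 0, where Z = (Z₀,…,Z₄) = (∂_t, ∂_{x₁}, ∂_{x₂}, S−1, Ω), Ẑ = (∂_t, ∂_{x₁}, ∂_{x₂}, S+1, Ω), Ω = x₁∂_{x₂} − x₂∂_{x₁}, and Z^α = Z₀^{α₀}Z₁^{α₁}Z₂^{α₂}Z₃^{α₃}Z₄^{α₄}, Ẑ^α = Ẑ₀^{α₀}⋯Ẑ₄^{α₄}.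 -/
noncomputable section
open Real Set MeasureTheory

/-- The scaling vector field `S = t∂ₜ + x₁∂₁ + x₂∂₂`. -/
def Sc (f : ℝ → ℝ → ℝ → ℝ) : ℝ → ℝ → ℝ → ℝ :=
  fun t x y => t * Dt f t x y + x * Dx f t x y + y * Dy f t x y

/-- The rotation vector field `Ω = x₁∂₂ - x₂∂₁`. -/
def Om (f : ℝ → ℝ → ℝ → ℝ) : ℝ → ℝ → ℝ → ℝ :=
  fun t x y => x * Dy f t x y - y * Dx f t x y

/-- The modified scaling field `S - 1`. -/
def Zm (f : ℝ → ℝ → ℝ → ℝ) : ℝ → ℝ → ℝ → ℝ :=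
  fun t x y => Sc f t x y - f t x y

/-- The modified scaling field `S + 1`. -/
def Zp (f : ℝ → ℝ → ℝ → ℝ) : ℝ → ℝ → ℝ → ℝ :=
  fun t x y => Sc f t x y + f t x y

/-- The d'Alembertian `□ = ∂ₜ² - ∂₁² - ∂₂²`. -/
def Box (f : ℝ → ℝ → ℝ → ℝ) : ℝ → ℝ → ℝ → ℝ :=
  fun t x y => Dt (Dt f) t x y - Dx (Dx f) t x y - Dy (Dy f) t x y

/-- The monomial `Z^α = Z₀^{α₀}Z₁^{α₁}Z₂^{α₂}Z₃^{α₃}Z₄^{α₄}` in the vector fields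
`Z = (∂ₜ, ∂₁, ∂₂, S-1, Ω)`. -/
def ZmPow (α : Fin 5 → ℕ) (f : ℝ → ℝ → ℝ → ℝ) : ℝ → ℝ → ℝ → ℝ :=
  Dt^[α 0] <| Dx^[α 1] <| Dy^[α 2] <| Zm^[α 3] <| Om^[α 4] f

/-- The monomial `Ẑ^α` in the vector fields `Ẑ = (∂ₜ, ∂₁, ∂₂, S+1, Ω)`. -/
def ZpPow (α : Fin 5 → ℕ) (f : ℝ → ℝ → ℝ → ℝ) : ℝ → ℝ → ℝ → ℝ :=
  Dt^[α 0] <| Dx^[α 1] <| Dy^[α 2] <| Zp^[α 3] <| Om^[α 4] f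

namespace WVAux

abbrev E3 := ℝ × ℝ × ℝ

def uc (f : ℝ → ℝ → ℝ → ℝ) : E3 → ℝ := fun p => f p.1 p.2.1 p.2.2

def AV (V : E3 → E3) (F : E3 → ℝ) : E3 → ℝ := fun p => fderiv ℝ F p (V p)

def vT : E3 := (1,0,0)
def vX : E3 := (0,1,0)
def vY : E3 := (0,0,1)

def dd (v : E3) : (E3 → ℝ) → E3 → ℝ := AV (fun _ => v)
def ssu : (E3 → ℝ) → E3 → ℝ := AV id

def omL : E3 →L[ℝ] E3 :=
  (0 : E3 →L[ℝ] ℝ).prod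
    ((-((ContinuousLinearMap.snd ℝ ℝ ℝ).comp (ContinuousLinearMap.snd ℝ ℝ (ℝ × ℝ)))).prod
      ((ContinuousLinearMap.fst ℝ ℝ ℝ).comp (ContinuousLinearMap.snd ℝ ℝ (ℝ × ℝ))))

lemma omL_apply (p : E3) : omL p = (0, -p.2.2, p.2.1) := rfl

def omu : (E3 → ℝ) → E3 → ℝ := AV ⇑omL
def zmu (F : E3 → ℝ) : E3 → ℝ := fun p => ssu F p - F p
def zpu (F : E3 → ℝ) : E3 → ℝ := fun p => ssu F p + F p
def boxu (F : E3 → ℝ) : E3 → ℝ :=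
  fun p => dd vT (dd vT F) p - dd vX (dd vX F) p - dd vY (dd vY F) p

/-- smoothness predicate -/
def SOn (F : E3 → ℝ) (s : Set E3) : Prop := ContDiffOn ℝ (⊤ : ℕ∞) F s

lemma top1 : ((⊤:ℕ∞) : WithTop ℕ∞) + 1 ≤ ((⊤:ℕ∞) : WithTop ℕ∞) := by rfl

lemma diffAt {Y : Type*} [NormedAddCommGroup Y] [NormedSpace ℝ Y] {F : E3 → Y} {s : Set E3} (hs : IsOpen s) (hF : ContDiffOn ℝ (⊤:ℕ∞) F s) {p : E3} (hp : p ∈ s) :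
    DifferentiableAt ℝ F p :=
  (hF.contDiffAt (hs.mem_nhds hp)).differentiableAt
    (by simp)

lemma AV_smooth {s : Set E3} (hs : IsOpen s) {V : E3 → E3} (hV : ContDiff ℝ (⊤:ℕ∞) V)
    {F : E3 → ℝ} (hF : SOn F s) : SOn (AV V F) s :=
  (hF.fderiv_of_isOpen hs top1).clm_apply hV.contDiffOn

lemma AV_congr {s : Set E3} (hs : IsOpen s) {F G : E3 → ℝ} (h : EqOn F G s) (V : E3 → E3) :
    EqOn (AV V F) (AV V G) s := by
  intro p hp
  unfold AV
  rw [Filter.EventuallyEq.fderiv_eq (h.eventuallyEq_of_mem (hs.mem_nhds hp))]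

lemma comm {s : Set E3} (hs : IsOpen s) {F : E3 → ℝ} (hF : SOn F s) {p : E3} (hp : p ∈ s)
    {V W : E3 → E3} {V' W' : E3 →L[ℝ] E3} (hV : HasFDerivAt V V' p) (hW : HasFDerivAt W W' p) :
    AV V (AV W F) p = AV W (AV V F) p + fderiv ℝ F p (W' (V p) - V' (W p)) := by
  have hΦ : ContDiffOn ℝ (⊤:ℕ∞) (fderiv ℝ F) s := hF.fderiv_of_isOpen hs top1
  have hΦd : DifferentiableAt ℝ (fderiv ℝ F) p := diffAt hs hΦ hp
  have h1 : HasFDerivAt (AV W F)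
      ((fderiv ℝ F p).comp W' + (fderiv ℝ (fderiv ℝ F) p).flip (W p)) p :=
    hΦd.hasFDerivAt.clm_apply hW
  have h2 : HasFDerivAt (AV V F)
      ((fderiv ℝ F p).comp V' + (fderiv ℝ (fderiv ℝ F) p).flip (V p)) p :=
    hΦd.hasFDerivAt.clm_apply hV
  have sym := (hF.contDiffAt (hs.mem_nhds hp)).isSymmSndFDerivAt (n := ((⊤:ℕ∞) : WithTop ℕ∞))
    (by rw [minSmoothness_of_isRCLikeNormedField]; exact_mod_cast ENat.natCast_le_of_coe_top_le_withTop le_rfl 2)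
  have e1 : AV V (AV W F) p
      = fderiv ℝ F p (W' (V p)) + fderiv ℝ (fderiv ℝ F) p (V p) (W p) := by
    show fderiv ℝ (AV W F) p (V p) = _
    rw [h1.fderiv]
    simp
  have e2 : AV W (AV V F) p
      = fderiv ℝ F p (V' (W p)) + fderiv ℝ (fderiv ℝ F) p (W p) (V p) := by
    show fderiv ℝ (AV V F) p (W p) = _
    rw [h2.fderiv]
    simp
  rw [e1, e2, map_sub, sym (V p) (W p)]
  ring

end WVAux
section part2
namespace WVAux
variable {s : Set E3} {F G : E3 → ℝ} {p : E3}

-- concrete commutators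
lemma ss_dd (hs : IsOpen s) (hF : SOn F s) (hp : p ∈ s) (v : E3) :
    ssu (dd v F) p = dd v (ssu F) p - dd v F p := by
  have := comm hs hF hp (hasFDerivAt_id p) (hasFDerivAt_const v p)
  simp only [ssu, dd, AV] at this ⊢
  rw [this]
  simp [sub_eq_add_neg]

lemma dd_dd (hs : IsOpen s) (hF : SOn F s) (hp : p ∈ s) (v w : E3) :
    dd v (dd w F) p = dd w (dd v F) p := by
  have := comm hs hF hp (hasFDerivAt_const v p) (hasFDerivAt_const w p)
  simp only [dd, AV] at this ⊢
  rw [this]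
  simp

lemma om_dd (hs : IsOpen s) (hF : SOn F s) (hp : p ∈ s) (v : E3) :
    omu (dd v F) p = dd v (omu F) p - dd (omL v) F p := by
  have := comm hs hF hp (omL.hasFDerivAt (x := p)) (hasFDerivAt_const v p)
  simp only [omu, dd, AV] at this ⊢
  rw [this]
  simp [sub_eq_add_neg]

-- linearity
lemma AV_sub (hF : DifferentiableAt ℝ F p) (hG : DifferentiableAt ℝ G p) (V : E3 → E3) :
    AV V (fun q => F q - G q) p = AV V F p - AV V G p := by
  simp [AV, fderiv_fun_sub hF hG]

lemma AV_add (hF : DifferentiableAt ℝ F p) (hG : DifferentiableAt ℝ G p) (V : E3 → E3) :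
    AV V (fun q => F q + G q) p = AV V F p + AV V G p := by
  simp [AV, fderiv_fun_add hF hG]

lemma AV_sum {ι : Type*} (u : Finset ι) (g : ι → E3 → ℝ)
    (h : ∀ i ∈ u, DifferentiableAt ℝ (g i) p) (V : E3 → E3) :
    AV V (fun q => ∑ i ∈ u, g i q) p = ∑ i ∈ u, AV V (g i) p := by
  simp [AV, fderiv_fun_sum h]

lemma AV_mul {w : E3 → ℝ} (hw : DifferentiableAt ℝ w p) (hF : DifferentiableAt ℝ F p)
    (V : E3 → E3) :
    AV V (fun q => w q * F q) p = w p * AV V F p + fderiv ℝ w p (V p) * F p := by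
  simp [AV, fderiv_fun_mul hw hF]
  ring

-- smoothness
lemma sm_dd (hs : IsOpen s) (hF : SOn F s) (v : E3) : SOn (dd v F) s :=
  AV_smooth hs contDiff_const hF

lemma sm_ss (hs : IsOpen s) (hF : SOn F s) : SOn (ssu F) s :=
  AV_smooth hs contDiff_id hF

lemma sm_om (hs : IsOpen s) (hF : SOn F s) : SOn (omu F) s :=
  AV_smooth hs omL.contDiff hF

lemma sm_zm (hs : IsOpen s) (hF : SOn F s) : SOn (zmu F) s :=
  (sm_ss hs hF).sub hF

lemma sm_zp (hs : IsOpen s) (hF : SOn F s) : SOn (zpu F) s :=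
  (sm_ss hs hF).add hF

lemma sm_box (hs : IsOpen s) (hF : SOn F s) : SOn (boxu F) s :=
  ((sm_dd hs (sm_dd hs hF vT) vT).sub (sm_dd hs (sm_dd hs hF vX) vX)).sub
    (sm_dd hs (sm_dd hs hF vY) vY)

-- locality / congruence
lemma dd_congr (hs : IsOpen s) (h : EqOn F G s) (v : E3) : EqOn (dd v F) (dd v G) s :=
  AV_congr hs h _

lemma ss_congr (hs : IsOpen s) (h : EqOn F G s) : EqOn (ssu F) (ssu G) s :=
  AV_congr hs h _

lemma om_congr (hs : IsOpen s) (h : EqOn F G s) : EqOn (omu F) (omu G) s :=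
  AV_congr hs h _

lemma zm_congr (hs : IsOpen s) (h : EqOn F G s) : EqOn (zmu F) (zmu G) s := by
  intro p hp
  unfold zmu
  rw [ss_congr hs h hp, h hp]

lemma zp_congr (hs : IsOpen s) (h : EqOn F G s) : EqOn (zpu F) (zpu G) s := by
  intro p hp
  unfold zpu
  rw [ss_congr hs h hp, h hp]

lemma box_congr (hs : IsOpen s) (h : EqOn F G s) : EqOn (boxu F) (boxu G) s := by
  intro p hp
  unfold boxu
  rw [dd_congr hs (dd_congr hs h vT) vT hp, dd_congr hs (dd_congr hs h vX) vX hp,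
    dd_congr hs (dd_congr hs h vY) vY hp]

-- zpu linearity
lemma zpu_add (hF : DifferentiableAt ℝ F p) (hG : DifferentiableAt ℝ G p) :
    zpu (fun q => F q + G q) p = zpu F p + zpu G p := by
  unfold zpu ssu
  rw [AV_add hF hG]
  ring

lemma zpu_sum {ι : Type*} (u : Finset ι) (g : ι → E3 → ℝ)
    (h : ∀ i ∈ u, DifferentiableAt ℝ (g i) p) :
    zpu (fun q => ∑ i ∈ u, g i q) p = ∑ i ∈ u, zpu (g i) p := by
  unfold zpu ssu
  rw [AV_sum u g h]
  rw [Finset.sum_add_distrib]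

end WVAux
end part2
section part3
namespace WVAux
variable {s : Set E3} {F G : E3 → ℝ} {p : E3}

lemma dd_zero (F : E3 → ℝ) (p : E3) : dd (0 : E3) F p = 0 := by
  simp [dd, AV]

lemma dd_sub' (hs : IsOpen s) (hF : SOn F s) (hG : SOn G s) (hp : p ∈ s) (v : E3) :
    dd v (fun q => F q - G q) p = dd v F p - dd v G p :=
  AV_sub (diffAt hs hF hp) (diffAt hs hG hp) _

lemma dd_add' (hs : IsOpen s) (hF : SOn F s) (hG : SOn G s) (hp : p ∈ s) (v : E3) :
    dd v (fun q => F q + G q) p = dd v F p + dd v G p :=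
  AV_add (diffAt hs hF hp) (diffAt hs hG hp) _

lemma AV_sub' (hs : IsOpen s) (hF : SOn F s) (hG : SOn G s) (hp : p ∈ s) (V : E3 → E3) :
    AV V (fun q => F q - G q) p = AV V F p - AV V G p :=
  AV_sub (diffAt hs hF hp) (diffAt hs hG hp) V

lemma ss_dd2 (hs : IsOpen s) (hF : SOn F s) (hp : p ∈ s) (v : E3) :
    ssu (dd v (dd v F)) p = dd v (dd v (ssu F)) p - 2 * dd v (dd v F) p := by
  have h1 : ssu (dd v (dd v F)) p = dd v (ssu (dd v F)) p - dd v (dd v F) p :=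
    ss_dd hs (sm_dd hs hF v) hp v
  have h2 : EqOn (ssu (dd v F)) (fun q => dd v (ssu F) q - dd v F q) s :=
    fun q hq => ss_dd hs hF hq v
  have h3 : dd v (ssu (dd v F)) p = dd v (dd v (ssu F)) p - dd v (dd v F) p := by
    rw [dd_congr hs h2 v hp, dd_sub' hs (sm_dd hs (sm_ss hs hF) v) (sm_dd hs hF v) hp]
  rw [h1, h3]; ring

lemma box_sub (hs : IsOpen s) (hF : SOn F s) (hG : SOn G s) (hp : p ∈ s) :
    boxu (fun q => F q - G q) p = boxu F p - boxu G p := by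
  have key : ∀ v : E3, dd v (dd v (fun q => F q - G q)) p = dd v (dd v F) p - dd v (dd v G) p := by
    intro v
    have h1 : EqOn (dd v (fun q => F q - G q)) (fun q => dd v F q - dd v G q) s :=
      fun q hq => AV_sub' hs hF hG hq _
    rw [show dd v (dd v fun q => F q - G q) p = dd v (dd v (fun q => F q - G q)) p from rfl,
      dd_congr hs h1 v hp, dd_sub' hs (sm_dd hs hF v) (sm_dd hs hG v) hp]
  show dd vT (dd vT _) p - dd vX (dd vX _) p - dd vY (dd vY _) p = _
  rw [key vT, key vX, key vY]
  show _ = (dd vT (dd vT F) p - dd vX (dd vX F) p - dd vY (dd vY F) p)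
    - (dd vT (dd vT G) p - dd vX (dd vX G) p - dd vY (dd vY G) p)
  ring

lemma ss_box (hs : IsOpen s) (hF : SOn F s) (hp : p ∈ s) :
    ssu (boxu F) p = boxu (ssu F) p - 2 * boxu F p := by
  have d1 : SOn (dd vT (dd vT F)) s := sm_dd hs (sm_dd hs hF vT) vT
  have d2 : SOn (dd vX (dd vX F)) s := sm_dd hs (sm_dd hs hF vX) vX
  have d3 : SOn (dd vY (dd vY F)) s := sm_dd hs (sm_dd hs hF vY) vY
  have e1 : ssu (boxu F) p = ssu (dd vT (dd vT F)) p - ssu (dd vX (dd vX F)) p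
      - ssu (dd vY (dd vY F)) p := by
    show AV id (fun q => (fun q' => dd vT (dd vT F) q' - dd vX (dd vX F) q') q
      - dd vY (dd vY F) q) p = _
    rw [AV_sub ((diffAt hs d1 hp).fun_sub (diffAt hs d2 hp)) (diffAt hs d3 hp),
      AV_sub (diffAt hs d1 hp) (diffAt hs d2 hp)]
    rfl
  rw [e1, ss_dd2 hs hF hp vT, ss_dd2 hs hF hp vX, ss_dd2 hs hF hp vY]
  show _ = (dd vT (dd vT (ssu F)) p - dd vX (dd vX (ssu F)) p - dd vY (dd vY (ssu F)) p)
    - 2 * (dd vT (dd vT F) p - dd vX (dd vX F) p - dd vY (dd vY F) p)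
  ring

lemma zp_box (hs : IsOpen s) (hF : SOn F s) : EqOn (zpu (boxu F)) (boxu (zmu F)) s := by
  intro p hp
  have h1 : zpu (boxu F) p = ssu (boxu F) p + boxu F p := rfl
  have h2 : boxu (zmu F) p = boxu (ssu F) p - boxu F p :=
    box_sub hs (sm_ss hs hF) hF hp
  rw [h1, h2, ss_box hs hF hp]; ring

lemma dd_box (hs : IsOpen s) (hF : SOn F s) (v : E3) :
    EqOn (dd v (boxu F)) (boxu (dd v F)) s := by
  intro p hp
  have d1 : SOn (dd vT (dd vT F)) s := sm_dd hs (sm_dd hs hF vT) vT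
  have d2 : SOn (dd vX (dd vX F)) s := sm_dd hs (sm_dd hs hF vX) vX
  have d3 : SOn (dd vY (dd vY F)) s := sm_dd hs (sm_dd hs hF vY) vY
  have e1 : dd v (boxu F) p = dd v (dd vT (dd vT F)) p - dd v (dd vX (dd vX F)) p
      - dd v (dd vY (dd vY F)) p := by
    show AV (fun _ => v) (fun q => (fun q' => dd vT (dd vT F) q' - dd vX (dd vX F) q') q
      - dd vY (dd vY F) q) p = _
    rw [AV_sub ((diffAt hs d1 hp).fun_sub (diffAt hs d2 hp)) (diffAt hs d3 hp),
      AV_sub (diffAt hs d1 hp) (diffAt hs d2 hp)]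
    rfl
  have key : ∀ w : E3, dd v (dd w (dd w F)) p = dd w (dd w (dd v F)) p := by
    intro w
    rw [dd_dd hs (sm_dd hs hF w) hp v w]
    have h2 : EqOn (dd v (dd w F)) (dd w (dd v F)) s := fun q hq => dd_dd hs hF hq v w
    rw [dd_congr hs h2 w hp]
  rw [e1, key vT, key vX, key vY]
  rfl

lemma omL_vT : omL vT = 0 := by
  simp only [omL_apply, vT]
  simp [Prod.ext_iff]

lemma omL_vX : omL vX = vY := by
  simp only [omL_apply, vX, vY]
  simp [Prod.ext_iff]

lemma omL_vY : omL vY = -vX := by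
  simp only [omL_apply, vY, vX]
  simp [Prod.ext_iff]

lemma dd_neg (v : E3) (F : E3 → ℝ) (p : E3) : dd (-v) F p = -dd v F p := by
  simp [dd, AV]

lemma om_box (hs : IsOpen s) (hF : SOn F s) : EqOn (omu (boxu F)) (boxu (omu F)) s := by
  intro p hp
  have d1 : SOn (dd vT (dd vT F)) s := sm_dd hs (sm_dd hs hF vT) vT
  have d2 : SOn (dd vX (dd vX F)) s := sm_dd hs (sm_dd hs hF vX) vX
  have d3 : SOn (dd vY (dd vY F)) s := sm_dd hs (sm_dd hs hF vY) vY
  have e1 : omu (boxu F) p = omu (dd vT (dd vT F)) p - omu (dd vX (dd vX F)) p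
      - omu (dd vY (dd vY F)) p := by
    show AV ⇑omL (fun q => (fun q' => dd vT (dd vT F) q' - dd vX (dd vX F) q') q
      - dd vY (dd vY F) q) p = _
    rw [AV_sub ((diffAt hs d1 hp).fun_sub (diffAt hs d2 hp)) (diffAt hs d3 hp),
      AV_sub (diffAt hs d1 hp) (diffAt hs d2 hp)]
    rfl
  -- om dTdT
  have hT : omu (dd vT (dd vT F)) p = dd vT (dd vT (omu F)) p := by
    rw [om_dd hs (sm_dd hs hF vT) hp vT, omL_vT, dd_zero]
    have h2 : EqOn (omu (dd vT F)) (dd vT (omu F)) s := by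
      intro q hq
      rw [om_dd hs hF hq vT, omL_vT, dd_zero, sub_zero]
    rw [dd_congr hs h2 vT hp, sub_zero]
  -- om dXdX
  have hX : omu (dd vX (dd vX F)) p
      = dd vX (dd vX (omu F)) p - dd vX (dd vY F) p - dd vY (dd vX F) p := by
    rw [om_dd hs (sm_dd hs hF vX) hp vX, omL_vX]
    have h2 : EqOn (omu (dd vX F)) (fun q => dd vX (omu F) q - dd vY F q) s := by
      intro q hq
      rw [om_dd hs hF hq vX, omL_vX]
    rw [dd_congr hs h2 vX hp, dd_sub' hs (sm_dd hs (sm_om hs hF) vX) (sm_dd hs hF vY) hp]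
  -- om dYdY
  have hY : omu (dd vY (dd vY F)) p
      = dd vY (dd vY (omu F)) p + dd vY (dd vX F) p + dd vX (dd vY F) p := by
    rw [om_dd hs (sm_dd hs hF vY) hp vY, omL_vY, dd_neg]
    have h2 : EqOn (omu (dd vY F)) (fun q => dd vY (omu F) q + dd vX F q) s := by
      intro q hq
      rw [om_dd hs hF hq vY, omL_vY, dd_neg, sub_neg_eq_add]
    have hadd : dd vY (fun q => dd vY (omu F) q + dd vX F q) p
        = dd vY (dd vY (omu F)) p + dd vY (dd vX F) p :=
      AV_add (diffAt hs (sm_dd hs (sm_om hs hF) vY) hp) (diffAt hs (sm_dd hs hF vX) hp) _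
    rw [dd_congr hs h2 vY hp, hadd]
    ring
  rw [e1, hT, hX, hY]
  show _ = dd vT (dd vT (omu F)) p - dd vX (dd vX (omu F)) p - dd vY (dd vY (omu F)) p
  ring

end WVAux
end part3
section part4
namespace WVAux
variable {s : Set E3} {F G : E3 → ℝ} {p : E3}

lemma iter_loc {o : (E3 → ℝ) → E3 → ℝ}
    (hloc : ∀ F G : E3 → ℝ, EqOn F G s → EqOn (o F) (o G) s)
    (h : EqOn F G s) : ∀ k, EqOn (o^[k] F) (o^[k] G) s := by
  intro k
  induction k with
  | zero => exact h
  | succ n ih =>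
    rw [Function.iterate_succ_apply', Function.iterate_succ_apply']
    exact hloc _ _ ih

lemma iter_sm {o : (E3 → ℝ) → E3 → ℝ}
    (hsm : ∀ F : E3 → ℝ, SOn F s → SOn (o F) s) (hF : SOn F s) :
    ∀ k, SOn (o^[k] F) s := by
  intro k
  induction k with
  | zero => exact hF
  | succ n ih =>
    rw [Function.iterate_succ_apply']
    exact hsm _ ih

lemma iter_box {o o' : (E3 → ℝ) → E3 → ℝ}
    (hsm' : ∀ G : E3 → ℝ, SOn G s → SOn (o' G) s)
    (hstep : ∀ G : E3 → ℝ, SOn G s → EqOn (o (boxu G)) (boxu (o' G)) s)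
    (hloc : ∀ F G : E3 → ℝ, EqOn F G s → EqOn (o F) (o G) s)
    (hF : SOn F s) : ∀ k, EqOn (o^[k] (boxu F)) (boxu (o'^[k] F)) s := by
  intro k
  induction k with
  | zero => exact fun p _ => rfl
  | succ n ih =>
    rw [Function.iterate_succ_apply', Function.iterate_succ_apply']
    exact (hloc _ _ ih).trans (hstep _ (iter_sm hsm' hF n))

lemma main_iii_u (hs : IsOpen s) (hF : SOn F s) (a0 a1 a2 a3 a4 : ℕ) :
    EqOn ((dd vT)^[a0] ((dd vX)^[a1] ((dd vY)^[a2] (zpu^[a3] (omu^[a4] (boxu F))))))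
      (boxu ((dd vT)^[a0] ((dd vX)^[a1] ((dd vY)^[a2] (zmu^[a3] (omu^[a4] F)))))) s := by
  have s4 : SOn (omu^[a4] F) s := iter_sm (fun _ h => sm_om hs h) hF a4
  have h4 : EqOn (omu^[a4] (boxu F)) (boxu (omu^[a4] F)) s :=
    iter_box (fun _ h => sm_om hs h) (fun _ h => om_box hs h) (fun _ _ h => om_congr hs h) hF a4
  have s3 : SOn (zmu^[a3] (omu^[a4] F)) s := iter_sm (fun _ h => sm_zm hs h) s4 a3
  have h3 : EqOn (zpu^[a3] (omu^[a4] (boxu F))) (boxu (zmu^[a3] (omu^[a4] F))) s :=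
    (iter_loc (fun _ _ h => zp_congr hs h) h4 a3).trans
      (iter_box (fun _ h => sm_zm hs h) (fun _ h => zp_box hs h) (fun _ _ h => zp_congr hs h)
        s4 a3)
  have s2 : SOn ((dd vY)^[a2] (zmu^[a3] (omu^[a4] F))) s :=
    iter_sm (fun _ h => sm_dd hs h vY) s3 a2
  have h2 : EqOn ((dd vY)^[a2] (zpu^[a3] (omu^[a4] (boxu F))))
      (boxu ((dd vY)^[a2] (zmu^[a3] (omu^[a4] F)))) s :=
    (iter_loc (fun _ _ h => dd_congr hs h vY) h3 a2).trans
      (iter_box (fun _ h => sm_dd hs h vY) (fun _ h => dd_box hs h vY)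
        (fun _ _ h => dd_congr hs h vY) s3 a2)
  have s1 : SOn ((dd vX)^[a1] ((dd vY)^[a2] (zmu^[a3] (omu^[a4] F)))) s :=
    iter_sm (fun _ h => sm_dd hs h vX) s2 a1
  have h1 : EqOn ((dd vX)^[a1] ((dd vY)^[a2] (zpu^[a3] (omu^[a4] (boxu F)))))
      (boxu ((dd vX)^[a1] ((dd vY)^[a2] (zmu^[a3] (omu^[a4] F))))) s :=
    (iter_loc (fun _ _ h => dd_congr hs h vX) h2 a1).trans
      (iter_box (fun _ h => sm_dd hs h vX) (fun _ h => dd_box hs h vX)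
        (fun _ _ h => dd_congr hs h vX) s2 a1)
  exact (iter_loc (fun _ _ h => dd_congr hs h vT) h1 a0).trans
    (iter_box (fun _ h => sm_dd hs h vT) (fun _ h => dd_box hs h vT)
      (fun _ _ h => dd_congr hs h vT) s1 a0)

end WVAux
end part4
section part5
namespace WVAux
variable {s : Set E3} {f g : ℝ → ℝ → ℝ → ℝ}

lemma bridge_Dt_pt {t x y : ℝ} (h : DifferentiableAt ℝ (uc f) (t, x, y)) :
    Dt f t x y = dd vT (uc f) (t, x, y) := by
  have hι : HasDerivAt (fun s : ℝ => ((s, x, y) : E3)) ((1 : ℝ), (0 : ℝ), (0 : ℝ)) t :=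
    (hasDerivAt_id t).prodMk ((hasDerivAt_const t x).prodMk (hasDerivAt_const t y))
  have h2 : HasDerivAt (uc f ∘ fun s : ℝ => ((s, x, y) : E3))
      (fderiv ℝ (uc f) (t, x, y) ((1 : ℝ), (0 : ℝ), (0 : ℝ))) t :=
    HasFDerivAt.comp_hasDerivAt (hf := hι) (hl := by exact h.hasFDerivAt)
  exact h2.deriv

lemma bridge_Dx_pt {t x y : ℝ} (h : DifferentiableAt ℝ (uc f) (t, x, y)) :
    Dx f t x y = dd vX (uc f) (t, x, y) := by
  have hι : HasDerivAt (fun a : ℝ => ((t, a, y) : E3)) ((0 : ℝ), (1 : ℝ), (0 : ℝ)) x :=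
    (hasDerivAt_const x t).prodMk ((hasDerivAt_id x).prodMk (hasDerivAt_const x y))
  have h2 : HasDerivAt (uc f ∘ fun a : ℝ => ((t, a, y) : E3))
      (fderiv ℝ (uc f) (t, x, y) ((0 : ℝ), (1 : ℝ), (0 : ℝ))) x :=
    HasFDerivAt.comp_hasDerivAt (hf := hι) (hl := by exact h.hasFDerivAt)
  exact h2.deriv

lemma bridge_Dy_pt {t x y : ℝ} (h : DifferentiableAt ℝ (uc f) (t, x, y)) :
    Dy f t x y = dd vY (uc f) (t, x, y) := by
  have hι : HasDerivAt (fun b : ℝ => ((t, x, b) : E3)) ((0 : ℝ), (0 : ℝ), (1 : ℝ)) y :=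
    (hasDerivAt_const y t).prodMk ((hasDerivAt_const y x).prodMk (hasDerivAt_id y))
  have h2 : HasDerivAt (uc f ∘ fun b : ℝ => ((t, x, b) : E3))
      (fderiv ℝ (uc f) (t, x, y) ((0 : ℝ), (0 : ℝ), (1 : ℝ))) y :=
    HasFDerivAt.comp_hasDerivAt (hf := hι) (hl := by exact h.hasFDerivAt)
  exact h2.deriv

lemma bridge_Sc_pt {t x y : ℝ} (h : DifferentiableAt ℝ (uc f) (t, x, y)) :
    Sc f t x y = ssu (uc f) (t, x, y) := by
  have hv : ((t, x, y) : E3) = t • vT + x • vX + y • vY := by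
    simp [vT, vX, vY, Prod.ext_iff]
  have hssu : ssu (uc f) (t, x, y) = t * dd vT (uc f) (t, x, y)
      + x * dd vX (uc f) (t, x, y) + y * dd vY (uc f) (t, x, y) := by
    show fderiv ℝ (uc f) (t, x, y) (id ((t, x, y) : E3)) = _
    rw [id_eq, show (fderiv ℝ (uc f) (t, x, y)) ((t, x, y) : E3)
        = (fderiv ℝ (uc f) (t, x, y)) (t • vT + x • vX + y • vY) from congrArg _ hv,
      ContinuousLinearMap.map_add, ContinuousLinearMap.map_add,
      ContinuousLinearMap.map_smul, ContinuousLinearMap.map_smul,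
      ContinuousLinearMap.map_smul]
    simp [dd, AV, smul_eq_mul]
  rw [hssu]
  show t * Dt f t x y + x * Dx f t x y + y * Dy f t x y = _
  rw [bridge_Dt_pt h, bridge_Dx_pt h, bridge_Dy_pt h]

lemma bridge_Om_pt {t x y : ℝ} (h : DifferentiableAt ℝ (uc f) (t, x, y)) :
    Om f t x y = omu (uc f) (t, x, y) := by
  have hv : omL ((t, x, y) : E3) = x • vY - y • vX := by
    simp [omL_apply, vX, vY, Prod.ext_iff]
  have homu : omu (uc f) (t, x, y) = x * dd vY (uc f) (t, x, y)
      - y * dd vX (uc f) (t, x, y) := by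
    show fderiv ℝ (uc f) (t, x, y) (omL ((t, x, y) : E3)) = _
    rw [hv, ContinuousLinearMap.map_sub, ContinuousLinearMap.map_smul,
      ContinuousLinearMap.map_smul]
    simp [dd, AV, smul_eq_mul]
  rw [homu]
  show x * Dy f t x y - y * Dx f t x y = _
  rw [bridge_Dx_pt h, bridge_Dy_pt h]

-- bundled bridges
lemma br_Dt (hs : IsOpen s) (hf : SOn (uc f) s) :
    SOn (uc (Dt f)) s ∧ EqOn (uc (Dt f)) (dd vT (uc f)) s := by
  have he : EqOn (uc (Dt f)) (dd vT (uc f)) s := by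
    rintro ⟨t, x, y⟩ hp
    exact bridge_Dt_pt (diffAt hs hf hp)
  exact ⟨(sm_dd hs hf vT).congr he, he⟩

lemma br_Dx (hs : IsOpen s) (hf : SOn (uc f) s) :
    SOn (uc (Dx f)) s ∧ EqOn (uc (Dx f)) (dd vX (uc f)) s := by
  have he : EqOn (uc (Dx f)) (dd vX (uc f)) s := by
    rintro ⟨t, x, y⟩ hp
    exact bridge_Dx_pt (diffAt hs hf hp)
  exact ⟨(sm_dd hs hf vX).congr he, he⟩

lemma br_Dy (hs : IsOpen s) (hf : SOn (uc f) s) :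
    SOn (uc (Dy f)) s ∧ EqOn (uc (Dy f)) (dd vY (uc f)) s := by
  have he : EqOn (uc (Dy f)) (dd vY (uc f)) s := by
    rintro ⟨t, x, y⟩ hp
    exact bridge_Dy_pt (diffAt hs hf hp)
  exact ⟨(sm_dd hs hf vY).congr he, he⟩

lemma br_Om (hs : IsOpen s) (hf : SOn (uc f) s) :
    SOn (uc (Om f)) s ∧ EqOn (uc (Om f)) (omu (uc f)) s := by
  have he : EqOn (uc (Om f)) (omu (uc f)) s := by
    rintro ⟨t, x, y⟩ hp
    exact bridge_Om_pt (diffAt hs hf hp)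
  exact ⟨(sm_om hs hf).congr he, he⟩

lemma br_Zm (hs : IsOpen s) (hf : SOn (uc f) s) :
    SOn (uc (Zm f)) s ∧ EqOn (uc (Zm f)) (zmu (uc f)) s := by
  have he : EqOn (uc (Zm f)) (zmu (uc f)) s := by
    rintro ⟨t, x, y⟩ hp
    show Sc f t x y - f t x y = ssu (uc f) (t, x, y) - uc f (t, x, y)
    rw [bridge_Sc_pt (diffAt hs hf hp)]
    rfl
  exact ⟨(sm_zm hs hf).congr he, he⟩

lemma br_Zp (hs : IsOpen s) (hf : SOn (uc f) s) :
    SOn (uc (Zp f)) s ∧ EqOn (uc (Zp f)) (zpu (uc f)) s := by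
  have he : EqOn (uc (Zp f)) (zpu (uc f)) s := by
    rintro ⟨t, x, y⟩ hp
    show Sc f t x y + f t x y = ssu (uc f) (t, x, y) + uc f (t, x, y)
    rw [bridge_Sc_pt (diffAt hs hf hp)]
    rfl
  exact ⟨(sm_zp hs hf).congr he, he⟩

lemma br_Box (hs : IsOpen s) (hf : SOn (uc f) s) :
    SOn (uc (Box f)) s ∧ EqOn (uc (Box f)) (boxu (uc f)) s := by
  obtain ⟨sT, eT⟩ := br_Dt hs hf
  obtain ⟨sX, eX⟩ := br_Dx hs hf
  obtain ⟨sY, eY⟩ := br_Dy hs hf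
  have he : EqOn (uc (Box f)) (boxu (uc f)) s := by
    rintro ⟨t, x, y⟩ hp
    show Dt (Dt f) t x y - Dx (Dx f) t x y - Dy (Dy f) t x y = boxu (uc f) (t, x, y)
    rw [bridge_Dt_pt (diffAt hs sT hp), bridge_Dx_pt (diffAt hs sX hp),
      bridge_Dy_pt (diffAt hs sY hp), dd_congr hs eT vT hp, dd_congr hs eX vX hp,
      dd_congr hs eY vY hp]
    rfl
  exact ⟨(sm_box hs hf).congr he, he⟩

lemma iter_bridge {O : (ℝ → ℝ → ℝ → ℝ) → ℝ → ℝ → ℝ → ℝ} {o : (E3 → ℝ) → E3 → ℝ}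
    (hbr : ∀ g : ℝ → ℝ → ℝ → ℝ, SOn (uc g) s → SOn (uc (O g)) s ∧ EqOn (uc (O g)) (o (uc g)) s)
    (hloc : ∀ F G : E3 → ℝ, EqOn F G s → EqOn (o F) (o G) s)
    (hg : SOn (uc g) s) :
    ∀ k, SOn (uc (O^[k] g)) s ∧ EqOn (uc (O^[k] g)) (o^[k] (uc g)) s := by
  intro k
  induction k with
  | zero => exact ⟨hg, fun p _ => rfl⟩
  | succ n ih =>
    rw [Function.iterate_succ_apply', Function.iterate_succ_apply']
    obtain ⟨s1, e1⟩ := ih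
    obtain ⟨s2, e2⟩ := hbr _ s1
    exact ⟨s2, e2.trans (hloc _ _ e1)⟩

end WVAux
end part5
section part6
namespace WVAux

def Uset : Set E3 := {p | -1 < p.1}

lemma isOpen_U : IsOpen Uset := isOpen_lt continuous_const continuous_fst

lemma U_ne {p : E3} (hp : p ∈ Uset) : 1 + p.1 ≠ 0 := by
  have : -1 < p.1 := hp
  intro h
  linarith

def w1 : E3 → ℝ := fun p => (1 + p.1)⁻¹
def w2 : E3 → ℝ := fun p => ((1 + p.1) ^ 2)⁻¹
def w3 : E3 → ℝ := fun p => ((1 + p.1) ^ 3)⁻¹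

lemma hbase : ContDiff ℝ (⊤ : ℕ∞) (fun p : E3 => 1 + p.1) :=
  contDiff_const.add contDiff_fst

lemma sm_w1 : SOn w1 Uset :=
  hbase.contDiffOn.inv fun p hp => U_ne hp

lemma sm_w2 : SOn w2 Uset :=
  (hbase.pow 2).contDiffOn.inv fun p hp => pow_ne_zero 2 (U_ne hp)

lemma sm_w3 : SOn w3 Uset :=
  (hbase.pow 3).contDiffOn.inv fun p hp => pow_ne_zero 3 (U_ne hp)

lemma hfst {p : E3} : HasFDerivAt (fun q : E3 => 1 + q.1)
    (ContinuousLinearMap.fst ℝ ℝ (ℝ × ℝ)) p :=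
  (ContinuousLinearMap.fst ℝ ℝ (ℝ × ℝ)).hasFDerivAt.const_add 1

lemma hasF_w1 {p : E3} (hp : p ∈ Uset) :
    HasFDerivAt w1 ((-(((1 + p.1) ^ 2)⁻¹)) • (ContinuousLinearMap.fst ℝ ℝ (ℝ × ℝ))) p := by
  have hinv : HasDerivAt (fun y : ℝ => y⁻¹) (-(((1 + p.1) ^ 2)⁻¹)) (1 + p.1) :=
    hasDerivAt_inv (U_ne hp)
  exact hinv.comp_hasFDerivAt p hfst

lemma fderiv_w1 {p : E3} (hp : p ∈ Uset) (v : E3) :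
    fderiv ℝ w1 p v = -(w2 p) * v.1 := by
  rw [(hasF_w1 hp).fderiv]
  simp [w2]

lemma hasF_w2 {p : E3} (hp : p ∈ Uset) :
    HasFDerivAt w2 ((-(2 * (1 + p.1) ^ (2 - 1)) / ((1 + p.1) ^ 2) ^ 2) •
      (ContinuousLinearMap.fst ℝ ℝ (ℝ × ℝ))) p := by
  have hinv : HasDerivAt (fun y : ℝ => (y ^ 2)⁻¹)
      (-(2 * (1 + p.1) ^ (2 - 1)) / ((1 + p.1) ^ 2) ^ 2) (1 + p.1) :=
    (hasDerivAt_pow 2 (1 + p.1)).inv (pow_ne_zero 2 (U_ne hp))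
  exact hinv.comp_hasFDerivAt (h₂ := fun y : ℝ => (y ^ 2)⁻¹) p hfst

lemma fderiv_w2 {p : E3} (hp : p ∈ Uset) (v : E3) :
    fderiv ℝ w2 p v = -(2 * w3 p) * v.1 := by
  rw [(hasF_w2 hp).fderiv]
  have hne := U_ne hp
  simp only [ContinuousLinearMap.coe_smul', Pi.smul_apply, ContinuousLinearMap.coe_fst',
    smul_eq_mul, w3, pow_one]
  rw [div_eq_mul_inv, ← pow_mul]
  have h4 : ((1 + p.1) ^ (2 * 2) : ℝ)⁻¹ = ((1 + p.1) ^ 3)⁻¹ * (1 + p.1)⁻¹ := by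
    rw [← mul_inv, ← pow_succ]
  rw [h4]
  field_simp
  ring

end WVAux
end part6
section part7
namespace WVAux
variable {G F : E3 → ℝ}

lemma step_i (hG : SOn G Uset) :
    EqOn (zpu (fun q => w1 q * dd vT G q))
      (fun q => w1 q * dd vT (zmu G) q + w2 q * dd vT G q) Uset := by
  intro p hp
  have hU := isOpen_U
  have hdG : DifferentiableAt ℝ (dd vT G) p := diffAt hU (sm_dd hU hG vT) hp
  have hw1 : DifferentiableAt ℝ w1 p := (hasF_w1 hp).differentiableAt
  have e0 : zpu (fun q => w1 q * dd vT G q) p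
      = AV id (fun q => w1 q * dd vT G q) p + w1 p * dd vT G p := rfl
  have e1 : AV id (fun q => w1 q * dd vT G q) p
      = w1 p * AV id (dd vT G) p + fderiv ℝ w1 p (id p) * dd vT G p :=
    AV_mul hw1 hdG id
  have e2 : AV id (dd vT G) p = dd vT (ssu G) p - dd vT G p := ss_dd hU hG hp vT
  have e3 : fderiv ℝ w1 p (id p) = -(w2 p) * p.1 := fderiv_w1 hp (id p)
  have e4 : dd vT (zmu G) p = dd vT (ssu G) p - dd vT G p :=
    dd_sub' hU (sm_ss hU hG) hG hp vT
  rw [e0, e1, e2, e3]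
  show _ = w1 p * dd vT (zmu G) p + w2 p * dd vT G p
  rw [e4]
  have hne := U_ne hp
  have hw : w1 p - p.1 * w2 p = w2 p := by
    simp only [w1, w2]
    field_simp
    ring
  linear_combination dd vT G p * hw

end WVAux
end part7
section part7b
namespace WVAux
variable {G F : E3 → ℝ}

lemma step_ii (hG : SOn G Uset) :
    EqOn (zpu (fun q => w2 q * G q))
      (fun q => w2 q * zmu G q + 2 * w3 q * G q) Uset := by
  intro p hp
  have hU := isOpen_U
  have hdG : DifferentiableAt ℝ G p := diffAt hU hG hp
  have hw2 : DifferentiableAt ℝ w2 p := (hasF_w2 hp).differentiableAt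
  have e0 : zpu (fun q => w2 q * G q) p
      = AV id (fun q => w2 q * G q) p + w2 p * G p := rfl
  have e1 : AV id (fun q => w2 q * G q) p
      = w2 p * AV id G p + fderiv ℝ w2 p (id p) * G p := AV_mul hw2 hdG id
  have e3 : fderiv ℝ w2 p (id p) = -(2 * w3 p) * p.1 := fderiv_w2 hp (id p)
  rw [e0, e1, e3]
  show _ = w2 p * zmu G p + 2 * w3 p * G p
  show _ = w2 p * (ssu G p - G p) + 2 * w3 p * G p
  have hne := U_ne hp
  have hw : 2 * w2 p - 2 * p.1 * w3 p = 2 * w3 p := by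
    simp only [w2, w3]
    field_simp
    ring
  have : AV id G p = ssu G p := rfl
  rw [this]
  linear_combination G p * hw
  
lemma main_abstract {A B : (E3 → ℝ) → E3 → ℝ}
    (hAsm : ∀ G : E3 → ℝ, SOn G Uset → SOn (A G) Uset)
    (hBsm : ∀ G : E3 → ℝ, SOn G Uset → SOn (B G) Uset)
    (hstep : ∀ G : E3 → ℝ, SOn G Uset →
      EqOn (zpu (A G)) (fun q => A (zmu G) q + B G q) Uset)
    (hF : SOn F Uset) :
    ∀ k : ℕ, 1 ≤ k → EqOn (zpu^[k] (A F))
      (fun q => A (zmu^[k] F) q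
        + ∑ j ∈ Finset.range k, zpu^[k - 1 - j] (B (zmu^[j] F)) q) Uset := by
  have hU := isOpen_U
  have hsmZ : ∀ j : ℕ, SOn (zmu^[j] F) Uset :=
    fun j => iter_sm (fun _ h => sm_zm hU h) hF j
  have hsmT : ∀ m j : ℕ, SOn (zpu^[m] (B (zmu^[j] F))) Uset :=
    fun m j => iter_sm (fun _ h => sm_zp hU h) (hBsm _ (hsmZ j)) m
  intro k hk
  induction k with
  | zero => omega
  | succ n ih =>
    by_cases hn : n = 0
    · subst hn
      intro p hp
      have h1 := hstep F hF hp
      simpa using h1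
    · have hn1 : 1 ≤ n := Nat.one_le_iff_ne_zero.2 hn
      have IH := ih hn1
      intro p hp
      have sA : SOn (A (zmu^[n] F)) Uset := hAsm _ (hsmZ n)
      have sSum : SOn (fun q => ∑ j ∈ Finset.range n, zpu^[n - 1 - j] (B (zmu^[j] F)) q)
          Uset := ContDiffOn.sum fun j _ => hsmT (n - 1 - j) j
      have e1 : zpu^[n + 1] (A F) p = zpu (zpu^[n] (A F)) p := by
        rw [Function.iterate_succ_apply']
      have e2 : zpu (zpu^[n] (A F)) p
          = zpu (fun q => A (zmu^[n] F) q
              + ∑ j ∈ Finset.range n, zpu^[n - 1 - j] (B (zmu^[j] F)) q) p :=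
        zp_congr hU IH hp
      have e3 : zpu (fun q => A (zmu^[n] F) q
            + ∑ j ∈ Finset.range n, zpu^[n - 1 - j] (B (zmu^[j] F)) q) p
          = zpu (A (zmu^[n] F)) p
            + zpu (fun q => ∑ j ∈ Finset.range n, zpu^[n - 1 - j] (B (zmu^[j] F)) q) p :=
        zpu_add (diffAt hU sA hp) (diffAt hU sSum hp)
      have e4 : zpu (A (zmu^[n] F)) p = A (zmu (zmu^[n] F)) p + B (zmu^[n] F) p :=
        hstep _ (hsmZ n) hp
      have e5 : zpu (fun q => ∑ j ∈ Finset.range n, zpu^[n - 1 - j] (B (zmu^[j] F)) q) p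
          = ∑ j ∈ Finset.range n, zpu (zpu^[n - 1 - j] (B (zmu^[j] F))) p :=
        zpu_sum (Finset.range n) _ (fun j _ => diffAt hU (hsmT (n - 1 - j) j) hp)
      have e6 : ∀ j ∈ Finset.range n,
          zpu (zpu^[n - 1 - j] (B (zmu^[j] F))) p = zpu^[n - j] (B (zmu^[j] F)) p := by
        intro j hj
        have hjn : j < n := Finset.mem_range.1 hj
        have h1 : n - j = (n - 1 - j) + 1 := by omega
        rw [h1, Function.iterate_succ_apply']
      rw [e1, e2, e3, e4, e5, Finset.sum_congr rfl e6]
      have e7 : zmu (zmu^[n] F) = zmu^[n + 1] F := (Function.iterate_succ_apply' zmu n F).symm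
      rw [e7]
      have e8 : ∑ j ∈ Finset.range (n + 1), zpu^[n + 1 - 1 - j] (B (zmu^[j] F)) p
          = (∑ j ∈ Finset.range n, zpu^[n - j] (B (zmu^[j] F)) p) + B (zmu^[n] F) p := by
        rw [Finset.sum_range_succ]
        have h0 : n + 1 - 1 - n = 0 := by omega
        rw [h0, Function.iterate_zero_apply]
        rfl
      show _ = A (zmu^[n+1] F) p + ∑ j ∈ Finset.range (n + 1), zpu^[n + 1 - 1 - j] (B (zmu^[j] F)) p
      rw [e8]
      ring

end WVAux
end part7b

open WVAux in
/-- iterated commutation identities for `Ẑ₃ = S+1`, `Z₃ = S-1` with the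
damping weights, and commutation of `Ẑ^α` with the wave operator. -/
theorem iterated_scaling_commutators
    (f : ℝ → ℝ → ℝ → ℝ) (hf : Smooth3 f) :
    (∀ k : ℕ, 1 ≤ k → ∀ t x y : ℝ, -1 < t →
      Zp^[k] (fun t x y => (1 + t)⁻¹ * Dt f t x y) t x y
          - (1 + t)⁻¹ * Dt (Zm^[k] f) t x y
        = ∑ j ∈ Finset.range k,
            Zp^[k - 1 - j] (fun t x y => ((1 + t) ^ 2)⁻¹ * Dt (Zm^[j] f) t x y) t x y) ∧
    (∀ k : ℕ, 1 ≤ k → ∀ t x y : ℝ, -1 < t →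
      Zp^[k] (fun t x y => ((1 + t) ^ 2)⁻¹ * f t x y) t x y
          - ((1 + t) ^ 2)⁻¹ * Zm^[k] f t x y
        = ∑ j ∈ Finset.range k,
            Zp^[k - 1 - j] (fun t x y => 2 * ((1 + t) ^ 3)⁻¹ * Zm^[j] f t x y) t x y) ∧
    (∀ α : Fin 5 → ℕ, ∀ t x y : ℝ,
      ZpPow α (Box f) t x y - Box (ZmPow α f) t x y = 0) := by
  have hU := isOpen_U
  have hfU : SOn (uc f) Uset := hf.contDiffOn
  have hfuniv : SOn (uc f) univ := hf.contDiffOn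
  -- iterated bridges for Zm on Uset
  have hzm : ∀ j : ℕ, SOn (uc (Zm^[j] f)) Uset ∧ EqOn (uc (Zm^[j] f)) (zmu^[j] (uc f)) Uset :=
    fun j => iter_bridge (fun g hg => br_Zm hU hg) (fun _ _ h => zm_congr hU h) hfU j
  refine ⟨?_, ?_, ?_⟩
  · -- part (i)
    intro k hk t x y ht
    have hp : ((t, x, y) : E3) ∈ Uset := ht
    set F := uc f with hFdef
    set A : (E3 → ℝ) → E3 → ℝ := fun G q => w1 q * dd vT G q with hA
    set B : (E3 → ℝ) → E3 → ℝ := fun G q => w2 q * dd vT G q with hB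
    have hAsm : ∀ G : E3 → ℝ, SOn G Uset → SOn (A G) Uset :=
      fun G h => sm_w1.mul (sm_dd hU h vT)
    have hBsm : ∀ G : E3 → ℝ, SOn G Uset → SOn (B G) Uset :=
      fun G h => sm_w2.mul (sm_dd hU h vT)
    have hstep : ∀ G : E3 → ℝ, SOn G Uset →
        EqOn (zpu (A G)) (fun q => A (zmu G) q + B G q) Uset := fun G h => step_i h
    have main := main_abstract hAsm hBsm hstep hfU k hk
    -- bridge the outer curried function
    have eg : EqOn (uc (fun t x y => (1 + t)⁻¹ * Dt f t x y)) (A F) Uset := by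
      rintro ⟨t', x', y'⟩ hp'
      show (1 + t')⁻¹ * Dt f t' x' y' = w1 (t', x', y') * dd vT F (t', x', y')
      rw [bridge_Dt_pt (diffAt hU hfU hp')]
      rfl
    have sg : SOn (uc (fun t x y => (1 + t)⁻¹ * Dt f t x y)) Uset := (hAsm F hfU).congr eg
    have cZ := iter_bridge (fun g hg => br_Zp hU hg) (fun _ _ h => zp_congr hU h) sg k
    have h1 : Zp^[k] (fun t x y => (1 + t)⁻¹ * Dt f t x y) t x y
        = zpu^[k] (A F) (t, x, y) :=
      (cZ.2 hp).trans (iter_loc (fun _ _ h => zp_congr hU h) eg k hp)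
    have h2 : (1 + t)⁻¹ * Dt (Zm^[k] f) t x y
        = w1 ((t, x, y) : E3) * dd vT (zmu^[k] F) (t, x, y) := by
      rw [bridge_Dt_pt (diffAt hU (hzm k).1 hp), dd_congr hU (hzm k).2 vT hp]
      rfl
    have h3 : ∀ j ∈ Finset.range k,
        Zp^[k - 1 - j] (fun t x y => ((1 + t) ^ 2)⁻¹ * Dt (Zm^[j] f) t x y) t x y
          = zpu^[k - 1 - j] (B (zmu^[j] F)) (t, x, y) := by
      intro j _
      have egj : EqOn (uc (fun t x y => ((1 + t) ^ 2)⁻¹ * Dt (Zm^[j] f) t x y))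
          (B (zmu^[j] F)) Uset := by
        rintro ⟨t', x', y'⟩ hp'
        show ((1 + t') ^ 2)⁻¹ * Dt (Zm^[j] f) t' x' y'
          = w2 (t', x', y') * dd vT (zmu^[j] F) (t', x', y')
        rw [bridge_Dt_pt (diffAt hU (hzm j).1 hp'), dd_congr hU (hzm j).2 vT hp']
        rfl
      have sgj : SOn (uc (fun t x y => ((1 + t) ^ 2)⁻¹ * Dt (Zm^[j] f) t x y)) Uset :=
        (hBsm _ (iter_sm (fun _ h => sm_zm hU h) hfU j)).congr egj
      have cj := iter_bridge (fun g hg => br_Zp hU hg) (fun _ _ h => zp_congr hU h) sgj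
        (k - 1 - j)
      exact (cj.2 hp).trans (iter_loc (fun _ _ h => zp_congr hU h) egj (k - 1 - j) hp)
    rw [h1, h2, Finset.sum_congr rfl h3, main hp]
    show w1 ((t,x,y) : E3) * dd vT (zmu^[k] F) (t,x,y) + _ - _ = _
    ring
  · -- part (ii)
    intro k hk t x y ht
    have hp : ((t, x, y) : E3) ∈ Uset := ht
    set F := uc f with hFdef
    set A : (E3 → ℝ) → E3 → ℝ := fun G q => w2 q * G q with hA
    set B : (E3 → ℝ) → E3 → ℝ := fun G q => 2 * w3 q * G q with hB
    have hAsm : ∀ G : E3 → ℝ, SOn G Uset → SOn (A G) Uset :=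
      fun G h => sm_w2.mul h
    have hBsm : ∀ G : E3 → ℝ, SOn G Uset → SOn (B G) Uset :=
      fun G h => (contDiffOn_const.mul sm_w3).mul h
    have hstep : ∀ G : E3 → ℝ, SOn G Uset →
        EqOn (zpu (A G)) (fun q => A (zmu G) q + B G q) Uset := fun G h => step_ii h
    have main := main_abstract hAsm hBsm hstep hfU k hk
    have eg : EqOn (uc (fun t x y => ((1 + t) ^ 2)⁻¹ * f t x y)) (A F) Uset :=
      fun _ _ => rfl
    have sg : SOn (uc (fun t x y => ((1 + t) ^ 2)⁻¹ * f t x y)) Uset := (hAsm F hfU).congr eg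
    have cZ := iter_bridge (fun g hg => br_Zp hU hg) (fun _ _ h => zp_congr hU h) sg k
    have h1 : Zp^[k] (fun t x y => ((1 + t) ^ 2)⁻¹ * f t x y) t x y
        = zpu^[k] (A F) (t, x, y) :=
      (cZ.2 hp).trans (iter_loc (fun _ _ h => zp_congr hU h) eg k hp)
    have h2 : ((1 + t) ^ 2)⁻¹ * Zm^[k] f t x y
        = w2 ((t, x, y) : E3) * zmu^[k] F (t, x, y) := by
      have := (hzm k).2 hp
      show ((1 + t) ^ 2)⁻¹ * uc (Zm^[k] f) (t, x, y) = _
      rw [this]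
      rfl
    have h3 : ∀ j ∈ Finset.range k,
        Zp^[k - 1 - j] (fun t x y => 2 * ((1 + t) ^ 3)⁻¹ * Zm^[j] f t x y) t x y
          = zpu^[k - 1 - j] (B (zmu^[j] F)) (t, x, y) := by
      intro j _
      have egj : EqOn (uc (fun t x y => 2 * ((1 + t) ^ 3)⁻¹ * Zm^[j] f t x y))
          (B (zmu^[j] F)) Uset := by
        rintro ⟨t', x', y'⟩ hp'
        show 2 * ((1 + t') ^ 3)⁻¹ * uc (Zm^[j] f) (t', x', y')
          = 2 * w3 (t', x', y') * zmu^[j] F (t', x', y')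
        rw [(hzm j).2 hp']
        rfl
      have sgj : SOn (uc (fun t x y => 2 * ((1 + t) ^ 3)⁻¹ * Zm^[j] f t x y)) Uset :=
        (hBsm _ (iter_sm (fun _ h => sm_zm hU h) hfU j)).congr egj
      have cj := iter_bridge (fun g hg => br_Zp hU hg) (fun _ _ h => zp_congr hU h) sgj
        (k - 1 - j)
      exact (cj.2 hp).trans (iter_loc (fun _ _ h => zp_congr hU h) egj (k - 1 - j) hp)
    rw [h1, h2, Finset.sum_congr rfl h3, main hp]
    show w2 ((t,x,y) : E3) * zmu^[k] F (t,x,y) + _ - _ = _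
    ring
  · -- part (iii)
    intro α t x y
    have hs : IsOpen (univ : Set E3) := isOpen_univ
    have hp : ((t, x, y) : E3) ∈ (univ : Set E3) := trivial
    set F := uc f with hFdef
    set a0 := α 0; set a1 := α 1; set a2 := α 2; set a3 := α 3; set a4 := α 4
    have hbox := br_Box hs hfuniv
    -- LHS chain
    have c4 := iter_bridge (s := univ) (fun g hg => br_Om hs hg)
      (fun _ _ h => om_congr hs h) hbox.1 a4
    have e4 : EqOn (uc (Om^[a4] (Box f))) (omu^[a4] (boxu F)) univ :=
      c4.2.trans (iter_loc (fun _ _ h => om_congr hs h) hbox.2 a4)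
    have c3 := iter_bridge (s := univ) (fun g hg => br_Zp hs hg)
      (fun _ _ h => zp_congr hs h) c4.1 a3
    have e3 : EqOn (uc (Zp^[a3] (Om^[a4] (Box f)))) (zpu^[a3] (omu^[a4] (boxu F))) univ :=
      c3.2.trans (iter_loc (fun _ _ h => zp_congr hs h) e4 a3)
    have c2 := iter_bridge (s := univ) (fun g hg => br_Dy hs hg)
      (fun _ _ h => dd_congr hs h vY) c3.1 a2
    have e2 : EqOn (uc (Dy^[a2] (Zp^[a3] (Om^[a4] (Box f)))))
        ((dd vY)^[a2] (zpu^[a3] (omu^[a4] (boxu F)))) univ :=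
      c2.2.trans (iter_loc (fun _ _ h => dd_congr hs h vY) e3 a2)
    have c1 := iter_bridge (s := univ) (fun g hg => br_Dx hs hg)
      (fun _ _ h => dd_congr hs h vX) c2.1 a1
    have e1 : EqOn (uc (Dx^[a1] (Dy^[a2] (Zp^[a3] (Om^[a4] (Box f))))))
        ((dd vX)^[a1] ((dd vY)^[a2] (zpu^[a3] (omu^[a4] (boxu F))))) univ :=
      c1.2.trans (iter_loc (fun _ _ h => dd_congr hs h vX) e2 a1)
    have c0 := iter_bridge (s := univ) (fun g hg => br_Dt hs hg)
      (fun _ _ h => dd_congr hs h vT) c1.1 a0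
    have e0 : EqOn (uc (Dt^[a0] (Dx^[a1] (Dy^[a2] (Zp^[a3] (Om^[a4] (Box f)))))))
        ((dd vT)^[a0] ((dd vX)^[a1] ((dd vY)^[a2] (zpu^[a3] (omu^[a4] (boxu F)))))) univ :=
      c0.2.trans (iter_loc (fun _ _ h => dd_congr hs h vT) e1 a0)
    -- RHS chain
    have m4 := iter_bridge (s := univ) (fun g hg => br_Om hs hg)
      (fun _ _ h => om_congr hs h) hfuniv a4
    have m3 := iter_bridge (s := univ) (fun g hg => br_Zm hs hg)
      (fun _ _ h => zm_congr hs h) m4.1 a3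
    have f3 : EqOn (uc (Zm^[a3] (Om^[a4] f))) (zmu^[a3] (omu^[a4] F)) univ :=
      m3.2.trans (iter_loc (fun _ _ h => zm_congr hs h) m4.2 a3)
    have m2 := iter_bridge (s := univ) (fun g hg => br_Dy hs hg)
      (fun _ _ h => dd_congr hs h vY) m3.1 a2
    have f2 : EqOn (uc (Dy^[a2] (Zm^[a3] (Om^[a4] f))))
        ((dd vY)^[a2] (zmu^[a3] (omu^[a4] F))) univ :=
      m2.2.trans (iter_loc (fun _ _ h => dd_congr hs h vY) f3 a2)
    have m1 := iter_bridge (s := univ) (fun g hg => br_Dx hs hg)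
      (fun _ _ h => dd_congr hs h vX) m2.1 a1
    have f1 : EqOn (uc (Dx^[a1] (Dy^[a2] (Zm^[a3] (Om^[a4] f)))))
        ((dd vX)^[a1] ((dd vY)^[a2] (zmu^[a3] (omu^[a4] F)))) univ :=
      m1.2.trans (iter_loc (fun _ _ h => dd_congr hs h vX) f2 a1)
    have m0 := iter_bridge (s := univ) (fun g hg => br_Dt hs hg)
      (fun _ _ h => dd_congr hs h vT) m1.1 a0
    have f0 : EqOn (uc (Dt^[a0] (Dx^[a1] (Dy^[a2] (Zm^[a3] (Om^[a4] f))))))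
        ((dd vT)^[a0] ((dd vX)^[a1] ((dd vY)^[a2] (zmu^[a3] (omu^[a4] F))))) univ :=
      m0.2.trans (iter_loc (fun _ _ h => dd_congr hs h vT) f1 a0)
    have hbox2 := br_Box hs m0.1
    have fbox : EqOn (uc (Box (Dt^[a0] (Dx^[a1] (Dy^[a2] (Zm^[a3] (Om^[a4] f)))))))
        (boxu ((dd vT)^[a0] ((dd vX)^[a1] ((dd vY)^[a2] (zmu^[a3] (omu^[a4] F)))))) univ :=
      hbox2.2.trans (box_congr hs f0)
    have main := main_iii_u hs hfuniv a0 a1 a2 a3 a4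
    have hL : ZpPow α (Box f) t x y
        = ((dd vT)^[a0] ((dd vX)^[a1] ((dd vY)^[a2] (zpu^[a3] (omu^[a4] (boxu F))))))
          (t, x, y) := e0 hp
    have hR : Box (ZmPow α f) t x y
        = boxu ((dd vT)^[a0] ((dd vX)^[a1] ((dd vY)^[a2] (zmu^[a3] (omu^[a4] F)))))
          (t, x, y) := fbox hp
    rw [hL, hR, main hp, sub_self]
end
end

section
/- There exists a universal constant C > 0 such that for every Φ ∈ C^∞([0,∞)×ℝ²), every t ≥ 0 and x ∈ ℝ² with r = |x|: (i) |(t−r) ∂_t²Φ(t,x)| ≤ C ( Σ_{|α|≤1} |∂ Z^α Φ(t,x)| + r |□Φ(t,x)| ); and (ii) |(t−r) ΔΦ(t,x)| + |(t−r) ∂_t∇Φ(t,x)| ≤ C ( Σ_{|α|≤1} |∂ Z^α Φ(t,x)| + t |□Φ(t,x)| ). Here the sum Σ_{|α|≤1} |∂ Z^α Φ| denotes the sum of the absolute values of all first derivatives ∂Φ (with ∂ ∈ {∂_t,∂_{x₁},∂_{x₂}}) and all ∂ Z_i Φ, i = 0,…,4. -/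
noncomputable section
open Real Set MeasureTheory

/-- The first-order derivatives `∂ = (∂ₜ, ∂₁, ∂₂)` indexed by `Fin 3`. -/
def Dfirst : Fin 3 → (ℝ → ℝ → ℝ → ℝ) → (ℝ → ℝ → ℝ → ℝ)
  | 0 => Dt
  | 1 => Dx
  | 2 => Dy

/-- The vector fields `Z = (Z₀,…,Z₄) = (∂ₜ, ∂₁, ∂₂, S-1, Ω)` indexed by `Fin 5`. -/
def Zop : Fin 5 → (ℝ → ℝ → ℝ → ℝ) → (ℝ → ℝ → ℝ → ℝ)
  | 0 => Dt
  | 1 => Dx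
  | 2 => Dy
  | 3 => Zm
  | 4 => Om


namespace KSaux

lemma hle1 : (1 : WithTop ℕ∞) ≤ ((⊤ : ℕ∞) : WithTop ℕ∞) := by exact_mod_cast le_top

lemma hletop : ((⊤ : ℕ∞) : WithTop ℕ∞) + 1 ≤ ((⊤ : ℕ∞) : WithTop ℕ∞) := by exact_mod_cast le_top

/-- Uncurrying. -/
def U3 (f : ℝ → ℝ → ℝ → ℝ) : ℝ × ℝ × ℝ → ℝ := fun p => f p.1 p.2.1 p.2.2

lemma sliceT {G : ℝ × ℝ × ℝ → ℝ} {t x y : ℝ} (hG : DifferentiableAt ℝ G (t, x, y)) :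
    HasDerivAt (fun s => G (s, x, y)) (fderiv ℝ G (t, x, y) (1, 0, 0)) t := by
  have hc : HasDerivAt (fun s : ℝ => ((s, x, y) : ℝ × ℝ × ℝ)) (1, 0, 0) t :=
    (hasDerivAt_id t).prodMk ((hasDerivAt_const t x).prodMk (hasDerivAt_const t y))
  exact hG.hasFDerivAt.comp_hasDerivAt t hc

lemma sliceX {G : ℝ × ℝ × ℝ → ℝ} {t x y : ℝ} (hG : DifferentiableAt ℝ G (t, x, y)) :
    HasDerivAt (fun a => G (t, a, y)) (fderiv ℝ G (t, x, y) (0, 1, 0)) x := by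
  have hc : HasDerivAt (fun a : ℝ => ((t, a, y) : ℝ × ℝ × ℝ)) (0, 1, 0) x :=
    (hasDerivAt_const x t).prodMk ((hasDerivAt_id x).prodMk (hasDerivAt_const x y))
  exact hG.hasFDerivAt.comp_hasDerivAt x hc

lemma sliceY {G : ℝ × ℝ × ℝ → ℝ} {t x y : ℝ} (hG : DifferentiableAt ℝ G (t, x, y)) :
    HasDerivAt (fun b => G (t, x, b)) (fderiv ℝ G (t, x, y) (0, 0, 1)) y := by
  have hc : HasDerivAt (fun b : ℝ => ((t, x, b) : ℝ × ℝ × ℝ)) (0, 0, 1) y :=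
    (hasDerivAt_const y t).prodMk ((hasDerivAt_const y x).prodMk (hasDerivAt_id y))
  exact hG.hasFDerivAt.comp_hasDerivAt y hc

variable {f : ℝ → ℝ → ℝ → ℝ}

lemma dt_eq (hf : Smooth3 f) (t x y : ℝ) :
    Dt f t x y = fderiv ℝ (U3 f) (t, x, y) (1, 0, 0) :=
  (sliceT ((hf.differentiable (by simp)) (t, x, y))).deriv

lemma dx_eq (hf : Smooth3 f) (t x y : ℝ) :
    Dx f t x y = fderiv ℝ (U3 f) (t, x, y) (0, 1, 0) :=
  (sliceX ((hf.differentiable (by simp)) (t, x, y))).deriv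

lemma dy_eq (hf : Smooth3 f) (t x y : ℝ) :
    Dy f t x y = fderiv ℝ (U3 f) (t, x, y) (0, 0, 1) :=
  (sliceY ((hf.differentiable (by simp)) (t, x, y))).deriv

lemma hasT (hf : Smooth3 f) (t x y : ℝ) :
    HasDerivAt (fun s => f s x y) (Dt f t x y) t := by
  have h := sliceT ((hf.differentiable (by simp)) (t, x, y))
  rw [dt_eq hf t x y]; exact h

lemma hasX (hf : Smooth3 f) (t x y : ℝ) :
    HasDerivAt (fun a => f t a y) (Dx f t x y) x := by
  have h := sliceX ((hf.differentiable (by simp)) (t, x, y))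
  rw [dx_eq hf t x y]; exact h

lemma hasY (hf : Smooth3 f) (t x y : ℝ) :
    HasDerivAt (fun b => f t x b) (Dy f t x y) y := by
  have h := sliceY ((hf.differentiable (by simp)) (t, x, y))
  rw [dy_eq hf t x y]; exact h

lemma smooth_clm {F : ℝ × ℝ × ℝ → ℝ} (hF : ContDiff ℝ (⊤ : ℕ∞) F) (v : ℝ × ℝ × ℝ) :
    ContDiff ℝ (⊤ : ℕ∞) (fun p => fderiv ℝ F p v) :=
  (hF.fderiv_right hletop).clm_apply contDiff_const

lemma U3_Dt (hf : Smooth3 f) : U3 (Dt f) = fun p => fderiv ℝ (U3 f) p (1, 0, 0) :=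
  funext fun p => dt_eq hf p.1 p.2.1 p.2.2

lemma U3_Dx (hf : Smooth3 f) : U3 (Dx f) = fun p => fderiv ℝ (U3 f) p (0, 1, 0) :=
  funext fun p => dx_eq hf p.1 p.2.1 p.2.2

lemma U3_Dy (hf : Smooth3 f) : U3 (Dy f) = fun p => fderiv ℝ (U3 f) p (0, 0, 1) :=
  funext fun p => dy_eq hf p.1 p.2.1 p.2.2

lemma smooth_Dt (hf : Smooth3 f) : Smooth3 (Dt f) := by
  show ContDiff ℝ (⊤ : ℕ∞) (U3 (Dt f))
  rw [U3_Dt hf]; exact smooth_clm hf _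

lemma smooth_Dx (hf : Smooth3 f) : Smooth3 (Dx f) := by
  show ContDiff ℝ (⊤ : ℕ∞) (U3 (Dx f))
  rw [U3_Dx hf]; exact smooth_clm hf _

lemma smooth_Dy (hf : Smooth3 f) : Smooth3 (Dy f) := by
  show ContDiff ℝ (⊤ : ℕ∞) (U3 (Dy f))
  rw [U3_Dy hf]; exact smooth_clm hf _

lemma smooth_Sc (hf : Smooth3 f) : Smooth3 (Sc f) := by
  have h0 := smooth_Dt hf; have h1 := smooth_Dx hf; have h2 := smooth_Dy hf
  exact ((contDiff_fst.mul h0).add ((contDiff_fst.comp contDiff_snd).mul h1)).add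
    ((contDiff_snd.comp contDiff_snd).mul h2)

lemma smooth_Zm (hf : Smooth3 f) : Smooth3 (Zm f) := (smooth_Sc hf).sub hf

lemma smooth_Om (hf : Smooth3 f) : Smooth3 (Om f) :=
  ((contDiff_fst.comp contDiff_snd).mul (smooth_Dy hf)).sub
    ((contDiff_snd.comp contDiff_snd).mul (smooth_Dx hf))

lemma fderiv_fderiv_apply (hf : Smooth3 f)
    (p v w : ℝ × ℝ × ℝ) :
    fderiv ℝ (fun q => fderiv ℝ (U3 f) q w) p v = fderiv ℝ (fderiv ℝ (U3 f)) p v w := by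
  have hF : ContDiff ℝ (⊤ : ℕ∞) (U3 f) := hf
  have hd : DifferentiableAt ℝ (fderiv ℝ (U3 f)) p :=
    ((hF.fderiv_right hletop).differentiable (by simp)) p
  rw [fderiv_clm_apply hd (differentiableAt_const w)]
  simp

lemma symm_gen (hf : Smooth3 f) (t x y : ℝ) (v w : ℝ × ℝ × ℝ) :
    fderiv ℝ (fderiv ℝ (U3 f)) (t, x, y) v w = fderiv ℝ (fderiv ℝ (U3 f)) (t, x, y) w v := by
  have hF : ContDiff ℝ (⊤ : ℕ∞) (U3 f) := hf
  exact second_derivative_symmetric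
    (fun q => ((hF.differentiable (by simp)) q).hasFDerivAt)
    (((((hF.fderiv_right hletop).differentiable (by simp))) (t, x, y)).hasFDerivAt) v w

lemma symm_tx (hf : Smooth3 f) (t x y : ℝ) : Dx (Dt f) t x y = Dt (Dx f) t x y := by
  rw [dx_eq (smooth_Dt hf), dt_eq (smooth_Dx hf), U3_Dt hf, U3_Dx hf,
    fderiv_fderiv_apply hf, fderiv_fderiv_apply hf]
  exact symm_gen hf t x y _ _

lemma symm_ty (hf : Smooth3 f) (t x y : ℝ) : Dy (Dt f) t x y = Dt (Dy f) t x y := by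
  rw [dy_eq (smooth_Dt hf), dt_eq (smooth_Dy hf), U3_Dt hf, U3_Dy hf,
    fderiv_fderiv_apply hf, fderiv_fderiv_apply hf]
  exact symm_gen hf t x y _ _

lemma symm_xy (hf : Smooth3 f) (t x y : ℝ) : Dy (Dx f) t x y = Dx (Dy f) t x y := by
  rw [dy_eq (smooth_Dx hf), dx_eq (smooth_Dy hf), U3_Dx hf, U3_Dy hf,
    fderiv_fderiv_apply hf, fderiv_fderiv_apply hf]
  exact symm_gen hf t x y _ _

lemma dZm_t (hf : Smooth3 f) (t x y : ℝ) :
    Dt (Zm f) t x y =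
      t * Dt (Dt f) t x y + x * Dt (Dx f) t x y + y * Dt (Dy f) t x y := by
  have H : HasDerivAt (fun s => Zm f s x y)
      (1 * Dt f t x y + t * Dt (Dt f) t x y + x * Dt (Dx f) t x y + y * Dt (Dy f) t x y
        - Dt f t x y) t :=
    ((((hasDerivAt_id t).mul (hasT (smooth_Dt hf) t x y)).add
        (HasDerivAt.const_mul x (hasT (smooth_Dx hf) t x y))).add
      (HasDerivAt.const_mul y (hasT (smooth_Dy hf) t x y))).sub (hasT hf t x y)
  have h : Dt (Zm f) t x y = _ := H.deriv
  rw [h]; ring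

lemma dZm_x (hf : Smooth3 f) (t x y : ℝ) :
    Dx (Zm f) t x y =
      t * Dt (Dx f) t x y + x * Dx (Dx f) t x y + y * Dx (Dy f) t x y := by
  have H : HasDerivAt (fun a => Zm f t a y)
      (t * Dx (Dt f) t x y + (1 * Dx f t x y + x * Dx (Dx f) t x y) + y * Dx (Dy f) t x y
        - Dx f t x y) x :=
    (((HasDerivAt.const_mul t (hasX (smooth_Dt hf) t x y)).add
        ((hasDerivAt_id x).mul (hasX (smooth_Dx hf) t x y))).add
      (HasDerivAt.const_mul y (hasX (smooth_Dy hf) t x y))).sub (hasX hf t x y)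
  have h : Dx (Zm f) t x y = _ := H.deriv
  rw [h, symm_tx hf t x y]; ring

lemma dZm_y (hf : Smooth3 f) (t x y : ℝ) :
    Dy (Zm f) t x y =
      t * Dt (Dy f) t x y + x * Dx (Dy f) t x y + y * Dy (Dy f) t x y := by
  have H : HasDerivAt (fun b => Zm f t x b)
      (t * Dy (Dt f) t x y + x * Dy (Dx f) t x y + (1 * Dy f t x y + y * Dy (Dy f) t x y)
        - Dy f t x y) y :=
    (((HasDerivAt.const_mul t (hasY (smooth_Dt hf) t x y)).add
        (HasDerivAt.const_mul x (hasY (smooth_Dx hf) t x y))).add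
      ((hasDerivAt_id y).mul (hasY (smooth_Dy hf) t x y))).sub (hasY hf t x y)
  have h : Dy (Zm f) t x y = _ := H.deriv
  rw [h, symm_ty hf t x y, symm_xy hf t x y]; ring

lemma dOm_t (hf : Smooth3 f) (t x y : ℝ) :
    Dt (Om f) t x y = x * Dt (Dy f) t x y - y * Dt (Dx f) t x y := by
  have H : HasDerivAt (fun s => Om f s x y)
      (x * Dt (Dy f) t x y - y * Dt (Dx f) t x y) t :=
    (HasDerivAt.const_mul x (hasT (smooth_Dy hf) t x y)).sub
      (HasDerivAt.const_mul y (hasT (smooth_Dx hf) t x y))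
  exact H.deriv

lemma dOm_x (hf : Smooth3 f) (t x y : ℝ) :
    Dx (Om f) t x y = Dy f t x y + x * Dx (Dy f) t x y - y * Dx (Dx f) t x y := by
  have H : HasDerivAt (fun a => Om f t a y)
      ((1 * Dy f t x y + x * Dx (Dy f) t x y) - y * Dx (Dx f) t x y) x :=
    ((hasDerivAt_id x).mul (hasX (smooth_Dy hf) t x y)).sub
      (HasDerivAt.const_mul y (hasX (smooth_Dx hf) t x y))
  have h : Dx (Om f) t x y = _ := H.deriv
  rw [h]; ring

lemma dOm_y (hf : Smooth3 f) (t x y : ℝ) :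
    Dy (Om f) t x y = x * Dy (Dy f) t x y - Dx f t x y - y * Dx (Dy f) t x y := by
  have H : HasDerivAt (fun b => Om f t x b)
      (x * Dy (Dy f) t x y - (1 * Dx f t x y + y * Dy (Dx f) t x y)) y :=
    (HasDerivAt.const_mul x (hasY (smooth_Dy hf) t x y)).sub
      ((hasDerivAt_id y).mul (hasY (smooth_Dx hf) t x y))
  have h : Dy (Om f) t x y = _ := H.deriv
  rw [h, symm_xy hf t x y]; ring

lemma abs_add8 (a b c d e f' g h : ℝ) :
    |a + b + c + d + e + f' + g + h| ≤ |a| + |b| + |c| + |d| + |e| + |f'| + |g| + |h| := by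
  have h1 := abs_add_le a b
  have h2 := abs_add_le (a + b) c
  have h3 := abs_add_le (a + b + c) d
  have h4 := abs_add_le (a + b + c + d) e
  have h5 := abs_add_le (a + b + c + d + e) f'
  have h6 := abs_add_le (a + b + c + d + e + f') g
  have h7 := abs_add_le (a + b + c + d + e + f' + g) h
  linarith

lemma abs_add6 (a b c d e f' : ℝ) :
    |a + b + c + d + e + f'| ≤ |a| + |b| + |c| + |d| + |e| + |f'| := by
  have h1 := abs_add_le a b
  have h2 := abs_add_le (a + b) c
  have h3 := abs_add_le (a + b + c) d
  have h4 := abs_add_le (a + b + c + d) e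
  have h5 := abs_add_le (a + b + c + d + e) f'
  linarith

end KSaux


set_option maxHeartbeats 4000000 in
/-- the Klainerman–Sideris pointwise estimates in two space dimensions:
`|(t-r)∂ₜ²Φ| ≲ |∂Z^{≤1}Φ| + r|□Φ|` and `|(t-r)ΔΦ| + |(t-r)∂ₜ∇Φ| ≲ |∂Z^{≤1}Φ| + t|□Φ|`. -/
theorem klainerman_sideris_pointwise :
    ∃ C : ℝ, 0 < C ∧
      ∀ Φ : ℝ → ℝ → ℝ → ℝ, Smooth3 Φ → ∀ t x y : ℝ, 0 ≤ t →
        (|(t - Real.sqrt (x ^ 2 + y ^ 2)) * Dt (Dt Φ) t x y|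
          ≤ C * (((∑ d : Fin 3, |Dfirst d Φ t x y|)
                  + ∑ d : Fin 3, ∑ i : Fin 5, |Dfirst d (Zop i Φ) t x y|)
                + Real.sqrt (x ^ 2 + y ^ 2) * |Box Φ t x y|)) ∧
        (|(t - Real.sqrt (x ^ 2 + y ^ 2)) * (Dx (Dx Φ) t x y + Dy (Dy Φ) t x y)|
            + |t - Real.sqrt (x ^ 2 + y ^ 2)| *
                Real.sqrt ((Dt (Dx Φ) t x y) ^ 2 + (Dt (Dy Φ) t x y) ^ 2)
          ≤ C * (((∑ d : Fin 3, |Dfirst d Φ t x y|)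
                  + ∑ d : Fin 3, ∑ i : Fin 5, |Dfirst d (Zop i Φ) t x y|)
                + t * |Box Φ t x y|)) := by
  refine ⟨3, by norm_num, ?_⟩
  intro Φ hΦ t x y ht
  have hsym1 := KSaux.symm_tx hΦ t x y
  have hsym2 := KSaux.symm_ty hΦ t x y
  have hsym3 := KSaux.symm_xy hΦ t x y
  have hZ0 := KSaux.dZm_t hΦ t x y
  have hZ1 := KSaux.dZm_x hΦ t x y
  have hZ2 := KSaux.dZm_y hΦ t x y
  have hO0 := KSaux.dOm_t hΦ t x y
  have hO1 := KSaux.dOm_x hΦ t x y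
  have hO2 := KSaux.dOm_y hΦ t x y
  have hq : Box Φ t x y = Dt (Dt Φ) t x y - Dx (Dx Φ) t x y - Dy (Dy Φ) t x y := rfl
  simp only [Fin.sum_univ_three, Fin.sum_univ_five, Dfirst, Zop]
  rw [hsym1, hsym2, hsym3]
  set r := Real.sqrt (x ^ 2 + y ^ 2) with hrdef
  have hr0 : 0 ≤ r := Real.sqrt_nonneg _
  have hr2 : r ^ 2 = x ^ 2 + y ^ 2 := Real.sq_sqrt (by positivity)
  have hx' : |x| ≤ r := by
    rw [hrdef, show |x| = Real.sqrt (x ^ 2) from (Real.sqrt_sq_eq_abs x).symm]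
    exact Real.sqrt_le_sqrt (by linarith only [sq_nonneg y])
  have hy' : |y| ≤ r := by
    rw [hrdef, show |y| = Real.sqrt (y ^ 2) from (Real.sqrt_sq_eq_abs y).symm]
    exact Real.sqrt_le_sqrt (by linarith only [sq_nonneg x])
  set l0 := Dt Φ t x y with hl0d
  set l1 := Dx Φ t x y with hl1d
  set l2 := Dy Φ t x y with hl2d
  set A00 := Dt (Dt Φ) t x y with hA00d
  set A01 := Dt (Dx Φ) t x y with hA01d
  set A02 := Dt (Dy Φ) t x y with hA02d
  set A11 := Dx (Dx Φ) t x y with hA11d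
  set A12 := Dx (Dy Φ) t x y with hA12d
  set A22 := Dy (Dy Φ) t x y with hA22d
  set Z0 := Dt (Zm Φ) t x y with hZ0d
  set Z1 := Dx (Zm Φ) t x y with hZ1d
  set Z2 := Dy (Zm Φ) t x y with hZ2d
  set O0 := Dt (Om Φ) t x y with hO0d
  set O1 := Dx (Om Φ) t x y with hO1d
  set O2 := Dy (Om Φ) t x y with hO2d
  set q := Box Φ t x y with hqd
  have K1 : (t - r) * ((t + r) * A00)
      = t * Z0 - x * Z1 - y * Z2 - x * O2 + y * O1 - x * l1 - y * l2
        - (x ^ 2 + y ^ 2) * q := by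
    rw [hZ0, hZ1, hZ2, hO1, hO2, hq]; linear_combination (-A00) * hr2
  have K2 : (t - r) * ((t + r) * (A11 + A22))
      = t * Z0 - x * Z1 - y * Z2 - x * O2 + y * O1 - x * l1 - y * l2
        - t ^ 2 * q := by
    rw [hZ0, hZ1, hZ2, hO1, hO2, hq]; linear_combination (-(A11 + A22)) * hr2
  have K3 : (t - r) * ((t + r) * A01)
      = t * Z1 - x * Z0 + y * O0 + t * O2 + t * l1 + x * t * q := by
    rw [hZ0, hZ1, hO0, hO2, hq]; linear_combination (-A01) * hr2
  have K4 : (t - r) * ((t + r) * A02)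
      = t * Z2 - y * Z0 - x * O0 - t * O1 + t * l2 + y * t * q := by
    rw [hZ0, hZ2, hO0, hO1, hq]; linear_combination (-A02) * hr2
  rcases eq_or_lt_of_le (by positivity : (0:ℝ) ≤ t + r) with h0 | htr
  · -- degenerate case t = r = 0
    have ht0 : t = 0 := by linarith only [h0, ht, hr0]
    have hrr : r = 0 := by linarith only [h0, ht0]
    have hz : t - r = 0 := by linarith only [ht0, hrr]
    have hfacts : 0 ≤ |l0| + |l1| + |l2| ∧ 0 ≤ r * |q| ∧ 0 ≤ t * |q| :=
      ⟨by positivity, mul_nonneg hr0 (abs_nonneg q), mul_nonneg ht (abs_nonneg q)⟩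
    constructor
    · rw [hz, zero_mul, abs_zero]
      linarith only [abs_nonneg l0, abs_nonneg l1, abs_nonneg l2, abs_nonneg A00,
        abs_nonneg A01, abs_nonneg A02, abs_nonneg A11, abs_nonneg A12,
        abs_nonneg A22, abs_nonneg Z0, abs_nonneg Z1, abs_nonneg Z2,
        abs_nonneg O0, abs_nonneg O1, abs_nonneg O2, hfacts.2.1]
    · rw [hz, zero_mul, abs_zero, zero_mul, zero_add]
      linarith only [abs_nonneg l0, abs_nonneg l1, abs_nonneg l2, abs_nonneg A00,
        abs_nonneg A01, abs_nonneg A02, abs_nonneg A11, abs_nonneg A12,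
        abs_nonneg A22, abs_nonneg Z0, abs_nonneg Z1, abs_nonneg Z2,
        abs_nonneg O0, abs_nonneg O1, abs_nonneg O2, hfacts.2.2]
  · have habs : ∀ u v w : ℝ, 0 ≤ w → |u| ≤ w → |u * v| ≤ w * |v| := by
      intro u v w hw hu
      rw [abs_mul]; exact mul_le_mul_of_nonneg_right hu (abs_nonneg _)
    have hxyq : |(x ^ 2 + y ^ 2) * q| = r * (r * |q|) := by
      rw [abs_mul, abs_of_nonneg (by positivity : (0:ℝ) ≤ x ^ 2 + y ^ 2),
        show x ^ 2 + y ^ 2 = r * r from by rw [← hr2]; ring]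
      ring
    have htabs : ∀ v : ℝ, |t * v| = t * |v| := fun v => by
      rw [abs_mul, abs_of_nonneg ht]
    -- bound 1
    have hs1 : |(t - r) * A00|
        ≤ |Z0| + |Z1| + |Z2| + |O1| + |O2| + |l1| + |l2| + r * |q| := by
      refine le_of_mul_le_mul_right ?_ htr
      have e : |(t - r) * A00| * (t + r) = |(t - r) * ((t + r) * A00)| := by
        rw [abs_mul, abs_mul, abs_mul, abs_of_nonneg htr.le]; ring
      rw [e, K1, show t * Z0 - x * Z1 - y * Z2 - x * O2 + y * O1 - x * l1 - y * l2
          - (x ^ 2 + y ^ 2) * q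
        = t * Z0 + (-(x * Z1)) + (-(y * Z2)) + (-(x * O2)) + y * O1 + (-(x * l1))
          + (-(y * l2)) + (-((x ^ 2 + y ^ 2) * q)) from by ring]
      refine (KSaux.abs_add8 _ _ _ _ _ _ _ _).trans ?_
      simp only [abs_neg]
      rw [htabs Z0, hxyq]
      have b2 := habs x Z1 r hr0 hx'
      have b3 := habs y Z2 r hr0 hy'
      have b4 := habs x O2 r hr0 hx'
      have b5 := habs y O1 r hr0 hy'
      have b6 := habs x l1 r hr0 hx'
      have b7 := habs y l2 r hr0 hy'
      linarith only [b2, b3, b4, b5, b6, b7,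
        mul_nonneg hr0 (abs_nonneg Z0), mul_nonneg ht (abs_nonneg Z1),
        mul_nonneg ht (abs_nonneg Z2), mul_nonneg ht (abs_nonneg O1),
        mul_nonneg ht (abs_nonneg O2), mul_nonneg ht (abs_nonneg l1),
        mul_nonneg ht (abs_nonneg l2), mul_nonneg ht (mul_nonneg hr0 (abs_nonneg q))]
    -- bound 2 (Laplacian)
    have hs2 : |(t - r) * (A11 + A22)|
        ≤ |Z0| + |Z1| + |Z2| + |O1| + |O2| + |l1| + |l2| + t * |q| := by
      refine le_of_mul_le_mul_right ?_ htr
      have e : |(t - r) * (A11 + A22)| * (t + r)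
          = |(t - r) * ((t + r) * (A11 + A22))| := by
        rw [abs_mul, abs_mul, abs_mul, abs_of_nonneg htr.le]; ring
      rw [e, K2, show t * Z0 - x * Z1 - y * Z2 - x * O2 + y * O1 - x * l1 - y * l2
          - t ^ 2 * q
        = t * Z0 + (-(x * Z1)) + (-(y * Z2)) + (-(x * O2)) + y * O1 + (-(x * l1))
          + (-(y * l2)) + (-(t ^ 2 * q)) from by ring]
      refine (KSaux.abs_add8 _ _ _ _ _ _ _ _).trans ?_
      simp only [abs_neg]
      rw [htabs Z0, show |t ^ 2 * q| = t * (t * |q|) from by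
        rw [abs_mul, abs_of_nonneg (by positivity : (0:ℝ) ≤ t ^ 2)]; ring]
      have b2 := habs x Z1 r hr0 hx'
      have b3 := habs y Z2 r hr0 hy'
      have b4 := habs x O2 r hr0 hx'
      have b5 := habs y O1 r hr0 hy'
      have b6 := habs x l1 r hr0 hx'
      have b7 := habs y l2 r hr0 hy'
      linarith only [b2, b3, b4, b5, b6, b7,
        mul_nonneg hr0 (abs_nonneg Z0), mul_nonneg ht (abs_nonneg Z1),
        mul_nonneg ht (abs_nonneg Z2), mul_nonneg ht (abs_nonneg O1),
        mul_nonneg ht (abs_nonneg O2), mul_nonneg ht (abs_nonneg l1),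
        mul_nonneg ht (abs_nonneg l2), mul_nonneg hr0 (mul_nonneg ht (abs_nonneg q))]
    -- bound 3
    have hs3 : |(t - r) * A01|
        ≤ |Z1| + |Z0| + |O0| + |O2| + |l1| + t * |q| := by
      refine le_of_mul_le_mul_right ?_ htr
      have e : |(t - r) * A01| * (t + r) = |(t - r) * ((t + r) * A01)| := by
        rw [abs_mul, abs_mul, abs_mul, abs_of_nonneg htr.le]; ring
      rw [e, K3, show t * Z1 - x * Z0 + y * O0 + t * O2 + t * l1 + x * t * q
        = t * Z1 + (-(x * Z0)) + y * O0 + t * O2 + t * l1 + x * t * q from by ring]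
      refine (KSaux.abs_add6 _ _ _ _ _ _).trans ?_
      simp only [abs_neg]
      rw [htabs Z1, htabs O2, htabs l1]
      have b2 := habs x Z0 r hr0 hx'
      have b3 := habs y O0 r hr0 hy'
      have b6 : |x * t * q| ≤ r * (t * |q|) := by
        rw [show x * t * q = x * (t * q) from by ring]
        refine (habs x (t * q) r hr0 hx').trans ?_
        rw [abs_mul, abs_of_nonneg ht]
      linarith only [b2, b3, b6,
        mul_nonneg hr0 (abs_nonneg Z1), mul_nonneg ht (abs_nonneg Z0),
        mul_nonneg ht (abs_nonneg O0), mul_nonneg hr0 (abs_nonneg O2),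
        mul_nonneg hr0 (abs_nonneg l1), mul_nonneg ht (mul_nonneg ht (abs_nonneg q))]
    -- bound 4
    have hs4 : |(t - r) * A02|
        ≤ |Z2| + |Z0| + |O0| + |O1| + |l2| + t * |q| := by
      refine le_of_mul_le_mul_right ?_ htr
      have e : |(t - r) * A02| * (t + r) = |(t - r) * ((t + r) * A02)| := by
        rw [abs_mul, abs_mul, abs_mul, abs_of_nonneg htr.le]; ring
      rw [e, K4, show t * Z2 - y * Z0 - x * O0 - t * O1 + t * l2 + y * t * q
        = t * Z2 + (-(y * Z0)) + (-(x * O0)) + (-(t * O1)) + t * l2 + y * t * q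
          from by ring]
      refine (KSaux.abs_add6 _ _ _ _ _ _).trans ?_
      simp only [abs_neg]
      rw [htabs Z2, htabs O1, htabs l2]
      have b2 := habs y Z0 r hr0 hy'
      have b3 := habs x O0 r hr0 hx'
      have b6 : |y * t * q| ≤ r * (t * |q|) := by
        rw [show y * t * q = y * (t * q) from by ring]
        refine (habs y (t * q) r hr0 hy').trans ?_
        rw [abs_mul, abs_of_nonneg ht]
      linarith only [b2, b3, b6,
        mul_nonneg hr0 (abs_nonneg Z2), mul_nonneg ht (abs_nonneg Z0),
        mul_nonneg ht (abs_nonneg O0), mul_nonneg hr0 (abs_nonneg O1),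
        mul_nonneg hr0 (abs_nonneg l2), mul_nonneg ht (mul_nonneg ht (abs_nonneg q))]
    -- cross term with sqrt
    have hsq : Real.sqrt (A01 ^ 2 + A02 ^ 2) ≤ |A01| + |A02| := by
      have h1 : A01 ^ 2 + A02 ^ 2 ≤ (|A01| + |A02|) ^ 2 := by
        nlinarith only [sq_abs A01, sq_abs A02, mul_nonneg (abs_nonneg A01) (abs_nonneg A02)]
      calc Real.sqrt (A01 ^ 2 + A02 ^ 2) ≤ Real.sqrt ((|A01| + |A02|) ^ 2) :=
            Real.sqrt_le_sqrt h1
        _ = |A01| + |A02| := Real.sqrt_sq (by positivity)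
    have hcross : |t - r| * Real.sqrt (A01 ^ 2 + A02 ^ 2)
        ≤ |(t - r) * A01| + |(t - r) * A02| := by
      rw [abs_mul, abs_mul]
      calc |t - r| * Real.sqrt (A01 ^ 2 + A02 ^ 2)
          ≤ |t - r| * (|A01| + |A02|) :=
            mul_le_mul_of_nonneg_left hsq (abs_nonneg _)
        _ = |t - r| * |A01| + |t - r| * |A02| := by ring
    constructor
    · refine hs1.trans ?_
      linarith only [abs_nonneg l0, abs_nonneg l1, abs_nonneg l2, abs_nonneg A00,
        abs_nonneg A01, abs_nonneg A02, abs_nonneg A11, abs_nonneg A12,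
        abs_nonneg A22, abs_nonneg Z0, abs_nonneg Z1, abs_nonneg Z2,
        abs_nonneg O0, abs_nonneg O1, abs_nonneg O2, mul_nonneg hr0 (abs_nonneg q)]
    · refine le_trans (add_le_add hs2 (hcross.trans (add_le_add hs3 hs4))) ?_
      linarith only [abs_nonneg l0, abs_nonneg l1, abs_nonneg l2, abs_nonneg A00,
        abs_nonneg A01, abs_nonneg A02, abs_nonneg A11, abs_nonneg A12,
        abs_nonneg A22, abs_nonneg Z0, abs_nonneg Z1, abs_nonneg Z2,
        abs_nonneg O0, abs_nonneg O1, abs_nonneg O2, mul_nonneg ht (abs_nonneg q)]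
end
end

section
/- There exists a universal constant C > 0 such that for every f ∈ C_c^∞(ℝ²) and every x ∈ ℝ² with x ≠ 0: |f(x)| ≤ C |x|^{−1/2} Σ ‖∂^{j} Ω^{k} f‖_{L²(ℝ²)}, where the sum ranges over j, k ∈ {0,1}, Ω = x₁∂_{x₂} − x₂∂_{x₁} is the rotation vector field, and ∂^{1} denotes any first-order spatial derivative (the sum including all of them). -/
noncomputable section
open Real Set MeasureTheory

/-- The `L²(ℝ²)` norm of a function of two real variables. -/
def L2n (g : ℝ → ℝ → ℝ) : ℝ := Real.sqrt (∫ p : ℝ × ℝ, (g p.1 p.2) ^ 2)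

/-- The pointwise Euclidean norm of the gradient of `g : ℝ² → ℝ`. -/
def GradN (g : ℝ → ℝ → ℝ) : ℝ → ℝ → ℝ :=
  fun x y => Real.sqrt ((D1 g x y) ^ 2 + (D2 g x y) ^ 2)

/-- The pointwise Frobenius norm of the Hessian of `g : ℝ² → ℝ`. -/
def HessN (g : ℝ → ℝ → ℝ) : ℝ → ℝ → ℝ :=
  fun x y => Real.sqrt ((D1 (D1 g) x y) ^ 2 + (D1 (D2 g) x y) ^ 2
    + (D2 (D1 g) x y) ^ 2 + (D2 (D2 g) x y) ^ 2)

/-- The rotation vector field `Ω = x₁∂₂ - x₂∂₁` on functions of `x ∈ ℝ²`. -/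
def Om2 (g : ℝ → ℝ → ℝ) : ℝ → ℝ → ℝ :=
  fun x y => x * D2 g x y - y * D1 g x y

namespace AuxPD


variable {f : ℝ → ℝ → ℝ}

lemma fderiv_pair (hf : Smooth2 f) (x y a b : ℝ) :
    fderiv ℝ (fun p : ℝ × ℝ => f p.1 p.2) (x, y) (a, b)
      = a * D1 f x y + b * D2 f x y := by
  have hF : Differentiable ℝ (fun p : ℝ × ℝ => f p.1 p.2) := hf.differentiable (by simp)
  have h1 : HasDerivAt (fun s : ℝ => f s y)
      (fderiv ℝ (fun p : ℝ × ℝ => f p.1 p.2) (x, y) (1, 0)) x := by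
    have hc : HasDerivAt (fun s : ℝ => ((s, y) : ℝ × ℝ)) ((1 : ℝ), (0 : ℝ)) x :=
      (hasDerivAt_id x).prodMk (hasDerivAt_const x y)
    exact (hF (x, y)).hasFDerivAt.comp_hasDerivAt x hc
  have h2 : HasDerivAt (fun s : ℝ => f x s)
      (fderiv ℝ (fun p : ℝ × ℝ => f p.1 p.2) (x, y) (0, 1)) y := by
    have hc : HasDerivAt (fun s : ℝ => ((x, s) : ℝ × ℝ)) ((0 : ℝ), (1 : ℝ)) y :=
      (hasDerivAt_const y x).prodMk (hasDerivAt_id y)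
    exact (hF (x, y)).hasFDerivAt.comp_hasDerivAt y hc
  have e1 : D1 f x y = fderiv ℝ (fun p : ℝ × ℝ => f p.1 p.2) (x, y) (1, 0) := h1.deriv
  have e2 : D2 f x y = fderiv ℝ (fun p : ℝ × ℝ => f p.1 p.2) (x, y) (0, 1) := h2.deriv
  have hab : ((a, b) : ℝ × ℝ) = a • ((1 : ℝ), (0 : ℝ)) + b • ((0 : ℝ), (1 : ℝ)) := by
    simp [Prod.ext_iff]
  rw [hab, map_add, ContinuousLinearMap.map_smul, ContinuousLinearMap.map_smul, ← e1, ← e2]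
  simp [smul_eq_mul]

lemma hasDerivAt_curve (hf : Smooth2 f) {c₁ c₂ : ℝ → ℝ} {d₁ d₂ : ℝ} {t : ℝ}
    (h₁ : HasDerivAt c₁ d₁ t) (h₂ : HasDerivAt c₂ d₂ t) :
    HasDerivAt (fun u => f (c₁ u) (c₂ u))
      (d₁ * D1 f (c₁ t) (c₂ t) + d₂ * D2 f (c₁ t) (c₂ t)) t := by
  have hF : Differentiable ℝ (fun p : ℝ × ℝ => f p.1 p.2) := hf.differentiable (by simp)
  have hc : HasDerivAt (fun u => ((c₁ u, c₂ u) : ℝ × ℝ)) ((d₁, d₂) : ℝ × ℝ) t := h₁.prodMk h₂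
  have := (hF (c₁ t, c₂ t)).hasFDerivAt.comp_hasDerivAt t hc
  rwa [fderiv_pair hf] at this

lemma smooth2_D1 (hf : Smooth2 f) : Smooth2 (D1 f) := by
  have h : ContDiff ℝ (⊤ : ℕ∞) (fun p : ℝ × ℝ => fderiv ℝ (fun p : ℝ × ℝ => f p.1 p.2) p) :=
    hf.fderiv_right (mod_cast le_top)
  have he : (fun p : ℝ × ℝ => D1 f p.1 p.2)
      = fun p : ℝ × ℝ => fderiv ℝ (fun p : ℝ × ℝ => f p.1 p.2) p ((1 : ℝ), (0 : ℝ)) := by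
    funext p
    have := fderiv_pair hf p.1 p.2 1 0
    simp only [Prod.mk.eta] at this
    rw [this]; ring
  rw [Smooth2, he]
  exact (ContinuousLinearMap.apply ℝ ℝ ((1 : ℝ), (0 : ℝ))).contDiff.comp h

lemma smooth2_D2 (hf : Smooth2 f) : Smooth2 (D2 f) := by
  have h : ContDiff ℝ (⊤ : ℕ∞) (fun p : ℝ × ℝ => fderiv ℝ (fun p : ℝ × ℝ => f p.1 p.2) p) :=
    hf.fderiv_right (mod_cast le_top)
  have he : (fun p : ℝ × ℝ => D2 f p.1 p.2)
      = fun p : ℝ × ℝ => fderiv ℝ (fun p : ℝ × ℝ => f p.1 p.2) p ((0 : ℝ), (1 : ℝ)) := by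
    funext p
    have := fderiv_pair hf p.1 p.2 0 1
    simp only [Prod.mk.eta] at this
    rw [this]; ring
  rw [Smooth2, he]
  exact (ContinuousLinearMap.apply ℝ ℝ ((0 : ℝ), (1 : ℝ))).contDiff.comp h

lemma smooth2_Om2 (hf : Smooth2 f) : Smooth2 (Om2 f) := by
  have h1 := smooth2_D1 hf
  have h2 := smooth2_D2 hf
  exact (contDiff_fst.mul h2).sub (contDiff_snd.mul h1)

lemma support_D1_subset (hf : Smooth2 f) :
    Function.support (fun p : ℝ × ℝ => D1 f p.1 p.2) ⊆ tsupport (fun p : ℝ × ℝ => f p.1 p.2) := by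
  intro p hp
  have he : D1 f p.1 p.2 = fderiv ℝ (fun p : ℝ × ℝ => f p.1 p.2) p ((1 : ℝ), (0 : ℝ)) := by
    have := fderiv_pair hf p.1 p.2 1 0
    simp only [Prod.mk.eta] at this
    rw [this]; ring
  have : fderiv ℝ (fun p : ℝ × ℝ => f p.1 p.2) p ≠ 0 := by
    intro h0
    apply hp
    simp only [Function.mem_support] at hp ⊢
    rw [he, h0]; rfl
  exact support_fderiv_subset ℝ this

lemma support_D2_subset (hf : Smooth2 f) :
    Function.support (fun p : ℝ × ℝ => D2 f p.1 p.2) ⊆ tsupport (fun p : ℝ × ℝ => f p.1 p.2) := by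
  intro p hp
  have he : D2 f p.1 p.2 = fderiv ℝ (fun p : ℝ × ℝ => f p.1 p.2) p ((0 : ℝ), (1 : ℝ)) := by
    have := fderiv_pair hf p.1 p.2 0 1
    simp only [Prod.mk.eta] at this
    rw [this]; ring
  have : fderiv ℝ (fun p : ℝ × ℝ => f p.1 p.2) p ≠ 0 := by
    intro h0
    apply hp
    simp only [Function.mem_support] at hp ⊢
    rw [he, h0]; rfl
  exact support_fderiv_subset ℝ this

lemma support_Om2_subset (hf : Smooth2 f) :
    Function.support (fun p : ℝ × ℝ => Om2 f p.1 p.2) ⊆ tsupport (fun p : ℝ × ℝ => f p.1 p.2) := by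
  intro p hp
  simp only [Function.mem_support, Om2] at hp
  by_cases h1 : D1 f p.1 p.2 = 0
  · by_cases h2 : D2 f p.1 p.2 = 0
    · exact absurd (by rw [h1, h2]; ring) hp
    · exact support_D2_subset hf h2
  · exact support_D1_subset hf h1



lemma integrableOn_of_zero_off_compact {F : ℝ × ℝ → ℝ} (hF : Continuous F)
    {S K : Set (ℝ × ℝ)} (hK : IsCompact K) (hS : MeasurableSet S)
    (h0 : ∀ p ∈ S \ K, F p = 0) : IntegrableOn F S := by
  have h1 : IntegrableOn F (S ∩ K) :=
    (hF.continuousOn.integrableOn_compact hK).mono_set inter_subset_right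
  have h2 : IntegrableOn F (S \ K) :=
    (integrableOn_congr_fun (fun p hp => h0 p hp) (hS.diff hK.measurableSet)).mpr
      (integrableOn_zero)
  rw [← inter_union_diff S K]
  exact h1.union h2

lemma polar_rect_bound {h : ℝ → ℝ → ℝ}
    (hcont : Continuous fun p : ℝ × ℝ => h p.1 p.2)
    {M : ℝ} (hM : 0 < M)
    (hvan : ∀ x y : ℝ, M ^ 2 ≤ x ^ 2 + y ^ 2 → h x y = 0) (α : ℝ) :
    (∫ φ in (α - π)..(α + π), ∫ s in (0:ℝ)..M, s * (h (s * Real.cos φ) (s * Real.sin φ)) ^ 2)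
      ≤ L2n h ^ 2 := by
  set G : ℝ → ℝ := fun φ => ∫ s in (0:ℝ)..M, s * (h (s * cos φ) (s * sin φ)) ^ 2 with hG
  have hvan' : ∀ s φ : ℝ, M ≤ |s| → h (s * cos φ) (s * sin φ) = 0 := by
    intro s φ hs
    apply hvan
    have h1 : (s * cos φ) ^ 2 + (s * sin φ) ^ 2 = s ^ 2 := by
      have := sin_sq_add_cos_sq φ; nlinarith
    rw [h1]
    have : M ^ 2 ≤ |s| ^ 2 := by nlinarith [hM.le, abs_nonneg s]
    simpa [sq_abs] using this
  have hper : Function.Periodic G (2 * π) := by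
    intro φ
    simp only [hG, Real.cos_add_two_pi, Real.sin_add_two_pi]
  have hshift : (∫ φ in (α - π)..(α + π), G φ) = ∫ φ in (-π)..π, G φ := by
    have h0 := hper.intervalIntegral_add_eq (α - π) (-π)
    have h1 : α - π + 2 * π = α + π := by ring
    have h2 : -π + 2 * π = π := by ring
    rw [h1, h2] at h0
    exact h0
  -- continuity of the two-variable integrands
  have hmap2 : Continuous fun q : ℝ × ℝ => h (q.2 * cos q.1) (q.2 * sin q.1) := by
    show Continuous ((fun p : ℝ × ℝ => h p.1 p.2) ∘ fun q : ℝ × ℝ => (q.2 * cos q.1, q.2 * sin q.1))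
    exact hcont.comp ((continuous_snd.mul (Real.continuous_cos.comp continuous_fst)).prodMk
      (continuous_snd.mul (Real.continuous_sin.comp continuous_fst)))
  set F2 : ℝ × ℝ → ℝ := fun q => q.2 * (h (q.2 * cos q.1) (q.2 * sin q.1)) ^ 2 with hF2
  have hF2c : Continuous F2 := continuous_snd.mul (hmap2.pow 2)
  have hmap1 : Continuous fun q : ℝ × ℝ => h (q.1 * cos q.2) (q.1 * sin q.2) := by
    show Continuous ((fun p : ℝ × ℝ => h p.1 p.2) ∘ fun q : ℝ × ℝ => (q.1 * cos q.2, q.1 * sin q.2))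
    exact hcont.comp ((continuous_fst.mul (Real.continuous_cos.comp continuous_snd)).prodMk
      (continuous_fst.mul (Real.continuous_sin.comp continuous_snd)))
  set F1 : ℝ × ℝ → ℝ := fun q => q.1 * (h (q.1 * cos q.2) (q.1 * sin q.2)) ^ 2 with hF1
  have hF1c : Continuous F1 := continuous_fst.mul (hmap1.pow 2)
  set T' : Set (ℝ × ℝ) := Ioo (-π) π ×ˢ Ioi (0:ℝ) with hT'
  set T : Set (ℝ × ℝ) := Ioi (0:ℝ) ×ˢ Ioo (-π) π with hT
  have hT'int : IntegrableOn F2 T' := by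
    apply integrableOn_of_zero_off_compact hF2c
      (IsCompact.prod isCompact_Icc (isCompact_Icc (a := (0:ℝ)) (b := M)))
      (measurableSet_Ioo.prod measurableSet_Ioi)
    rintro ⟨φ, s⟩ ⟨hmem, hnot⟩
    have hφ : φ ∈ Icc (-π) π := Ioo_subset_Icc_self hmem.1
    have hs : s ∉ Icc (0:ℝ) M := fun hc => hnot ⟨hφ, hc⟩
    have hspos : (0:ℝ) < s := hmem.2
    have hs' : M ≤ |s| := by
      have : M < s := lt_of_not_ge fun hle => hs ⟨hspos.le, hle⟩
      rw [abs_of_pos hspos]; linarith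
    simp [hF2, hvan' s φ hs']
  have hTint : IntegrableOn F1 T := by
    apply integrableOn_of_zero_off_compact hF1c
      (IsCompact.prod (isCompact_Icc (a := (0:ℝ)) (b := M)) isCompact_Icc)
      (measurableSet_Ioi.prod measurableSet_Ioo)
    rintro ⟨s, φ⟩ ⟨hmem, hnot⟩
    have hφ : φ ∈ Icc (-π) π := Ioo_subset_Icc_self hmem.2
    have hs : s ∉ Icc (0:ℝ) M := fun hc => hnot ⟨hc, hφ⟩
    have hspos : (0:ℝ) < s := hmem.1
    have hs' : M ≤ |s| := by
      have : M < s := lt_of_not_ge fun hle => hs ⟨hspos.le, hle⟩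
      rw [abs_of_pos hspos]; linarith
    simp [hF1, hvan' s φ hs']
  have hswap : (∫ p in T', F2 p) = ∫ p in T, F1 p := by
    rw [hT, hT', Measure.volume_eq_prod, ← Measure.prod_restrict, ← Measure.prod_restrict]
    have he : F2 = fun z : ℝ × ℝ => F1 z.swap := rfl
    rw [he]
    exact integral_prod_swap F1
  have hpolar : (∫ p in T, F1 p) = ∫ p : ℝ × ℝ, (h p.1 p.2) ^ 2 := by
    have hcp := integral_comp_polarCoord_symm (fun p : ℝ × ℝ => (h p.1 p.2) ^ 2)
    rw [← hcp]
    rfl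
  have hiter : (∫ p in T', F2 p) = ∫ φ in Ioo (-π) π, ∫ s in Ioi (0:ℝ), F2 (φ, s) := by
    rw [hT', Measure.volume_eq_prod] at hT'int ⊢
    exact setIntegral_prod F2 hT'int
  have hGinf_int : IntegrableOn (fun φ => ∫ s in Ioi (0:ℝ), F2 (φ, s)) (Ioo (-π) π) := by
    have h1 : Integrable F2 ((volume.restrict (Ioo (-π) π)).prod (volume.restrict (Ioi (0:ℝ)))) := by
      rw [Measure.prod_restrict, ← Measure.volume_eq_prod]
      exact hT'int
    exact h1.integral_prod_left
  have hGnn : ∀ φ : ℝ, 0 ≤ G φ := by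
    intro φ
    apply intervalIntegral.integral_nonneg hM.le
    intro s hs
    exact mul_nonneg hs.1 (sq_nonneg _)
  have hinner : ∀ φ : ℝ, G φ ≤ ∫ s in Ioi (0:ℝ), F2 (φ, s) := by
    intro φ
    have hfc : Continuous fun s : ℝ => s * (h (s * cos φ) (s * sin φ)) ^ 2 := by
      apply continuous_id.mul
      exact ((hcont.comp ((continuous_id.mul continuous_const).prodMk
        (continuous_id.mul continuous_const))).pow 2)
    have hcs : HasCompactSupport fun s : ℝ => s * (h (s * cos φ) (s * sin φ)) ^ 2 := by
      apply HasCompactSupport.intro (isCompact_Icc (a := -M) (b := M))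
      intro s hs
      have : M ≤ |s| := by
        simp only [mem_Icc, not_and_or, not_le] at hs
        rcases hs with h' | h'
        · rw [abs_of_neg (by linarith)]; linarith
        · rw [abs_of_pos (by linarith)]; linarith
      simp [hvan' s φ this]
    have hint : IntegrableOn (fun s : ℝ => s * (h (s * cos φ) (s * sin φ)) ^ 2) (Ioi (0:ℝ)) :=
      (hfc.integrable_of_hasCompactSupport hcs).integrableOn
    have he : G φ = ∫ s in Ioc (0:ℝ) M, s * (h (s * cos φ) (s * sin φ)) ^ 2 :=
      intervalIntegral.integral_of_le hM.le
    rw [he]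
    apply setIntegral_mono_set hint
    · apply (ae_restrict_iff' measurableSet_Ioi).mpr
      exact ae_of_all _ fun s hs => mul_nonneg (le_of_lt hs) (sq_nonneg _)
    · exact (Ioc_subset_Ioi_self).eventuallyLE
  have hIooIoc : volume.restrict (Ioo (-π:ℝ) π) = volume.restrict (Ioc (-π:ℝ) π) :=
    Measure.restrict_congr_set Ioo_ae_eq_Ioc
  calc (∫ φ in (α - π)..(α + π), G φ) = ∫ φ in (-π)..π, G φ := hshift
    _ = ∫ φ in Ioc (-π) π, G φ := intervalIntegral.integral_of_le (by linarith [pi_pos])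
    _ ≤ ∫ φ in Ioc (-π) π, (fun ψ => ∫ s in Ioi (0:ℝ), F2 (ψ, s)) φ := by
        apply integral_mono_of_nonneg (ae_of_all _ hGnn)
        · rw [← hIooIoc]; exact hGinf_int
        · exact ae_of_all _ hinner
    _ = ∫ φ in Ioo (-π) π, ∫ s in Ioi (0:ℝ), F2 (φ, s) := by rw [hIooIoc]
    _ = ∫ p in T', F2 p := hiter.symm
    _ = ∫ p in T, F1 p := hswap
    _ = ∫ p : ℝ × ℝ, (h p.1 p.2) ^ 2 := hpolar
    _ = L2n h ^ 2 := by
        rw [L2n, Real.sq_sqrt (integral_nonneg fun p => sq_nonneg _)]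
lemma cont_polar_s {h : ℝ → ℝ → ℝ} (hh : Continuous fun p : ℝ × ℝ => h p.1 p.2) (φ : ℝ) :
    Continuous fun s : ℝ => h (s * cos φ) (s * sin φ) := by
  show Continuous ((fun p : ℝ × ℝ => h p.1 p.2) ∘ fun s : ℝ => (s * cos φ, s * sin φ))
  exact hh.comp ((continuous_id.mul continuous_const).prodMk
    (continuous_id.mul continuous_const))

lemma cont_polar_phi {h : ℝ → ℝ → ℝ} (hh : Continuous fun p : ℝ × ℝ => h p.1 p.2) (s : ℝ) :
    Continuous fun φ : ℝ => h (s * cos φ) (s * sin φ) := by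
  show Continuous ((fun p : ℝ × ℝ => h p.1 p.2) ∘ fun φ : ℝ => (s * cos φ, s * sin φ))
  exact hh.comp ((continuous_const.mul Real.continuous_cos).prodMk
    (continuous_const.mul Real.continuous_sin))

lemma cont_polar2 {h : ℝ → ℝ → ℝ} (hh : Continuous fun p : ℝ × ℝ => h p.1 p.2) :
    Continuous fun q : ℝ × ℝ => h (q.2 * cos q.1) (q.2 * sin q.1) := by
  show Continuous ((fun p : ℝ × ℝ => h p.1 p.2) ∘ fun q : ℝ × ℝ => (q.2 * cos q.1, q.2 * sin q.1))
  exact hh.comp ((continuous_snd.mul (Real.continuous_cos.comp continuous_fst)).prodMk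
    (continuous_snd.mul (Real.continuous_sin.comp continuous_fst)))

lemma sum_sq_le {a b c d e g : ℝ} (ha : 0 ≤ a) (hb : 0 ≤ b) (hc : 0 ≤ c) (hd : 0 ≤ d)
    (he : 0 ≤ e) (hg : 0 ≤ g) :
    a ^ 2 + (b ^ 2 + (c ^ 2 + (d ^ 2 + (e ^ 2 + g ^ 2)))) ≤ (a + b + c + d + e + g) ^ 2 := by
  nlinarith [mul_nonneg ha hb, mul_nonneg ha hc, mul_nonneg ha hd, mul_nonneg ha he,
    mul_nonneg ha hg, mul_nonneg hb hc, mul_nonneg hb hd, mul_nonneg hb he, mul_nonneg hb hg,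
    mul_nonneg hc hd, mul_nonneg hc he, mul_nonneg hc hg, mul_nonneg hd he, mul_nonneg hd hg,
    mul_nonneg he hg]


end AuxPD

open AuxPD in
set_option maxHeartbeats 1000000 in
/-- pointwise decay near the light cone:
`|f(x)| ≲ |x|^{-1/2} ∑_{j,k ≤ 1} ‖∂^j Ω^k f‖_{L²}` for `f ∈ C_c^∞(ℝ²)`, `x ≠ 0`. -/
theorem pointwise_decay_half_power :
    ∃ C : ℝ, 0 < C ∧
      ∀ f : ℝ → ℝ → ℝ, Smooth2 f →
        (HasCompactSupport fun p : ℝ × ℝ => f p.1 p.2) →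
        ∀ x y : ℝ, ¬(x = 0 ∧ y = 0) →
          |f x y| ≤ C * (Real.sqrt (Real.sqrt (x ^ 2 + y ^ 2)))⁻¹ *
            (L2n f + L2n (Om2 f) + L2n (D1 f) + L2n (D2 f)
              + L2n (D1 (Om2 f)) + L2n (D2 (Om2 f))) := by
  refine ⟨2, by norm_num, ?_⟩
  intro f hf hc x y hxy
  have cf : Continuous fun p : ℝ × ℝ => f p.1 p.2 := hf.continuous
  have hsO : Smooth2 (Om2 f) := smooth2_Om2 hf
  have cO : Continuous fun p : ℝ × ℝ => Om2 f p.1 p.2 := hsO.continuous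
  have cA1 : Continuous fun p : ℝ × ℝ => D1 f p.1 p.2 := (smooth2_D1 hf).continuous
  have cA2 : Continuous fun p : ℝ × ℝ => D2 f p.1 p.2 := (smooth2_D2 hf).continuous
  have cB1 : Continuous fun p : ℝ × ℝ => D1 (Om2 f) p.1 p.2 := (smooth2_D1 hsO).continuous
  have cB2 : Continuous fun p : ℝ × ℝ => D2 (Om2 f) p.1 p.2 := (smooth2_D2 hsO).continuous
  set r : ℝ := Real.sqrt (x ^ 2 + y ^ 2) with hrdef
  have hxy2 : 0 < x ^ 2 + y ^ 2 := by
    rcases not_and_or.mp hxy with h' | h' <;> positivity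
  have hr : 0 < r := Real.sqrt_pos.mpr hxy2
  set α : ℝ := Complex.arg ⟨x, y⟩ with hαdef
  have habs : ‖(⟨x, y⟩ : ℂ)‖ = r := by
    rw [Complex.norm_def, Complex.normSq_mk, hrdef]
    ring_nf
  have hx : r * cos α = x := by
    have := Complex.norm_mul_cos_arg (⟨x, y⟩ : ℂ)
    rw [habs] at this; exact this
  have hy : r * sin α = y := by
    have := Complex.norm_mul_sin_arg (⟨x, y⟩ : ℂ)
    rw [habs] at this; exact this
  clear_value α
  obtain ⟨R, hR⟩ := hc.isBounded.subset_closedBall 0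
  set M : ℝ := Real.sqrt (2 * R ^ 2 + 1) + r with hMdef
  have hsq0 : Real.sqrt (2 * R ^ 2 + 1) ^ 2 = 2 * R ^ 2 + 1 :=
    Real.sq_sqrt (by positivity)
  have hsnn : 0 ≤ Real.sqrt (2 * R ^ 2 + 1) := Real.sqrt_nonneg _
  have hMr : r < M := by
    have : 0 < Real.sqrt (2 * R ^ 2 + 1) := Real.sqrt_pos.mpr (by positivity)
    simp only [hMdef]; linarith
  have hM : 0 < M := lt_trans hr hMr
  have hM2 : 2 * R ^ 2 < M ^ 2 := by
    have h1 : Real.sqrt (2 * R ^ 2 + 1) ^ 2 ≤ M ^ 2 := by nlinarith [hr.le]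
    rw [hsq0] at h1; linarith
  clear_value M
  have van : ∀ h : ℝ → ℝ → ℝ,
      (Function.support (fun p : ℝ × ℝ => h p.1 p.2) ⊆ tsupport (fun p : ℝ × ℝ => f p.1 p.2)) →
      ∀ a b : ℝ, M ^ 2 ≤ a ^ 2 + b ^ 2 → h a b = 0 := by
    intro h hsub a b hab
    by_contra hne
    have hmem : ((a, b) : ℝ × ℝ) ∈ tsupport (fun p : ℝ × ℝ => f p.1 p.2) := hsub hne
    have hball : ‖((a, b) : ℝ × ℝ)‖ ≤ R := by
      have := hR hmem
      simpa [Metric.mem_closedBall, dist_zero_right] using this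
    rw [Prod.norm_def] at hball
    have ha : |a| ≤ R := le_trans (le_max_left _ _) hball
    have hb : |b| ≤ R := le_trans (le_max_right _ _) hball
    have ha2 : a ^ 2 ≤ R ^ 2 := by nlinarith [abs_nonneg a, sq_abs a]
    have hb2 : b ^ 2 ≤ R ^ 2 := by nlinarith [abs_nonneg b, sq_abs b]
    linarith
  have tsubO : tsupport (fun p : ℝ × ℝ => Om2 f p.1 p.2)
      ⊆ tsupport (fun p : ℝ × ℝ => f p.1 p.2) :=
    closure_minimal (support_Om2_subset hf) isClosed_closure
  have vf := van f subset_closure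
  have vO := van (Om2 f) (support_Om2_subset hf)
  have vA1 := van (D1 f) (support_D1_subset hf)
  have vA2 := van (D2 f) (support_D2_subset hf)
  have vB1 := van (D1 (Om2 f)) (fun p hp => tsubO (support_D1_subset hsO hp))
  have vB2 := van (D2 (Om2 f)) (fun p hp => tsubO (support_D2_subset hsO hp))
  set S : ℝ := L2n f + L2n (Om2 f) + L2n (D1 f) + L2n (D2 f)
      + L2n (D1 (Om2 f)) + L2n (D2 (Om2 f)) with hSdef
  set W : ℝ → ℝ → ℝ := fun s φ =>
      (f (s * cos φ) (s * sin φ)) ^ 2 + (Om2 f (s * cos φ) (s * sin φ)) ^ 2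
      + (D1 f (s * cos φ) (s * sin φ)) ^ 2 + (D2 f (s * cos φ) (s * sin φ)) ^ 2
      + (D1 (Om2 f) (s * cos φ) (s * sin φ)) ^ 2
      + (D2 (Om2 f) (s * cos φ) (s * sin φ)) ^ 2 with hWdef
  have hWc : Continuous fun q : ℝ × ℝ => W q.2 q.1 := by
    simp only [hWdef]
    exact (((((((cont_polar2 cf).pow 2).add ((cont_polar2 cO).pow 2)).add
      ((cont_polar2 cA1).pow 2)).add ((cont_polar2 cA2).pow 2)).add
      ((cont_polar2 cB1).pow 2)).add ((cont_polar2 cB2).pow 2))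
  have hWcs : ∀ φ : ℝ, Continuous fun s : ℝ => W s φ := by
    intro φ
    simp only [hWdef]
    exact (((((((cont_polar_s cf φ).pow 2).add ((cont_polar_s cO φ).pow 2)).add
      ((cont_polar_s cA1 φ).pow 2)).add ((cont_polar_s cA2 φ).pow 2)).add
      ((cont_polar_s cB1 φ).pow 2)).add ((cont_polar_s cB2 φ).pow 2))
  have hWnn : ∀ s φ : ℝ, 0 ≤ W s φ := by
    intro s φ; simp only [hWdef]; positivity
  have hgf : ∀ s φ : ℝ, HasDerivAt (fun u : ℝ => f (u * cos φ) (u * sin φ))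
      (cos φ * D1 f (s * cos φ) (s * sin φ) + sin φ * D2 f (s * cos φ) (s * sin φ)) s :=
    fun s φ => hasDerivAt_curve hf (hasDerivAt_mul_const (cos φ)) (hasDerivAt_mul_const (sin φ))
  have hgO : ∀ s φ : ℝ, HasDerivAt (fun u : ℝ => Om2 f (u * cos φ) (u * sin φ))
      (cos φ * D1 (Om2 f) (s * cos φ) (s * sin φ)
        + sin φ * D2 (Om2 f) (s * cos φ) (s * sin φ)) s :=
    fun s φ => hasDerivAt_curve hsO (hasDerivAt_mul_const (cos φ)) (hasDerivAt_mul_const (sin φ))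
  have hpol : ∀ s φ : ℝ, (s * cos φ) ^ 2 + (s * sin φ) ^ 2 = s ^ 2 := by
    intro s φ
    have := sin_sq_add_cos_sq φ; nlinarith
  -- STEP B : radial estimate
  have keyB : ∀ φ : ℝ,
      r * (2 * (f (r * cos φ) (r * sin φ)) ^ 2 + (Om2 f (r * cos φ) (r * sin φ)) ^ 2)
        ≤ ∫ s in (0:ℝ)..M, 4 * (s * W s φ) := by
    intro φ
    set u : ℝ → ℝ := fun s =>
      s * (2 * (f (s * cos φ) (s * sin φ)) ^ 2 + (Om2 f (s * cos φ) (s * sin φ)) ^ 2) with hu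
    set du : ℝ → ℝ := fun s =>
      (2 * (f (s * cos φ) (s * sin φ)) ^ 2 + (Om2 f (s * cos φ) (s * sin φ)) ^ 2)
      + s * (2 * (2 * (f (s * cos φ) (s * sin φ)) ^ 1 *
            (cos φ * D1 f (s * cos φ) (s * sin φ) + sin φ * D2 f (s * cos φ) (s * sin φ)))
        + 2 * (Om2 f (s * cos φ) (s * sin φ)) ^ 1 *
            (cos φ * D1 (Om2 f) (s * cos φ) (s * sin φ)
              + sin φ * D2 (Om2 f) (s * cos φ) (s * sin φ))) with hdu
    have hud : ∀ s : ℝ, HasDerivAt u (du s) s := by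
      intro s
      have h1 : HasDerivAt (fun s : ℝ =>
          2 * (f (s * cos φ) (s * sin φ)) ^ 2 + (Om2 f (s * cos φ) (s * sin φ)) ^ 2)
          (2 * (2 * (f (s * cos φ) (s * sin φ)) ^ 1 *
            (cos φ * D1 f (s * cos φ) (s * sin φ) + sin φ * D2 f (s * cos φ) (s * sin φ)))
          + 2 * (Om2 f (s * cos φ) (s * sin φ)) ^ 1 *
            (cos φ * D1 (Om2 f) (s * cos φ) (s * sin φ)
              + sin φ * D2 (Om2 f) (s * cos φ) (s * sin φ))) s :=
        (((hgf s φ).pow 2).const_mul 2).add ((hgO s φ).pow 2)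
      have h2 := (hasDerivAt_id s).mul h1
      simp only [id_eq] at h2
      simp only [hu, hdu]
      convert h2 using 1
      · rfl
      · rfl
      · rfl
      ring
    have hPfc := cont_polar_s cf φ
    have hPOc := cont_polar_s cO φ
    have hduc : Continuous du := by
      apply Continuous.add
      · exact (continuous_const.mul (hPfc.pow 2)).add (hPOc.pow 2)
      · exact continuous_id.mul ((continuous_const.mul ((continuous_const.mul (hPfc.pow 1)).mul
          ((continuous_const.mul (cont_polar_s cA1 φ)).add
            (continuous_const.mul (cont_polar_s cA2 φ))))).add
          ((continuous_const.mul (hPOc.pow 1)).mul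
            ((continuous_const.mul (cont_polar_s cB1 φ)).add
              (continuous_const.mul (cont_polar_s cB2 φ)))))
    have hftc : ∫ s in r..M, du s = u M - u r :=
      intervalIntegral.integral_eq_sub_of_hasDerivAt (fun s _ => hud s)
        (hduc.intervalIntegrable _ _)
    have huM : u M = 0 := by
      have h1 : f (M * cos φ) (M * sin φ) = 0 := vf _ _ (le_of_eq (hpol M φ).symm)
      have h2 : Om2 f (M * cos φ) (M * sin φ) = 0 := vO _ _ (le_of_eq (hpol M φ).symm)
      simp [hu, h1, h2]
    have hur : u r = ∫ s in r..M, -du s := by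
      rw [intervalIntegral.integral_neg, hftc, huM]; ring
    have hWint : IntervalIntegrable (fun s : ℝ => 4 * (s * W s φ)) volume 0 M :=
      (continuous_const.mul (continuous_id.mul (hWcs φ))).intervalIntegrable _ _
    have hstep : (∫ s in r..M, -du s) ≤ ∫ s in r..M, 4 * (s * W s φ) := by
      apply intervalIntegral.integral_mono_on hMr.le (hduc.neg.intervalIntegrable _ _)
        ((continuous_const.mul (continuous_id.mul (hWcs φ))).intervalIntegrable _ _)
      intro s hs
      have hs0 : 0 ≤ s := le_trans hr.le hs.1
      simp only [hdu, hWdef, pow_one]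
      set a := f (s * cos φ) (s * sin φ) with ha
      set o := Om2 f (s * cos φ) (s * sin φ) with ho
      set A := D1 f (s * cos φ) (s * sin φ) with hA
      set B := D2 f (s * cos φ) (s * sin φ) with hB
      set Cc := D1 (Om2 f) (s * cos φ) (s * sin φ) with hCc
      set Dd := D2 (Om2 f) (s * cos φ) (s * sin φ) with hDd
      set gs := cos φ * A + sin φ * B with hgsdef
      set qs := cos φ * Cc + sin φ * Dd with hqsdef
      have hgs2 : gs ^ 2 ≤ A ^ 2 + B ^ 2 := by
        rw [hgsdef]
        nlinarith [sq_nonneg (sin φ * A - cos φ * B), sin_sq_add_cos_sq φ]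
      have hqs2 : qs ^ 2 ≤ Cc ^ 2 + Dd ^ 2 := by
        rw [hqsdef]
        nlinarith [sq_nonneg (sin φ * Cc - cos φ * Dd), sin_sq_add_cos_sq φ]
      calc -(2 * a ^ 2 + o ^ 2 + s * (2 * (2 * a * gs) + 2 * o * qs))
          = s * (-(4 * (a * gs)) + -(2 * (o * qs))) - (2 * a ^ 2 + o ^ 2) := by ring
        _ ≤ s * (2 * a ^ 2 + 2 * gs ^ 2 + o ^ 2 + qs ^ 2) - 0 := by
            have e1 : -(4 * (a * gs)) + -(2 * (o * qs))
                ≤ 2 * a ^ 2 + 2 * gs ^ 2 + o ^ 2 + qs ^ 2 := by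
              nlinarith [sq_nonneg (a + gs), sq_nonneg (o + qs)]
            have e3 := mul_le_mul_of_nonneg_left e1 hs0
            have e0 : (0:ℝ) ≤ 2 * a ^ 2 + o ^ 2 := by positivity
            linarith
        _ ≤ s * (4 * (a ^ 2 + o ^ 2 + A ^ 2 + B ^ 2 + Cc ^ 2 + Dd ^ 2)) - 0 := by
            have e4 : 2 * a ^ 2 + 2 * gs ^ 2 + o ^ 2 + qs ^ 2
                ≤ 4 * (a ^ 2 + o ^ 2 + A ^ 2 + B ^ 2 + Cc ^ 2 + Dd ^ 2) := by
              have := sq_nonneg a; have := sq_nonneg o; have := sq_nonneg A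
              have := sq_nonneg B; have := sq_nonneg Cc; have := sq_nonneg Dd
              linarith [hgs2, hqs2]
            have e5 := mul_le_mul_of_nonneg_left e4 hs0
            linarith
        _ = 4 * (s * (a ^ 2 + o ^ 2 + A ^ 2 + B ^ 2 + Cc ^ 2 + Dd ^ 2)) := by ring
    have hext : (∫ s in r..M, 4 * (s * W s φ)) ≤ ∫ s in (0:ℝ)..M, 4 * (s * W s φ) := by
      apply intervalIntegral.integral_mono_interval hr.le hMr.le le_rfl
      · apply (ae_restrict_iff' measurableSet_Ioc).mpr
        apply ae_of_all
        intro s hs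
        have : 0 ≤ s := le_of_lt hs.1
        have := hWnn s φ
        positivity
      · exact hWint
    calc r * (2 * (f (r * cos φ) (r * sin φ)) ^ 2 + (Om2 f (r * cos φ) (r * sin φ)) ^ 2)
        = u r := rfl
      _ = ∫ s in r..M, -du s := hur
      _ ≤ ∫ s in r..M, 4 * (s * W s φ) := hstep
      _ ≤ ∫ s in (0:ℝ)..M, 4 * (s * W s φ) := hext
  -- STEP A : angular estimate
  set v : ℝ → ℝ := fun φ => (f (r * cos φ) (r * sin φ)) ^ 2 with hv
  set dv : ℝ → ℝ := fun φ =>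
    2 * (f (r * cos φ) (r * sin φ)) ^ 1 * Om2 f (r * cos φ) (r * sin φ) with hdv
  have hvd : ∀ φ : ℝ, HasDerivAt v (dv φ) φ := by
    intro φ
    have h1 : HasDerivAt (fun ψ : ℝ => r * cos ψ) (r * -sin φ) φ :=
      (Real.hasDerivAt_cos φ).const_mul r
    have h2 : HasDerivAt (fun ψ : ℝ => r * sin ψ) (r * cos φ) φ :=
      (Real.hasDerivAt_sin φ).const_mul r
    have h3 := hasDerivAt_curve hf h1 h2
    have h4 : r * -sin φ * D1 f (r * cos φ) (r * sin φ)
        + r * cos φ * D2 f (r * cos φ) (r * sin φ) = Om2 f (r * cos φ) (r * sin φ) := by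
      simp only [Om2]; ring
    rw [h4] at h3
    exact h3.pow 2
  have cv : Continuous v := (cont_polar_phi cf r).pow 2
  have cdv : Continuous dv :=
    (continuous_const.mul ((cont_polar_phi cf r).pow 1)).mul (cont_polar_phi cO r)
  set Cst : ℝ := ∫ φ in (α - π)..(α + π), |dv φ| with hCst
  have hIle : α - π ≤ α + π := by linarith [pi_pos]
  have hAng : ∀ φ₀ ∈ Icc (α - π) (α + π), v α ≤ v φ₀ + Cst := by
    intro φ₀ hφ₀
    have hftc : ∫ φ in φ₀..α, dv φ = v α - v φ₀ :=
      intervalIntegral.integral_eq_sub_of_hasDerivAt (fun φ _ => hvd φ)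
        (cdv.intervalIntegrable _ _)
    have h1 : v α - v φ₀ ≤ |(∫ φ in φ₀..α, dv φ)| := by
      rw [hftc]; exact le_abs_self _
    have h2 : |(∫ φ in φ₀..α, dv φ)| ≤ |(∫ φ in φ₀..α, |dv φ|)| := by
      have := intervalIntegral.norm_integral_le_abs_integral_norm
        (f := dv) (a := φ₀) (b := α) (μ := volume)
      simpa [Real.norm_eq_abs] using this
    have h3 : |(∫ φ in φ₀..α, |dv φ|)| ≤ |(∫ φ in (α - π)..(α + π), |dv φ|)| := by
      apply intervalIntegral.abs_integral_mono_interval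
      · rw [uIoc_of_le hIle]
        intro t ht
        rcases ht with ⟨ht1, ht2⟩
        constructor
        · exact lt_of_le_of_lt (le_min hφ₀.1 (by linarith [pi_pos])) ht1
        · exact le_trans ht2 (max_le hφ₀.2 (by linarith [pi_pos]))
      · exact Filter.Eventually.of_forall fun _ => abs_nonneg _
      · exact cdv.abs.intervalIntegrable _ _
    have h4 : |(∫ φ in (α - π)..(α + π), |dv φ|)| = Cst :=
      abs_of_nonneg (intervalIntegral.integral_nonneg hIle fun _ _ => abs_nonneg _)
    rw [h4] at h3
    linarith
  have hint1 : (2 * π) * v α ≤ (∫ φ in (α - π)..(α + π), v φ) + (2 * π) * Cst := by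
    have h0 : ∫ _ in (α - π)..(α + π), v α = (2 * π) * v α := by
      rw [intervalIntegral.integral_const, smul_eq_mul]; ring
    have h1 : ∫ φ₀ in (α - π)..(α + π), (v φ₀ + Cst)
        = (∫ φ in (α - π)..(α + π), v φ) + (2 * π) * Cst := by
      rw [intervalIntegral.integral_add (cv.intervalIntegrable _ _)
        intervalIntegrable_const, intervalIntegral.integral_const, smul_eq_mul]
      ring
    calc (2 * π) * v α = ∫ _ in (α - π)..(α + π), v α := h0.symm
      _ ≤ ∫ φ₀ in (α - π)..(α + π), (v φ₀ + Cst) :=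
        intervalIntegral.integral_mono_on hIle intervalIntegrable_const
          ((cv.add continuous_const).intervalIntegrable _ _) hAng
      _ = _ := h1
  set Iv : ℝ := ∫ φ in (α - π)..(α + π), v φ with hIvdef
  have hIv0 : 0 ≤ Iv :=
    intervalIntegral.integral_nonneg hIle fun φ _ => sq_nonneg _
  have hCst0 : 0 ≤ Cst :=
    intervalIntegral.integral_nonneg hIle fun _ _ => abs_nonneg _
  have h2π : (0:ℝ) < 2 * π := by linarith [pi_pos]
  have h7 : r * v α ≤ r * Iv + r * Cst := by
    have h5 : (2 * π) * v α ≤ Iv + (2 * π) * Cst := hint1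
    have h6 : v α ≤ Iv + Cst := by
      have hπ1 : 1 ≤ 2 * π := by nlinarith [pi_gt_three]
      nlinarith [hIv0, hCst0]
    nlinarith [hr.le, h6]
  have h8 : r * Iv + r * Cst
      = ∫ φ in (α - π)..(α + π), (r * v φ + r * |dv φ|) := by
    rw [intervalIntegral.integral_add (f := fun φ => r * v φ) (g := fun φ => r * |dv φ|)
      ((continuous_const.mul cv).intervalIntegrable _ _)
      ((continuous_const.mul cdv.abs).intervalIntegrable _ _),
      intervalIntegral.integral_const_mul, intervalIntegral.integral_const_mul]
  -- continuity of the inner radial integral as a function of φ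
  have hQc : Continuous fun φ : ℝ => ∫ s in (0:ℝ)..M, 4 * (s * W s φ) := by
    have hcu : Continuous (Function.uncurry fun (φ : ℝ) (s : ℝ) => 4 * (s * W s φ)) := by
      apply continuous_const.mul
      exact continuous_snd.mul hWc
    exact intervalIntegral.continuous_parametric_intervalIntegral_of_continuous' hcu 0 M
  have h9 : ∀ φ ∈ Icc (α - π) (α + π), r * v φ + r * |dv φ|
      ≤ ∫ s in (0:ℝ)..M, 4 * (s * W s φ) := by
    intro φ _
    have habs2 : |dv φ| ≤ (f (r * cos φ) (r * sin φ)) ^ 2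
        + (Om2 f (r * cos φ) (r * sin φ)) ^ 2 := by
      simp only [hdv, pow_one]
      rw [abs_le]
      constructor
      · nlinarith [sq_nonneg (f (r * cos φ) (r * sin φ) + Om2 f (r * cos φ) (r * sin φ))]
      · nlinarith [sq_nonneg (f (r * cos φ) (r * sin φ) - Om2 f (r * cos φ) (r * sin φ))]
    have hpt : r * v φ + r * |dv φ| ≤ r * (2 * (f (r * cos φ) (r * sin φ)) ^ 2
        + (Om2 f (r * cos φ) (r * sin φ)) ^ 2) := by
      simp only [hv]
      have e := mul_le_mul_of_nonneg_left habs2 hr.le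
      have e2 : r * (2 * (f (r * cos φ) (r * sin φ)) ^ 2 + (Om2 f (r * cos φ) (r * sin φ)) ^ 2)
          = r * (f (r * cos φ) (r * sin φ)) ^ 2
            + r * ((f (r * cos φ) (r * sin φ)) ^ 2 + (Om2 f (r * cos φ) (r * sin φ)) ^ 2) := by
        ring
      linarith [e, e2]
    exact hpt.trans (keyB φ)
  have h10 : r * v α ≤ ∫ φ in (α - π)..(α + π), (∫ s in (0:ℝ)..M, 4 * (s * W s φ)) := by
    calc r * v α ≤ r * Iv + r * Cst := h7
      _ = ∫ φ in (α - π)..(α + π), (r * v φ + r * |dv φ|) := h8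
      _ ≤ ∫ φ in (α - π)..(α + π), (∫ s in (0:ℝ)..M, 4 * (s * W s φ)) :=
        intervalIntegral.integral_mono_on hIle
          (((continuous_const.mul cv).add (continuous_const.mul cdv.abs)).intervalIntegrable _ _)
          (hQc.intervalIntegrable _ _) h9
  -- split the weight into six pieces
  set G1 : ℝ → ℝ := fun φ => ∫ s in (0:ℝ)..M, s * (f (s * cos φ) (s * sin φ)) ^ 2 with hG1
  set G2 : ℝ → ℝ := fun φ => ∫ s in (0:ℝ)..M, s * (Om2 f (s * cos φ) (s * sin φ)) ^ 2 with hG2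
  set G3 : ℝ → ℝ := fun φ => ∫ s in (0:ℝ)..M, s * (D1 f (s * cos φ) (s * sin φ)) ^ 2 with hG3
  set G4 : ℝ → ℝ := fun φ => ∫ s in (0:ℝ)..M, s * (D2 f (s * cos φ) (s * sin φ)) ^ 2 with hG4
  set G5 : ℝ → ℝ := fun φ => ∫ s in (0:ℝ)..M, s * (D1 (Om2 f) (s * cos φ) (s * sin φ)) ^ 2 with hG5
  set G6 : ℝ → ℝ := fun φ => ∫ s in (0:ℝ)..M, s * (D2 (Om2 f) (s * cos φ) (s * sin φ)) ^ 2 with hG6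
  have hsplit : ∀ φ : ℝ, (∫ s in (0:ℝ)..M, 4 * (s * W s φ))
      = 4 * (G1 φ + (G2 φ + (G3 φ + (G4 φ + (G5 φ + G6 φ))))) := by
    intro φ
    have i1 : IntervalIntegrable (fun s : ℝ => s * (f (s * cos φ) (s * sin φ)) ^ 2)
        volume 0 M := (continuous_id.mul ((cont_polar_s cf φ).pow 2)).intervalIntegrable _ _
    have i2 : IntervalIntegrable (fun s : ℝ => s * (Om2 f (s * cos φ) (s * sin φ)) ^ 2)
        volume 0 M := (continuous_id.mul ((cont_polar_s cO φ).pow 2)).intervalIntegrable _ _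
    have i3 : IntervalIntegrable (fun s : ℝ => s * (D1 f (s * cos φ) (s * sin φ)) ^ 2)
        volume 0 M := (continuous_id.mul ((cont_polar_s cA1 φ).pow 2)).intervalIntegrable _ _
    have i4 : IntervalIntegrable (fun s : ℝ => s * (D2 f (s * cos φ) (s * sin φ)) ^ 2)
        volume 0 M := (continuous_id.mul ((cont_polar_s cA2 φ).pow 2)).intervalIntegrable _ _
    have i5 : IntervalIntegrable (fun s : ℝ => s * (D1 (Om2 f) (s * cos φ) (s * sin φ)) ^ 2)
        volume 0 M := (continuous_id.mul ((cont_polar_s cB1 φ).pow 2)).intervalIntegrable _ _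
    have i6 : IntervalIntegrable (fun s : ℝ => s * (D2 (Om2 f) (s * cos φ) (s * sin φ)) ^ 2)
        volume 0 M := (continuous_id.mul ((cont_polar_s cB2 φ).pow 2)).intervalIntegrable _ _
    have e : (fun s : ℝ => 4 * (s * W s φ)) = fun s : ℝ =>
        4 * ((s * (f (s * cos φ) (s * sin φ)) ^ 2) + ((s * (Om2 f (s * cos φ) (s * sin φ)) ^ 2)
          + ((s * (D1 f (s * cos φ) (s * sin φ)) ^ 2) + ((s * (D2 f (s * cos φ) (s * sin φ)) ^ 2)
          + ((s * (D1 (Om2 f) (s * cos φ) (s * sin φ)) ^ 2)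
            + (s * (D2 (Om2 f) (s * cos φ) (s * sin φ)) ^ 2)))))) := by
      funext s; simp only [hWdef]; ring
    rw [e, intervalIntegral.integral_const_mul,
      intervalIntegral.integral_add i1 (i2.add (i3.add (i4.add (i5.add i6)))),
      intervalIntegral.integral_add i2 (i3.add (i4.add (i5.add i6))),
      intervalIntegral.integral_add i3 (i4.add (i5.add i6)),
      intervalIntegral.integral_add i4 (i5.add i6),
      intervalIntegral.integral_add i5 i6]
  have cG1 : Continuous G1 :=
    intervalIntegral.continuous_parametric_intervalIntegral_of_continuous'
      (f := fun φ s => s * (f (s * cos φ) (s * sin φ)) ^ 2)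
      (by exact continuous_snd.mul ((cont_polar2 cf).pow 2)) 0 M
  have cG2 : Continuous G2 :=
    intervalIntegral.continuous_parametric_intervalIntegral_of_continuous'
      (f := fun φ s => s * (Om2 f (s * cos φ) (s * sin φ)) ^ 2)
      (by exact continuous_snd.mul ((cont_polar2 cO).pow 2)) 0 M
  have cG3 : Continuous G3 :=
    intervalIntegral.continuous_parametric_intervalIntegral_of_continuous'
      (f := fun φ s => s * (D1 f (s * cos φ) (s * sin φ)) ^ 2)
      (by exact continuous_snd.mul ((cont_polar2 cA1).pow 2)) 0 M
  have cG4 : Continuous G4 :=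
    intervalIntegral.continuous_parametric_intervalIntegral_of_continuous'
      (f := fun φ s => s * (D2 f (s * cos φ) (s * sin φ)) ^ 2)
      (by exact continuous_snd.mul ((cont_polar2 cA2).pow 2)) 0 M
  have cG5 : Continuous G5 :=
    intervalIntegral.continuous_parametric_intervalIntegral_of_continuous'
      (f := fun φ s => s * (D1 (Om2 f) (s * cos φ) (s * sin φ)) ^ 2)
      (by exact continuous_snd.mul ((cont_polar2 cB1).pow 2)) 0 M
  have cG6 : Continuous G6 :=
    intervalIntegral.continuous_parametric_intervalIntegral_of_continuous'
      (f := fun φ s => s * (D2 (Om2 f) (s * cos φ) (s * sin φ)) ^ 2)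
      (by exact continuous_snd.mul ((cont_polar2 cB2).pow 2)) 0 M
  have houter : (∫ φ in (α - π)..(α + π), (∫ s in (0:ℝ)..M, 4 * (s * W s φ)))
      = 4 * ((∫ φ in (α - π)..(α + π), G1 φ) + ((∫ φ in (α - π)..(α + π), G2 φ)
        + ((∫ φ in (α - π)..(α + π), G3 φ) + ((∫ φ in (α - π)..(α + π), G4 φ)
        + ((∫ φ in (α - π)..(α + π), G5 φ) + (∫ φ in (α - π)..(α + π), G6 φ)))))) := by
    rw [intervalIntegral.integral_congr (g := fun φ =>
      4 * (G1 φ + (G2 φ + (G3 φ + (G4 φ + (G5 φ + G6 φ)))))) (fun φ _ => hsplit φ)]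
    rw [intervalIntegral.integral_const_mul,
      intervalIntegral.integral_add (g := fun φ => G2 φ + (G3 φ + (G4 φ + (G5 φ + G6 φ))))
        (cG1.intervalIntegrable _ _)
        (((cG2.add (cG3.add (cG4.add (cG5.add cG6))))).intervalIntegrable _ _),
      intervalIntegral.integral_add (g := fun φ => G3 φ + (G4 φ + (G5 φ + G6 φ)))
        (cG2.intervalIntegrable _ _)
        (((cG3.add (cG4.add (cG5.add cG6)))).intervalIntegrable _ _),
      intervalIntegral.integral_add (g := fun φ => G4 φ + (G5 φ + G6 φ))
        (cG3.intervalIntegrable _ _)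
        (((cG4.add (cG5.add cG6))).intervalIntegrable _ _),
      intervalIntegral.integral_add (g := fun φ => G5 φ + G6 φ)
        (cG4.intervalIntegrable _ _)
        (((cG5.add cG6)).intervalIntegrable _ _),
      intervalIntegral.integral_add (cG5.intervalIntegrable _ _)
        (cG6.intervalIntegrable _ _)]
  have hPR1 : (∫ φ in (α - π)..(α + π), G1 φ) ≤ L2n f ^ 2 := polar_rect_bound cf hM vf α
  have hPR2 : (∫ φ in (α - π)..(α + π), G2 φ) ≤ L2n (Om2 f) ^ 2 := polar_rect_bound cO hM vO α
  have hPR3 : (∫ φ in (α - π)..(α + π), G3 φ) ≤ L2n (D1 f) ^ 2 := polar_rect_bound cA1 hM vA1 α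
  have hPR4 : (∫ φ in (α - π)..(α + π), G4 φ) ≤ L2n (D2 f) ^ 2 := polar_rect_bound cA2 hM vA2 α
  have hPR5 : (∫ φ in (α - π)..(α + π), G5 φ) ≤ L2n (D1 (Om2 f)) ^ 2 :=
    polar_rect_bound cB1 hM vB1 α
  have hPR6 : (∫ φ in (α - π)..(α + π), G6 φ) ≤ L2n (D2 (Om2 f)) ^ 2 :=
    polar_rect_bound cB2 hM vB2 α
  have hL1 : (0:ℝ) ≤ L2n f := Real.sqrt_nonneg _
  have hL2 : (0:ℝ) ≤ L2n (Om2 f) := Real.sqrt_nonneg _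
  have hL3 : (0:ℝ) ≤ L2n (D1 f) := Real.sqrt_nonneg _
  have hL4 : (0:ℝ) ≤ L2n (D2 f) := Real.sqrt_nonneg _
  have hL5 : (0:ℝ) ≤ L2n (D1 (Om2 f)) := Real.sqrt_nonneg _
  have hL6 : (0:ℝ) ≤ L2n (D2 (Om2 f)) := Real.sqrt_nonneg _
  have hSnn : 0 ≤ S := by simp only [hSdef]; linarith
  have hsumsq : L2n f ^ 2 + (L2n (Om2 f) ^ 2 + (L2n (D1 f) ^ 2 + (L2n (D2 f) ^ 2
      + (L2n (D1 (Om2 f)) ^ 2 + L2n (D2 (Om2 f)) ^ 2)))) ≤ S ^ 2 := by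
    rw [hSdef]
    exact sum_sq_le hL1 hL2 hL3 hL4 hL5 hL6
  have hvα : v α = (f x y) ^ 2 := by simp only [hv]; rw [hx, hy]
  clear_value S r v dv Cst Iv W G1 G2 G3 G4 G5 G6
  have hfinal : r * (f x y) ^ 2 ≤ 4 * S ^ 2 := by
    rw [← hvα]
    calc r * v α ≤ ∫ φ in (α - π)..(α + π), (∫ s in (0:ℝ)..M, 4 * (s * W s φ)) := h10
      _ = _ := houter
      _ ≤ 4 * (L2n f ^ 2 + (L2n (Om2 f) ^ 2 + (L2n (D1 f) ^ 2 + (L2n (D2 f) ^ 2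
          + (L2n (D1 (Om2 f)) ^ 2 + L2n (D2 (Om2 f)) ^ 2))))) := by
        linarith [hPR1, hPR2, hPR3, hPR4, hPR5, hPR6]
      _ ≤ 4 * S ^ 2 := by linarith [hsumsq]
  have hrs : Real.sqrt r ^ 2 = r := Real.sq_sqrt hr.le
  have hrspos : 0 < Real.sqrt r := Real.sqrt_pos.mpr hr
  have hB : (0:ℝ) ≤ 2 * (Real.sqrt r)⁻¹ * S := by positivity
  have hsq2 : (f x y) ^ 2 ≤ (2 * (Real.sqrt r)⁻¹ * S) ^ 2 := by
    have he : (2 * (Real.sqrt r)⁻¹ * S) ^ 2 = 4 * S ^ 2 / r := by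
      rw [mul_pow, mul_pow, inv_pow, hrs]; ring
    rw [he, le_div_iff₀ hr]
    calc (f x y) ^ 2 * r = r * (f x y) ^ 2 := by ring
      _ ≤ 4 * S ^ 2 := hfinal
  calc |f x y| = Real.sqrt ((f x y) ^ 2) := (Real.sqrt_sq_eq_abs _).symm
    _ ≤ Real.sqrt ((2 * (Real.sqrt r)⁻¹ * S) ^ 2) := Real.sqrt_le_sqrt hsq2
    _ = |2 * (Real.sqrt r)⁻¹ * S| := Real.sqrt_sq_eq_abs _
    _ = 2 * (Real.sqrt r)⁻¹ * S := abs_of_nonneg hB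
end
end
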